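/- arXiv:1706.04923 — 4 statements merged into one kernel-verified Lean document; each statement's English description precedes it below -/
import Mathlib

section
/- Let g ≥ 3, let Ω be the alternating form of the permutation τ^{(g)}, and set v* = e_0 + Σ_{k=0}^{g−2}(−e_{3k+2} + e_{3k+3}) and w* = e_1 + Σ_{k=0}^{g−2}(−e_{3k+2} + e_{3k+3}). Then for every β ∈ A ∖ {0,1} (i.e. β ∈ {2,3,5,6,…,3g−4,3g−3}), both T_{v* + e_β}² and T_{w* + e_β}² belong to the subgroup of GL(ℤ^A) generated by {T_{e_α} : α ∈ A}. -/
open Matrix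

def Aset (g : ℕ) : Finset ℕ :=
  {0, 1} ∪ (Finset.range (g - 1)).biUnion (fun k => {3 * k + 2, 3 * k + 3})

abbrev Idx (g : ℕ) := ↥(Aset g)

def evec (g : ℕ) (m : ℕ) : Idx g → ℤ := fun a => if (a : ℕ) = m then 1 else 0

def pbtau (g : ℕ) (n : ℕ) : ℕ :=
  if n = 0 then 2 * g
  else if n = 1 then 2 * g - 1
  else if n % 3 = 0 then 2 * (n / 3) - 1
  else 2 * ((n - 2) / 3) + 2

def Om (g : ℕ) (pb : ℕ → ℕ) : Matrix (Idx g) (Idx g) ℤ := fun a b =>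
  if (a : ℕ) < (b : ℕ) ∧ pb (b : ℕ) < pb (a : ℕ) then 1
  else if (b : ℕ) < (a : ℕ) ∧ pb (a : ℕ) < pb (b : ℕ) then -1
  else 0

lemma Om_skew (g : ℕ) (pb : ℕ → ℕ) : (Om g pb)ᵀ = -(Om g pb) := by
  ext a b
  simp only [Matrix.transpose_apply, Matrix.neg_apply, Om]
  split_ifs <;> omega

def pairing {g : ℕ} (Ω : Matrix (Idx g) (Idx g) ℤ) (u v : Idx g → ℤ) : ℤ :=
  u ⬝ᵥ Ω.mulVec v

lemma pairing_add {g : ℕ} (Ω : Matrix (Idx g) (Idx g) ℤ) (v u w : Idx g → ℤ) :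
    pairing Ω v (u + w) = pairing Ω v u + pairing Ω v w := by
  unfold pairing; rw [Matrix.mulVec_add, dotProduct_add]

lemma pairing_sub {g : ℕ} (Ω : Matrix (Idx g) (Idx g) ℤ) (v u w : Idx g → ℤ) :
    pairing Ω v (u - w) = pairing Ω v u - pairing Ω v w := by
  unfold pairing; rw [Matrix.mulVec_sub, dotProduct_sub]

lemma pairing_smul {g : ℕ} (Ω : Matrix (Idx g) (Idx g) ℤ) (v : Idx g → ℤ) (c : ℤ)
    (u : Idx g → ℤ) : pairing Ω v (c • u) = c * pairing Ω v u := by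
  unfold pairing; rw [Matrix.mulVec_smul, dotProduct_smul, smul_eq_mul]

lemma pairing_self_zero {g : ℕ} (Ω : Matrix (Idx g) (Idx g) ℤ) (hΩ : Ωᵀ = -Ω)
    (v : Idx g → ℤ) : pairing Ω v v = 0 := by
  have key : pairing Ω v v = -pairing Ω v v := by
    calc pairing Ω v v = ∑ a, ∑ b, v a * (Ω a b * v b) := by
          simp [pairing, dotProduct, Matrix.mulVec, Finset.mul_sum]
    _ = ∑ a, ∑ b, -(v b * (Ω b a * v a)) := by
          refine Finset.sum_congr rfl fun a _ => Finset.sum_congr rfl fun b _ => ?_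
          have h : Ω a b = -Ω b a := by
            have := congrFun (congrFun hΩ.symm a) b
            simp only [Matrix.transpose_apply, Matrix.neg_apply] at this
            omega
          rw [h]; ring
    _ = -∑ b, ∑ a, v b * (Ω b a * v a) := by
          rw [Finset.sum_comm]
          simp
    _ = -pairing Ω v v := by
          simp [pairing, dotProduct, Matrix.mulVec, Finset.mul_sum]
  omega

def transvection {g : ℕ} (Ω : Matrix (Idx g) (Idx g) ℤ) (hΩ : Ωᵀ = -Ω) (v : Idx g → ℤ) :
    (Idx g → ℤ) ≃ₗ[ℤ] (Idx g → ℤ) where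
  toFun u := u + pairing Ω v u • v
  invFun u := u - pairing Ω v u • v
  map_add' u w := by
    show (u + w) + pairing Ω v (u + w) • v = (u + pairing Ω v u • v) + (w + pairing Ω v w • v)
    rw [pairing_add, add_smul]; abel
  map_smul' c u := by
    show c • u + pairing Ω v (c • u) • v = c • (u + pairing Ω v u • v)
    rw [pairing_smul, mul_smul, smul_add]
  left_inv u := by
    show (u + pairing Ω v u • v) - pairing Ω v (u + pairing Ω v u • v) • v = u
    rw [pairing_add, pairing_smul, pairing_self_zero Ω hΩ, mul_zero, add_zero,
      add_sub_cancel_right]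
  right_inv u := by
    show (u - pairing Ω v u • v) + pairing Ω v (u - pairing Ω v u • v) • v = u
    rw [pairing_sub, pairing_smul, pairing_self_zero Ω hΩ, mul_zero, sub_zero,
      sub_add_cancel]

inductive OmegaClosure {M : Type*} [AddCommGroup M] (pair : M → M → ℤ) (V : Set M) : M → Prop
  | base {v : M} : v ∈ V → OmegaClosure pair V v
  | neg {v : M} : OmegaClosure pair V v → OmegaClosure pair V (-v)
  | add {v w : M} : OmegaClosure pair V v → OmegaClosure pair V w → pair v w = 1 →
      OmegaClosure pair V (v + w)
  | sub {v w : M} : OmegaClosure pair V v → OmegaClosure pair V w → pair v w = 1 →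
      OmegaClosure pair V (v - w)

/-- The alternating form of Zorich's permutation `τ^{(g)}`
(top row `0 1 2 3 5 6 … 3g-4 3g-3`, bottom row `3 2 6 5 9 8 … 3g-3 3g-4 1 0`). -/
def OmTau (g : ℕ) : Matrix (Idx g) (Idx g) ℤ := Om g (pbtau g)

lemma OmTau_skew (g : ℕ) : (OmTau g)ᵀ = -(OmTau g) := Om_skew g (pbtau g)

/-- `v* = e_0 + Σ_{k=0}^{g-2} (-e_{3k+2} + e_{3k+3})`. -/
def vstar (g : ℕ) : Idx g → ℤ :=
  evec g 0 + ∑ k ∈ Finset.range (g - 1), (-evec g (3 * k + 2) + evec g (3 * k + 3))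

/-- `w* = e_1 + Σ_{k=0}^{g-2} (-e_{3k+2} + e_{3k+3})`. -/
def wstar (g : ℕ) : Idx g → ℤ :=
  evec g 1 + ∑ k ∈ Finset.range (g - 1), (-evec g (3 * k + 2) + evec g (3 * k + 3))

/-- The symplectic transvection along `v` for the form of `τ^{(g)}`. -/
def Ttau (g : ℕ) (v : Idx g → ℤ) : (Idx g → ℤ) ≃ₗ[ℤ] (Idx g → ℤ) :=
  transvection (OmTau g) (OmTau_skew g) v

-- left linearity of pairing
lemma pairing_add_left {g : ℕ} (Ω : Matrix (Idx g) (Idx g) ℤ) (u v w : Idx g → ℤ) :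
    pairing Ω (u + v) w = pairing Ω u w + pairing Ω v w := by
  unfold pairing; rw [add_dotProduct]

lemma pairing_sub_left {g : ℕ} (Ω : Matrix (Idx g) (Idx g) ℤ) (u v w : Idx g → ℤ) :
    pairing Ω (u - v) w = pairing Ω u w - pairing Ω v w := by
  unfold pairing; rw [sub_dotProduct]

lemma pairing_neg_left {g : ℕ} (Ω : Matrix (Idx g) (Idx g) ℤ) (u w : Idx g → ℤ) :
    pairing Ω (-u) w = -pairing Ω u w := by
  unfold pairing; rw [neg_dotProduct]

lemma pairing_neg {g : ℕ} (Ω : Matrix (Idx g) (Idx g) ℤ) (u w : Idx g → ℤ) :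
    pairing Ω u (-w) = -pairing Ω u w := by
  unfold pairing; rw [Matrix.mulVec_neg, dotProduct_neg]

lemma pairing_smul_left {g : ℕ} (Ω : Matrix (Idx g) (Idx g) ℤ) (c : ℤ) (u w : Idx g → ℤ) :
    pairing Ω (c • u) w = c * pairing Ω u w := by
  unfold pairing; rw [smul_dotProduct, smul_eq_mul]

lemma pairing_sum_left {g : ℕ} (Ω : Matrix (Idx g) (Idx g) ℤ) {ι : Type*} (s : Finset ι)
    (f : ι → Idx g → ℤ) (w : Idx g → ℤ) :
    pairing Ω (∑ i ∈ s, f i) w = ∑ i ∈ s, pairing Ω (f i) w := by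
  classical
  induction s using Finset.induction with
  | empty => simp [pairing]
  | insert _ _ h ih => rw [Finset.sum_insert h, pairing_add_left, ih, Finset.sum_insert h]

lemma pairing_sum {g : ℕ} (Ω : Matrix (Idx g) (Idx g) ℤ) {ι : Type*} (s : Finset ι)
    (w : Idx g → ℤ) (f : ι → Idx g → ℤ) :
    pairing Ω w (∑ i ∈ s, f i) = ∑ i ∈ s, pairing Ω w (f i) := by
  classical
  induction s using Finset.induction with
  | empty => simp [pairing]
  | insert _ _ h ih => rw [Finset.sum_insert h, pairing_add, ih, Finset.sum_insert h]

lemma pairing_skew {g : ℕ} (Ω : Matrix (Idx g) (Idx g) ℤ) (hΩ : Ωᵀ = -Ω) (u v : Idx g → ℤ) :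
    pairing Ω u v = -pairing Ω v u := by
  unfold pairing
  rw [Matrix.dotProduct_mulVec, dotProduct_comm, ← Matrix.mulVec_transpose, hΩ,
    Matrix.neg_mulVec, dotProduct_neg]

-- transvection application lemmas
lemma Ttau_apply {g : ℕ} (v u : Idx g → ℤ) :
    Ttau g v u = u + pairing (OmTau g) v u • v := rfl

lemma Ttau_inv_apply {g : ℕ} (v u : Idx g → ℤ) :
    (Ttau g v)⁻¹ u = u - pairing (OmTau g) v u • v := rfl

lemma Ttau_neg {g : ℕ} (v : Idx g → ℤ) : Ttau g (-v) = Ttau g v := by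
  refine LinearEquiv.ext fun u => ?_
  rw [Ttau_apply, Ttau_apply, pairing_neg_left, neg_smul, smul_neg, neg_neg]

lemma Ttau_conj {g : ℕ} (v w : Idx g → ℤ) :
    Ttau g w * Ttau g v * (Ttau g w)⁻¹ = Ttau g (Ttau g w v) := by
  refine LinearEquiv.ext fun u => ?_
  show Ttau g w (Ttau g v ((Ttau g w)⁻¹ u)) = _
  rw [Ttau_inv_apply, Ttau_apply, Ttau_apply, Ttau_apply, Ttau_apply]
  simp only [pairing_add, pairing_sub, pairing_smul, pairing_add_left, pairing_smul_left,
    pairing_self_zero (OmTau g) (OmTau_skew g)]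
  rw [pairing_skew (OmTau g) (OmTau_skew g) w v]
  module

lemma Ttau_sq {g : ℕ} (v w : Idx g → ℤ) (h : pairing (OmTau g) v w = 2) :
    (Ttau g (v + w)) ^ 2 =
      (Ttau g w)⁻¹ * (Ttau g v)⁻¹ * ((Ttau g w)⁻¹ * (Ttau g v)⁻¹) := by
  have hwv : pairing (OmTau g) w v = -2 := by
    rw [pairing_skew (OmTau g) (OmTau_skew g) w v, h]
  refine LinearEquiv.ext fun u => ?_
  rw [pow_two]
  show Ttau g (v+w) (Ttau g (v+w) u) =
    (Ttau g w)⁻¹ ((Ttau g v)⁻¹ ((Ttau g w)⁻¹ ((Ttau g v)⁻¹ u)))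
  rw [Ttau_apply, Ttau_apply, Ttau_inv_apply, Ttau_inv_apply, Ttau_inv_apply, Ttau_inv_apply]
  simp only [pairing_add, pairing_sub, pairing_smul, pairing_add_left,
    pairing_self_zero (OmTau g) (OmTau_skew g), h, hwv]
  module

-- the subgroup and the bridge
def Gam (g : ℕ) : Subgroup ((Idx g → ℤ) ≃ₗ[ℤ] (Idx g → ℤ)) :=
  Subgroup.closure (Set.range fun c : Idx g => Ttau g (evec g (c : ℕ)))

def Vset (g : ℕ) : Set (Idx g → ℤ) := Set.range fun c : Idx g => evec g (c : ℕ)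

abbrev CL (g : ℕ) : (Idx g → ℤ) → Prop := OmegaClosure (pairing (OmTau g)) (Vset g)

lemma Ttau_mem_of_CL {g : ℕ} {v : Idx g → ℤ} (h : CL g v) : Ttau g v ∈ Gam g := by
  induction h with
  | base hv =>
      obtain ⟨c, rfl⟩ := hv
      exact Subgroup.subset_closure ⟨c, rfl⟩
  | neg _ ih => rwa [Ttau_neg]
  | @add v w _ _ hp ihv ihw =>
      have key : Ttau g (v + w) = Ttau g v * Ttau g w * (Ttau g v)⁻¹ := by
        rw [Ttau_conj]
        congr 1
        rw [Ttau_apply, hp, one_smul, add_comm]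
      rw [key]
      exact mul_mem (mul_mem ihv ihw) (inv_mem ihv)
  | @sub v w _ _ hp ihv ihw =>
      have hwv : pairing (OmTau g) w v = -1 := by
        rw [pairing_skew (OmTau g) (OmTau_skew g) w v, hp]
      have key : Ttau g (v - w) = Ttau g w * Ttau g v * (Ttau g w)⁻¹ := by
        rw [Ttau_conj]
        congr 1
        rw [Ttau_apply, hwv, neg_smul, one_smul, ← sub_eq_add_neg]
      rw [key]
      exact mul_mem (mul_mem ihw ihv) (inv_mem ihw)

lemma Ttau_sq_mem {g : ℕ} {v w : Idx g → ℤ} (hv : CL g v) (hw : CL g w)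
    (h : pairing (OmTau g) v w = 2) : (Ttau g (v + w)) ^ 2 ∈ Gam g := by
  rw [Ttau_sq v w h]
  have hv' := Ttau_mem_of_CL hv
  have hw' := Ttau_mem_of_CL hw
  exact mul_mem (mul_mem (inv_mem hw') (inv_mem hv')) (mul_mem (inv_mem hw') (inv_mem hv'))

-- closure helpers
lemma CL.addR {g : ℕ} {v w : Idx g → ℤ} (hv : CL g v) (hw : CL g w)
    (h : pairing (OmTau g) w v = 1) : CL g (v + w) := by
  rw [add_comm]; exact OmegaClosure.add hw hv h

lemma CL.subR {g : ℕ} {v w : Idx g → ℤ} (hv : CL g v) (hw : CL g w)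
    (h : pairing (OmTau g) w v = 1) : CL g (v - w) := by
  rw [← neg_sub]; exact OmegaClosure.neg (OmegaClosure.sub hw hv h)

-- membership in Aset
lemma mem0 {g : ℕ} : 0 ∈ Aset g := by simp [Aset]
lemma mem1 {g : ℕ} : 1 ∈ Aset g := by simp [Aset]
lemma mem2 {g : ℕ} {k : ℕ} (hk : k < g - 1) : 3 * k + 2 ∈ Aset g := by
  simp only [Aset, Finset.mem_union, Finset.mem_biUnion, Finset.mem_range]
  exact Or.inr ⟨k, hk, by simp⟩
lemma mem3 {g : ℕ} {k : ℕ} (hk : k < g - 1) : 3 * k + 3 ∈ Aset g := by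
  simp only [Aset, Finset.mem_union, Finset.mem_biUnion, Finset.mem_range]
  exact Or.inr ⟨k, hk, by simp⟩

lemma CL_evec {g : ℕ} {m : ℕ} (hm : m ∈ Aset g) : CL g (evec g m) :=
  OmegaClosure.base ⟨⟨m, hm⟩, rfl⟩

-- pbtau values
lemma pbtau0 (g : ℕ) : pbtau g 0 = 2 * g := by simp [pbtau]
lemma pbtau1 (g : ℕ) : pbtau g 1 = 2 * g - 1 := by simp [pbtau]
lemma pbtau2 (g k : ℕ) : pbtau g (3 * k + 2) = 2 * k + 2 := by
  have h3 : (3 * k + 2) % 3 = 2 := by omega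
  have : (3 * k + 2 - 2) / 3 = k := by omega
  simp [pbtau, h3, this]
lemma pbtau3 (g k : ℕ) : pbtau g (3 * k + 3) = 2 * k + 1 := by
  have h3 : (3 * k + 3) % 3 = 0 := by omega
  have : (3 * k + 3) / 3 = k + 1 := by omega
  simp [pbtau, h3, this]
  omega

-- master basis pairing lemma
lemma pairing_evec {g : ℕ} {m n : ℕ} (hm : m ∈ Aset g) (hn : n ∈ Aset g) :
    pairing (OmTau g) (evec g m) (evec g n) =
      if m < n ∧ pbtau g n < pbtau g m then 1
      else if n < m ∧ pbtau g m < pbtau g n then -1 else 0 := by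
  classical
  have h1 : (OmTau g).mulVec (evec g n) = fun a => OmTau g a ⟨n, hn⟩ := by
    funext a
    simp only [Matrix.mulVec, dotProduct, evec, mul_ite, mul_one, mul_zero]
    rw [Finset.sum_eq_single (⟨n, hn⟩ : Idx g)]
    · simp
    · intro b _ hb
      have : (b : ℕ) ≠ n := fun h => hb (Subtype.ext h)
      simp [this]
    · simp
  unfold pairing
  rw [h1]
  simp only [dotProduct, evec, ite_mul, one_mul, zero_mul]
  rw [Finset.sum_eq_single (⟨m, hm⟩ : Idx g)]
  · simp [OmTau, Om]
  · intro b _ hb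
    have : (b : ℕ) ≠ m := fun h => hb (Subtype.ext h)
    simp [this]
  · simp

section values
variable {g : ℕ}

lemma pair01 (hg : 1 ≤ g) : pairing (OmTau g) (evec g 0) (evec g 1) = 1 := by
  rw [pairing_evec mem0 mem1, pbtau0, pbtau1]
  split_ifs <;> omega

lemma pair02 {k : ℕ} (hk : k < g - 1) :
    pairing (OmTau g) (evec g 0) (evec g (3 * k + 2)) = 1 := by
  rw [pairing_evec mem0 (mem2 hk), pbtau0, pbtau2]
  split_ifs <;> omega

lemma pair03 {k : ℕ} (hk : k < g - 1) :
    pairing (OmTau g) (evec g 0) (evec g (3 * k + 3)) = 1 := by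
  rw [pairing_evec mem0 (mem3 hk), pbtau0, pbtau3]
  split_ifs <;> omega

lemma pair12 {k : ℕ} (hk : k < g - 1) :
    pairing (OmTau g) (evec g 1) (evec g (3 * k + 2)) = 1 := by
  rw [pairing_evec mem1 (mem2 hk), pbtau1, pbtau2]
  split_ifs <;> omega

lemma pair13 {k : ℕ} (hk : k < g - 1) :
    pairing (OmTau g) (evec g 1) (evec g (3 * k + 3)) = 1 := by
  rw [pairing_evec mem1 (mem3 hk), pbtau1, pbtau3]
  split_ifs <;> omega

lemma pair23 {k : ℕ} (hk : k < g - 1) :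
    pairing (OmTau g) (evec g (3 * k + 2)) (evec g (3 * k + 3)) = 1 := by
  rw [pairing_evec (mem2 hk) (mem3 hk), pbtau2, pbtau3]
  split_ifs <;> omega

lemma pair22' {k l : ℕ} (hk : k < g - 1) (hl : l < g - 1) (h : k ≠ l) :
    pairing (OmTau g) (evec g (3 * k + 2)) (evec g (3 * l + 2)) = 0 := by
  rw [pairing_evec (mem2 hk) (mem2 hl), pbtau2, pbtau2]
  split_ifs <;> omega

lemma pair23' {k l : ℕ} (hk : k < g - 1) (hl : l < g - 1) (h : k ≠ l) :
    pairing (OmTau g) (evec g (3 * k + 2)) (evec g (3 * l + 3)) = 0 := by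
  rw [pairing_evec (mem2 hk) (mem3 hl), pbtau2, pbtau3]
  split_ifs <;> omega

lemma pair32' {k l : ℕ} (hk : k < g - 1) (hl : l < g - 1) (h : k ≠ l) :
    pairing (OmTau g) (evec g (3 * k + 3)) (evec g (3 * l + 2)) = 0 := by
  rw [pairing_evec (mem3 hk) (mem2 hl), pbtau3, pbtau2]
  split_ifs <;> omega

lemma pair33' {k l : ℕ} (hk : k < g - 1) (hl : l < g - 1) (h : k ≠ l) :
    pairing (OmTau g) (evec g (3 * k + 3)) (evec g (3 * l + 3)) = 0 := by
  rw [pairing_evec (mem3 hk) (mem3 hl), pbtau3, pbtau3]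
  split_ifs <;> omega

-- reversed versions via skew
lemma skw (u v : Idx g → ℤ) :
    pairing (OmTau g) u v = -pairing (OmTau g) v u :=
  pairing_skew (OmTau g) (OmTau_skew g) u v

lemma pair10 (hg : 1 ≤ g) : pairing (OmTau g) (evec g 1) (evec g 0) = -1 := by
  rw [skw, pair01 hg]

lemma pair20 {k : ℕ} (hk : k < g - 1) :
    pairing (OmTau g) (evec g (3 * k + 2)) (evec g 0) = -1 := by
  rw [skw, pair02 hk]

lemma pair30 {k : ℕ} (hk : k < g - 1) :
    pairing (OmTau g) (evec g (3 * k + 3)) (evec g 0) = -1 := by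
  rw [skw, pair03 hk]

lemma pair21 {k : ℕ} (hk : k < g - 1) :
    pairing (OmTau g) (evec g (3 * k + 2)) (evec g 1) = -1 := by
  rw [skw, pair12 hk]

lemma pair31 {k : ℕ} (hk : k < g - 1) :
    pairing (OmTau g) (evec g (3 * k + 3)) (evec g 1) = -1 := by
  rw [skw, pair13 hk]

lemma pair32 {k : ℕ} (hk : k < g - 1) :
    pairing (OmTau g) (evec g (3 * k + 3)) (evec g (3 * k + 2)) = -1 := by
  rw [skw, pair23 hk]

lemma pair_self (v : Idx g → ℤ) : pairing (OmTau g) v v = 0 :=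
  pairing_self_zero (OmTau g) (OmTau_skew g) v

end values

section svec
variable {g : ℕ}

def dk (g k : ℕ) : Idx g → ℤ := evec g (3 * k + 3) - evec g (3 * k + 2)

lemma CL_dk {k : ℕ} (hk : k < g - 1) : CL g (dk g k) :=
  CL.subR (CL_evec (mem3 hk)) (CL_evec (mem2 hk)) (pair23 hk)

def Svec (g j : ℕ) (D : Finset ℕ) : Idx g → ℤ :=
  evec g 0 + evec g (3 * j + 3) + ∑ k ∈ D, dk g k

-- pairing of dk with basis vectors, cross-block
lemma pair_dk_e0 {k : ℕ} (hk : k < g - 1) :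
    pairing (OmTau g) (dk g k) (evec g 0) = 0 := by
  unfold dk; rw [pairing_sub_left, pair30 hk, pair20 hk]; ring

lemma pair_dk_e1 {k : ℕ} (hk : k < g - 1) :
    pairing (OmTau g) (dk g k) (evec g 1) = 0 := by
  unfold dk; rw [pairing_sub_left, pair31 hk, pair21 hk]; ring

lemma pair_dk_e2' {k l : ℕ} (hk : k < g - 1) (hl : l < g - 1) (h : k ≠ l) :
    pairing (OmTau g) (dk g k) (evec g (3 * l + 2)) = 0 := by
  unfold dk; rw [pairing_sub_left, pair32' hk hl h, pair22' hk hl h]; ring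

lemma pair_dk_e3' {k l : ℕ} (hk : k < g - 1) (hl : l < g - 1) (h : k ≠ l) :
    pairing (OmTau g) (dk g k) (evec g (3 * l + 3)) = 0 := by
  unfold dk; rw [pairing_sub_left, pair33' hk hl h, pair23' hk hl h]; ring

lemma pair_e0_dk {k : ℕ} (hk : k < g - 1) :
    pairing (OmTau g) (evec g 0) (dk g k) = 0 := by
  unfold dk; rw [pairing_sub, pair03 hk, pair02 hk]; ring

lemma pair_e1_dk {k : ℕ} (hk : k < g - 1) :
    pairing (OmTau g) (evec g 1) (dk g k) = 0 := by
  unfold dk; rw [pairing_sub, pair13 hk, pair12 hk]; ring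

variable {j : ℕ} {D : Finset ℕ}

lemma sum_dk_zero (hD : D ⊆ Finset.range (g - 1)) {n : ℕ}
    (h : ∀ m, m < g - 1 → m ∈ D → pairing (OmTau g) (dk g m) (evec g n) = 0) :
    pairing (OmTau g) (∑ m ∈ D, dk g m) (evec g n) = 0 := by
  rw [pairing_sum_left]
  exact Finset.sum_eq_zero fun m hm => h m (Finset.mem_range.mp (hD hm)) hm

lemma pairing_Svec_e0 (hj : j < g - 1) (hD : D ⊆ Finset.range (g - 1)) :
    pairing (OmTau g) (Svec g j D) (evec g 0) = -1 := by
  unfold Svec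
  rw [pairing_add_left, pairing_add_left, pair_self,
    pair30 hj, sum_dk_zero hD (fun m hm _ => pair_dk_e0 hm)]
  ring

lemma pairing_Svec_e1 (hg : 1 ≤ g) (hj : j < g - 1) (hD : D ⊆ Finset.range (g - 1)) :
    pairing (OmTau g) (Svec g j D) (evec g 1) = 0 := by
  unfold Svec
  rw [pairing_add_left, pairing_add_left, pair01 hg,
    pair31 hj, sum_dk_zero hD (fun m hm _ => pair_dk_e1 hm)]
  ring

lemma pairing_Svec_e2 (hj : j < g - 1) (hD : D ⊆ Finset.range (g - 1)) {k : ℕ}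
    (hk : k < g - 1) (hkj : k ≠ j) (hkD : k ∉ D) :
    pairing (OmTau g) (Svec g j D) (evec g (3 * k + 2)) = 1 := by
  unfold Svec
  rw [pairing_add_left, pairing_add_left, pair02 hk,
    pair32' hj hk (fun h => hkj h.symm),
    sum_dk_zero hD (fun m hm hmD => pair_dk_e2' hm hk (fun h => hkD (h ▸ hmD)))]
  ring

lemma pairing_Svec_e3 (hj : j < g - 1) (hD : D ⊆ Finset.range (g - 1)) {k : ℕ}
    (hk : k < g - 1) (hkj : k ≠ j) (hkD : k ∉ D) :
    pairing (OmTau g) (Svec g j D) (evec g (3 * k + 3)) = 1 := by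
  unfold Svec
  rw [pairing_add_left, pairing_add_left, pair03 hk,
    pair33' hj hk (fun h => hkj h.symm),
    sum_dk_zero hD (fun m hm hmD => pair_dk_e3' hm hk (fun h => hkD (h ▸ hmD)))]
  ring

lemma pairing_Svec_e2j (hj : j < g - 1) (hD : D ⊆ Finset.range (g - 1)) (hjD : j ∉ D) :
    pairing (OmTau g) (Svec g j D) (evec g (3 * j + 2)) = 0 := by
  unfold Svec
  rw [pairing_add_left, pairing_add_left, pair02 hj, pair32 hj,
    sum_dk_zero hD (fun m hm hmD => pair_dk_e2' hm hj (fun h => hjD (h ▸ hmD)))]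
  ring

lemma pairing_Svec_e3j (hj : j < g - 1) (hD : D ⊆ Finset.range (g - 1)) (hjD : j ∉ D) :
    pairing (OmTau g) (Svec g j D) (evec g (3 * j + 3)) = 1 := by
  unfold Svec
  rw [pairing_add_left, pairing_add_left, pair03 hj, pair_self,
    sum_dk_zero hD (fun m hm hmD => pair_dk_e3' hm hj (fun h => hjD (h ▸ hmD)))]
  ring

lemma pairing_e0_Svec (hj : j < g - 1) (hD : D ⊆ Finset.range (g - 1)) :
    pairing (OmTau g) (evec g 0) (Svec g j D) = 1 := by
  unfold Svec
  rw [pairing_add, pairing_add, pair_self, pair03 hj, pairing_sum,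
    Finset.sum_eq_zero (fun m hm => pair_e0_dk (Finset.mem_range.mp (hD hm)))]
  ring

lemma pairing_e1_Svec (hg : 1 ≤ g) (hj : j < g - 1) (hD : D ⊆ Finset.range (g - 1)) :
    pairing (OmTau g) (evec g 1) (Svec g j D) = 0 := by
  unfold Svec
  rw [pairing_add, pairing_add, pair10 hg, pair13 hj, pairing_sum,
    Finset.sum_eq_zero (fun m hm => pair_e1_dk (Finset.mem_range.mp (hD hm)))]
  ring

end svec

section induction'
variable {g : ℕ}

lemma step_lemma {j k l : ℕ} {D : Finset ℕ} (hj : j < g - 1)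
    (hD : D ⊆ Finset.range (g - 1)) (hjD : j ∉ D)
    (hk : k < g - 1) (hl : l < g - 1) (hkj : k ≠ j) (hlj : l ≠ j) (hkl : k ≠ l)
    (hkD : k ∉ D) (hlD : l ∉ D) (hcl : CL g (Svec g j D)) :
    CL g (Svec g j D + dk g k + dk g l) := by
  set x := Svec g j D with hx
  -- x1 = x - e_{3k+2}
  have p1 : pairing (OmTau g) x (evec g (3 * k + 2)) = 1 := pairing_Svec_e2 hj hD hk hkj hkD
  have h1 : CL g (x - evec g (3 * k + 2)) :=
    OmegaClosure.sub hcl (CL_evec (mem2 hk)) p1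
  -- x2 = x1 - e_{3l+2}
  have p2 : pairing (OmTau g) (x - evec g (3 * k + 2)) (evec g (3 * l + 2)) = 1 := by
    rw [pairing_sub_left, pairing_Svec_e2 hj hD hl hlj hlD, pair22' hk hl hkl]; ring
  have h2 : CL g (x - evec g (3 * k + 2) - evec g (3 * l + 2)) :=
    OmegaClosure.sub h1 (CL_evec (mem2 hl)) p2
  -- x3 = x2 + e0
  have p3 : pairing (OmTau g) (x - evec g (3 * k + 2) - evec g (3 * l + 2)) (evec g 0) = 1 := by
    rw [pairing_sub_left, pairing_sub_left, pairing_Svec_e0 hj hD, pair20 hk, pair20 hl]; ring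
  have h3 : CL g (x - evec g (3 * k + 2) - evec g (3 * l + 2) + evec g 0) :=
    OmegaClosure.add h2 (CL_evec mem0) p3
  -- x4 = x3 + e_{3k+3}
  have p4 : pairing (OmTau g) (x - evec g (3 * k + 2) - evec g (3 * l + 2) + evec g 0)
      (evec g (3 * k + 3)) = 1 := by
    rw [pairing_add_left, pairing_sub_left, pairing_sub_left,
      pairing_Svec_e3 hj hD hk hkj hkD, pair23 hk, pair23' hl hk (fun h => hkl h.symm),
      pair03 hk]
    ring
  have h4 : CL g (x - evec g (3 * k + 2) - evec g (3 * l + 2) + evec g 0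
      + evec g (3 * k + 3)) := OmegaClosure.add h3 (CL_evec (mem3 hk)) p4
  -- x5 = x4 + e_{3l+3}
  have p5 : pairing (OmTau g) (x - evec g (3 * k + 2) - evec g (3 * l + 2) + evec g 0
      + evec g (3 * k + 3)) (evec g (3 * l + 3)) = 1 := by
    rw [pairing_add_left, pairing_add_left, pairing_sub_left, pairing_sub_left,
      pairing_Svec_e3 hj hD hl hlj hlD, pair23' hk hl hkl, pair23 hl, pair03 hl,
      pair33' hk hl hkl]
    ring
  have h5 : CL g (x - evec g (3 * k + 2) - evec g (3 * l + 2) + evec g 0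
      + evec g (3 * k + 3) + evec g (3 * l + 3)) :=
    OmegaClosure.add h4 (CL_evec (mem3 hl)) p5
  -- x6 = x5 - e0
  have p6 : pairing (OmTau g) (evec g 0) (x - evec g (3 * k + 2) - evec g (3 * l + 2)
      + evec g 0 + evec g (3 * k + 3) + evec g (3 * l + 3)) = 1 := by
    rw [pairing_add, pairing_add, pairing_add, pairing_sub, pairing_sub,
      pairing_e0_Svec hj hD, pair02 hk, pair02 hl, pair_self, pair03 hk, pair03 hl]
    ring
  have h6 : CL g (x - evec g (3 * k + 2) - evec g (3 * l + 2) + evec g 0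
      + evec g (3 * k + 3) + evec g (3 * l + 3) - evec g 0) :=
    CL.subR h5 (CL_evec mem0) p6
  have : Svec g j D + dk g k + dk g l
      = x - evec g (3 * k + 2) - evec g (3 * l + 2) + evec g 0
      + evec g (3 * k + 3) + evec g (3 * l + 3) - evec g 0 := by
    rw [← hx]; unfold dk; abel
  rw [this]
  exact h6

lemma Svec_mem {j : ℕ} (hj : j < g - 1) :
    ∀ n (D : Finset ℕ), D ⊆ (Finset.range (g - 1)).erase j → D.card = n → Even n →
      CL g (Svec g j D) := by
  intro n
  induction n using Nat.strong_induction_on with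
  | _ n ih =>
    intro D hD hcard heven
    rcases Nat.eq_zero_or_pos n with h0 | hpos
    · have : D = ∅ := Finset.card_eq_zero.mp (by omega)
      subst this
      have : Svec g j ∅ = evec g 0 + evec g (3 * j + 3) := by
        unfold Svec; simp
      rw [this]
      exact OmegaClosure.add (CL_evec mem0) (CL_evec (mem3 hj)) (pair03 hj)
    · have hn2 : 2 ≤ n := by
        rcases heven with ⟨m, hm⟩; omega
      obtain ⟨k, hkD⟩ := Finset.card_pos.mp (by omega : 0 < D.card)
      have hcard' : (D.erase k).card = n - 1 := by rw [Finset.card_erase_of_mem hkD]; omega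
      obtain ⟨l, hlD⟩ := Finset.card_pos.mp (by omega : 0 < (D.erase k).card)
      have hlk : l ≠ k := (Finset.mem_erase.mp hlD).1
      have hlD' : l ∈ D := (Finset.mem_erase.mp hlD).2
      set D' := (D.erase k).erase l with hD'
      have hsub : D' ⊆ D := Finset.Subset.trans (Finset.erase_subset _ _) (Finset.erase_subset _ _)
      have hDsub : D' ⊆ (Finset.range (g - 1)).erase j := Finset.Subset.trans hsub hD
      have hcard'' : D'.card = n - 2 := by
        rw [hD', Finset.card_erase_of_mem hlD, hcard']; omega
      have hkrange := Finset.mem_erase.mp (hD hkD)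
      have hlrange := Finset.mem_erase.mp (hD hlD')
      have hk : k < g - 1 := Finset.mem_range.mp hkrange.2
      have hl : l < g - 1 := Finset.mem_range.mp hlrange.2
      have hjD' : j ∉ D' := fun h => (Finset.mem_erase.mp (hDsub h)).1 rfl
      have hkD' : k ∉ D' := fun h => (Finset.mem_erase.mp ((Finset.erase_subset _ _) h)).1 rfl
      have hlD'' : l ∉ D' := fun h => (Finset.mem_erase.mp h).1 rfl
      have hD'range : D' ⊆ Finset.range (g - 1) :=
        Finset.Subset.trans hDsub (Finset.erase_subset _ _)
      have ihcl : CL g (Svec g j D') :=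
        ih (n - 2) (by omega) D' hDsub hcard'' (by rcases heven with ⟨m, hm⟩; exact ⟨m - 1, by omega⟩)
      have hstep := step_lemma hj hD'range hjD' hk hl hkrange.1 hlrange.1
        (fun h => hlk h.symm) hkD' hlD'' ihcl
      have : Svec g j D = Svec g j D' + dk g k + dk g l := by
        unfold Svec
        have e1 : ∑ m ∈ D, dk g m = dk g k + ∑ m ∈ D.erase k, dk g m :=
          (Finset.add_sum_erase _ _ hkD).symm
        have e2 : ∑ m ∈ D.erase k, dk g m = dk g l + ∑ m ∈ D', dk g m :=
          (Finset.add_sum_erase _ _ hlD).symm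
        rw [e1, e2]; abel
      rw [this]
      exact hstep

end induction'

section assembly
variable {g : ℕ}

lemma sum_to_dk :
    ∑ k ∈ Finset.range (g - 1), (-evec g (3 * k + 2) + evec g (3 * k + 3))
      = ∑ k ∈ Finset.range (g - 1), dk g k :=
  Finset.sum_congr rfl (fun k _ => by unfold dk; abel)

lemma main_even (hg : 3 ≤ g) (hgE : Even g) {j : ℕ} (hj : j < g - 1) :
    CL g (vstar g + evec g (3 * j + 2)) ∧ CL g (vstar g + evec g (3 * j + 3)) ∧
    CL g (wstar g + evec g (3 * j + 2)) ∧ CL g (wstar g + evec g (3 * j + 3)) := by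
  have hjr : j ∈ Finset.range (g - 1) := Finset.mem_range.mpr hj
  set D : Finset ℕ := (Finset.range (g - 1)).erase j with hDdef
  have hDsub : D ⊆ (Finset.range (g - 1)).erase j := Finset.Subset.refl _
  have hDrange : D ⊆ Finset.range (g - 1) := Finset.erase_subset _ _
  have hjD : j ∉ D := Finset.notMem_erase _ _
  have hcard : D.card = g - 2 := by
    rw [hDdef, Finset.card_erase_of_mem hjr, Finset.card_range]
    omega
  have heven : Even (g - 2) := by
    obtain ⟨m, hm⟩ := hgE; exact ⟨m - 1, by omega⟩
  have hS : CL g (Svec g j D) := Svec_mem hj (g - 2) D hDsub hcard heven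
  have hg1 : 1 ≤ g := by omega
  have hsplit : ∑ k ∈ Finset.range (g - 1), (-evec g (3 * k + 2) + evec g (3 * k + 3))
      = dk g j + ∑ k ∈ D, dk g k := by
    rw [sum_to_dk, ← Finset.add_sum_erase _ (dk g) hjr]
  -- X2 : vstar + e_{3j+2} = Svec
  have idX2 : vstar g + evec g (3 * j + 2) = Svec g j D := by
    unfold vstar Svec; rw [hsplit]; unfold dk; abel
  have hX2 : CL g (vstar g + evec g (3 * j + 2)) := by rw [idX2]; exact hS
  -- X3 = Svec + dk j
  have pX3 : pairing (OmTau g) (Svec g j D) (dk g j) = 1 := by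
    unfold dk
    rw [pairing_sub, pairing_Svec_e3j hj hDrange hjD, pairing_Svec_e2j hj hDrange hjD]
    ring
  have idX3 : vstar g + evec g (3 * j + 3) = Svec g j D + dk g j := by
    unfold vstar Svec; rw [hsplit]; unfold dk; abel
  have hX3 : CL g (vstar g + evec g (3 * j + 3)) := by
    rw [idX3]; exact OmegaClosure.add hS (CL_dk hj) pX3
  -- Y2 = Svec - e0 + e1
  have hA : CL g (Svec g j D - evec g 0) :=
    CL.subR hS (CL_evec mem0) (pairing_e0_Svec hj hDrange)
  have pB : pairing (OmTau g) (evec g 1) (Svec g j D - evec g 0) = 1 := by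
    rw [pairing_sub, pairing_e1_Svec hg1 hj hDrange, pair10 hg1]; ring
  have hB : CL g (Svec g j D - evec g 0 + evec g 1) :=
    CL.addR hA (CL_evec mem1) pB
  have idY2 : wstar g + evec g (3 * j + 2) = Svec g j D - evec g 0 + evec g 1 := by
    unfold wstar Svec; rw [hsplit]; unfold dk; abel
  have hY2 : CL g (wstar g + evec g (3 * j + 2)) := by rw [idY2]; exact hB
  -- Y3 = Y2 + dk j
  have pY3 : pairing (OmTau g) (Svec g j D - evec g 0 + evec g 1) (dk g j) = 1 := by
    unfold dk
    simp only [pairing_sub, pairing_add_left, pairing_sub_left,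
      pairing_Svec_e3j hj hDrange hjD, pairing_Svec_e2j hj hDrange hjD,
      pair03 hj, pair02 hj, pair13 hj, pair12 hj]
    ring
  have idY3 : wstar g + evec g (3 * j + 3) = Svec g j D - evec g 0 + evec g 1 + dk g j := by
    unfold wstar Svec; rw [hsplit]; unfold dk; abel
  have hY3 : CL g (wstar g + evec g (3 * j + 3)) := by
    rw [idY3]; exact OmegaClosure.add hB (CL_dk hj) pY3
  exact ⟨hX2, hX3, hY2, hY3⟩

end assembly

section odd
variable {g : ℕ}

lemma main_odd (hg : 3 ≤ g) (hgO : Odd g) {j : ℕ} (hj : j < g - 1) :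
    (Ttau g (vstar g + evec g (3 * j + 2))) ^ 2 ∈ Gam g ∧
    (Ttau g (vstar g + evec g (3 * j + 3))) ^ 2 ∈ Gam g ∧
    (Ttau g (wstar g + evec g (3 * j + 2))) ^ 2 ∈ Gam g ∧
    (Ttau g (wstar g + evec g (3 * j + 3))) ^ 2 ∈ Gam g := by
  have hg1 : 1 ≤ g := by omega
  have hjr : j ∈ Finset.range (g - 1) := Finset.mem_range.mpr hj
  set ks : ℕ := if j = g - 2 then g - 3 else g - 2 with hksdef
  have hks : ks < g - 1 := by rw [hksdef]; split <;> omega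
  have hksj : ks ≠ j := by rw [hksdef]; split <;> omega
  have hksmem : ks ∈ (Finset.range (g - 1)).erase j :=
    Finset.mem_erase.mpr ⟨hksj, Finset.mem_range.mpr hks⟩
  set D : Finset ℕ := ((Finset.range (g - 1)).erase j).erase ks with hDdef
  have hDsub : D ⊆ (Finset.range (g - 1)).erase j := Finset.erase_subset _ _
  have hDrange : D ⊆ Finset.range (g - 1) :=
    Finset.Subset.trans hDsub (Finset.erase_subset _ _)
  have hjD : j ∉ D := fun h => (Finset.mem_erase.mp (hDsub h)).1 rfl
  have hksD : ks ∉ D := Finset.notMem_erase _ _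
  have hcard : D.card = g - 3 := by
    rw [hDdef, Finset.card_erase_of_mem hksmem, Finset.card_erase_of_mem hjr,
      Finset.card_range]
    omega
  have heven : Even (g - 3) := by
    obtain ⟨m, hm⟩ := hgO; exact ⟨m - 1, by omega⟩
  have hS : CL g (Svec g j D) := Svec_mem hj (g - 3) D hDsub hcard heven
  -- the chain building W
  have p1 : pairing (OmTau g) (Svec g j D) (evec g (3 * ks + 2)) = 1 :=
    pairing_Svec_e2 hj hDrange hks hksj hksD
  have h1 : CL g (Svec g j D - evec g (3 * ks + 2)) :=
    OmegaClosure.sub hS (CL_evec (mem2 hks)) p1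
  have p2 : pairing (OmTau g) (Svec g j D - evec g (3 * ks + 2)) (evec g 1) = 1 := by
    rw [pairing_sub_left, pairing_Svec_e1 hg1 hj hDrange, pair21 hks]; ring
  have h2 : CL g (Svec g j D - evec g (3 * ks + 2) + evec g 1) :=
    OmegaClosure.add h1 (CL_evec mem1) p2
  have p3 : pairing (OmTau g) (evec g 0)
      (Svec g j D - evec g (3 * ks + 2) + evec g 1) = 1 := by
    rw [pairing_add, pairing_sub, pairing_e0_Svec hj hDrange, pair02 hks, pair01 hg1]; ring
  have h3 : CL g (Svec g j D - evec g (3 * ks + 2) + evec g 1 - evec g 0) :=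
    CL.subR h2 (CL_evec mem0) p3
  have p4 : pairing (OmTau g) (evec g 0)
      (Svec g j D - evec g (3 * ks + 2) + evec g 1 - evec g 0) = 1 := by
    rw [pairing_sub, p3, pair_self]; ring
  have h4 : CL g (Svec g j D - evec g (3 * ks + 2) + evec g 1 - evec g 0 - evec g 0) :=
    CL.subR h3 (CL_evec mem0) p4
  have p5 : pairing (OmTau g) (evec g (3 * ks + 3))
      (Svec g j D - evec g (3 * ks + 2) + evec g 1 - evec g 0 - evec g 0) = 1 := by
    rw [skw]
    simp only [pairing_sub_left, pairing_add_left,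
      pairing_Svec_e3 hj hDrange hks hksj hksD, pair23 hks, pair13 hks, pair03 hks]
    ring
  set W : Idx g → ℤ :=
    Svec g j D - evec g (3 * ks + 2) + evec g 1 - evec g 0 - evec g 0 + evec g (3 * ks + 3)
    with hWdef
  have hW : CL g W := CL.addR h4 (CL_evec (mem3 hks)) p5
  -- pairing of W with dk j
  have pW : pairing (OmTau g) W (dk g j) = 1 := by
    rw [hWdef]
    unfold dk
    simp only [pairing_sub, pairing_add_left, pairing_sub_left,
      pairing_Svec_e3j hj hDrange hjD, pairing_Svec_e2j hj hDrange hjD,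
      pair23' hks hj hksj, pair22' hks hj hksj, pair33' hks hj hksj, pair32' hks hj hksj,
      pair13 hj, pair12 hj, pair03 hj, pair02 hj]
    ring
  have hWd : CL g (W + dk g j) := OmegaClosure.add hW (CL_dk hj) pW
  -- v1 = e0 - e1 + e0
  have hv1a : CL g (evec g 0 - evec g 1) :=
    OmegaClosure.sub (CL_evec mem0) (CL_evec mem1) (pair01 hg1)
  have pv1 : pairing (OmTau g) (evec g 0 - evec g 1) (evec g 0) = 1 := by
    rw [pairing_sub_left, pair_self, pair10 hg1]; ring
  have hv1 : CL g (evec g 0 - evec g 1 + evec g 0) :=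
    OmegaClosure.add hv1a (CL_evec mem0) pv1
  -- pairings with W
  have pe0W : pairing (OmTau g) (evec g 0) W = 2 := by
    rw [hWdef]
    simp only [pairing_sub, pairing_add, pairing_e0_Svec hj hDrange,
      pair02 hks, pair01 hg1, pair_self, pair03 hks]
    ring
  have pe1W : pairing (OmTau g) (evec g 1) W = 2 := by
    rw [hWdef]
    simp only [pairing_sub, pairing_add, pairing_e1_Svec hg1 hj hDrange,
      pair12 hks, pair_self, pair10 hg1, pair13 hks]
    ring
  have pe0dk : pairing (OmTau g) (evec g 0) (dk g j) = 0 := pair_e0_dk hj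
  have pe1dk : pairing (OmTau g) (evec g 1) (dk g j) = 0 := pair_e1_dk hj
  have pv1W : pairing (OmTau g) (evec g 0 - evec g 1 + evec g 0) W = 2 := by
    rw [pairing_add_left, pairing_sub_left, pe0W, pe1W]; ring
  have pv1Wd : pairing (OmTau g) (evec g 0 - evec g 1 + evec g 0) (W + dk g j) = 2 := by
    rw [pairing_add, pv1W, pairing_add_left, pairing_sub_left, pe0dk, pe1dk]; ring
  have pe0Wd : pairing (OmTau g) (evec g 0) (W + dk g j) = 2 := by
    rw [pairing_add, pe0W, pe0dk]; ring
  -- identities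
  have hsplit : ∑ k ∈ Finset.range (g - 1), (-evec g (3 * k + 2) + evec g (3 * k + 3))
      = dk g j + (dk g ks + ∑ k ∈ D, dk g k) := by
    rw [sum_to_dk, ← Finset.add_sum_erase _ (dk g) hjr, ← Finset.add_sum_erase _ (dk g) hksmem]
  have idX2 : vstar g + evec g (3 * j + 2) = (evec g 0 - evec g 1 + evec g 0) + W := by
    rw [hWdef]; unfold vstar Svec; rw [hsplit]; unfold dk; abel
  have idX3 : vstar g + evec g (3 * j + 3)
      = (evec g 0 - evec g 1 + evec g 0) + (W + dk g j) := by
    rw [hWdef]; unfold vstar Svec; rw [hsplit]; unfold dk; abel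
  have idY2 : wstar g + evec g (3 * j + 2) = evec g 0 + W := by
    rw [hWdef]; unfold wstar Svec; rw [hsplit]; unfold dk; abel
  have idY3 : wstar g + evec g (3 * j + 3) = evec g 0 + (W + dk g j) := by
    rw [hWdef]; unfold wstar Svec; rw [hsplit]; unfold dk; abel
  refine ⟨?_, ?_, ?_, ?_⟩
  · rw [idX2]; exact Ttau_sq_mem hv1 hW pv1W
  · rw [idX3]; exact Ttau_sq_mem hv1 hWd pv1Wd
  · rw [idY2]; exact Ttau_sq_mem (CL_evec mem0) hW pe0W
  · rw [idY3]; exact Ttau_sq_mem (CL_evec mem0) hWd pe0Wd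

end odd


/-- Lemma 3.6 of the paper: for every `β ∈ A ∖ {0,1}`, both `T_{v* + e_β}²` and
`T_{w* + e_β}²` lie in the subgroup generated by the transvections along the standard
basis vectors. -/
theorem statement12 (g : ℕ) (hg : 3 ≤ g) (b : Idx g)
    (hb0 : (b : ℕ) ≠ 0) (hb1 : (b : ℕ) ≠ 1) :
    (Ttau g (vstar g + evec g (b : ℕ))) ^ 2 ∈
      Subgroup.closure (Set.range fun c : Idx g => Ttau g (evec g (c : ℕ))) ∧
    (Ttau g (wstar g + evec g (b : ℕ))) ^ 2 ∈
      Subgroup.closure (Set.range fun c : Idx g => Ttau g (evec g (c : ℕ))) := by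
  obtain ⟨j, hj, hβ⟩ : ∃ j, j < g - 1 ∧ ((b : ℕ) = 3 * j + 2 ∨ (b : ℕ) = 3 * j + 3) := by
    have hb := b.2
    simp only [Aset, Finset.mem_union, Finset.mem_insert, Finset.mem_singleton,
      Finset.mem_biUnion, Finset.mem_range] at hb
    rcases hb with (h | h) | ⟨k, hk, hmem⟩
    · exact absurd h hb0
    · exact absurd h hb1
    · exact ⟨k, hk, hmem⟩
  rcases Nat.even_or_odd g with hE | hO
  · obtain ⟨hX2, hX3, hY2, hY3⟩ := main_even hg hE hj
    rcases hβ with h | h <;> rw [h]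
    · exact ⟨pow_mem (Ttau_mem_of_CL hX2) 2, pow_mem (Ttau_mem_of_CL hY2) 2⟩
    · exact ⟨pow_mem (Ttau_mem_of_CL hX3) 2, pow_mem (Ttau_mem_of_CL hY3) 2⟩
  · obtain ⟨hX2, hX3, hY2, hY3⟩ := main_odd hg hO hj
    rcases hβ with h | h <;> rw [h]
    · exact ⟨hX2, hY2⟩
    · exact ⟨hX3, hY3⟩
end

section
/- Let d ≥ 6 and let Ω be the alternating form of the permutation τ^{(d)}. If β is an integer with 2 ≤ β ≤ d and β ≡ 2 (mod 4), then the vector Σ_{α=1}^{β} (−1)^α e_α = −e_1 + e_2 − e_3 + ⋯ + e_β belongs to the Ω-closure {e_α : α ∈ A}^Ω of the standard basis. -/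
open Matrix

/-- The alphabet `A = {1, …, d}`. -/
def AsetD (d : ℕ) : Finset ℕ := Finset.Icc 1 d

/-- The index type of the alphabet. -/
abbrev IdxD (d : ℕ) := ↥(AsetD d)

/-- The bottom bijection of the permutation `τ^{(d)}` (top row `1 2 … d`, bottom row
`d d-1 … 6 3 2 5 4 1`). -/
def pbtauD (d : ℕ) (n : ℕ) : ℕ :=
  if n = 1 then d
  else if n = 2 then d - 3
  else if n = 3 then d - 4
  else if n = 4 then d - 1
  else if n = 5 then d - 2
  else d + 1 - n

/-- The alternating form `Ω` of the permutation `τ^{(d)}`. -/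
def OmD (d : ℕ) : Matrix (IdxD d) (IdxD d) ℤ := fun a b =>
  if (a : ℕ) < (b : ℕ) ∧ pbtauD d (b : ℕ) < pbtauD d (a : ℕ) then 1
  else if (b : ℕ) < (a : ℕ) ∧ pbtauD d (a : ℕ) < pbtauD d (b : ℕ) then -1
  else 0

lemma OmD_skew (d : ℕ) : (OmD d)ᵀ = -(OmD d) := by
  ext a b
  simp only [Matrix.transpose_apply, Matrix.neg_apply, OmD]
  split_ifs <;> omega

/-- The standard basis vector `e_m` of `ℤ^A`. -/
def evecD (d : ℕ) (m : ℕ) : IdxD d → ℤ := fun a => if (a : ℕ) = m then 1 else 0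

/-- The bilinear pairing `⟨u, v⟩ = u Ω vᵀ` on row vectors. -/
def pairingD (d : ℕ) (u v : IdxD d → ℤ) : ℤ := u ⬝ᵥ (OmD d).mulVec v

def omval (m n : ℕ) : ℤ :=
  if m < n then (if (m = 2 ∨ m = 3) ∧ (n = 4 ∨ n = 5) then 0 else 1)
  else if n < m then (if (n = 2 ∨ n = 3) ∧ (m = 4 ∨ m = 5) then 0 else -1)
  else 0

lemma neg_one_pow_mod (n : ℕ) : (-1:ℤ)^n = if n % 2 = 0 then 1 else -1 := by
  rcases Nat.even_or_odd n with h | h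
  · rw [h.neg_one_pow, if_pos (Nat.even_iff.mp h)]
  · rw [h.neg_one_pow, if_neg (by rw [Nat.odd_iff] at h; omega)]

lemma alt_sum (n : ℕ) : ∑ m ∈ Finset.Icc 1 n, (-1:ℤ)^m = if n % 2 = 0 then 0 else -1 := by
  induction n with
  | zero => simp
  | succ k ih =>
    rw [Finset.sum_Icc_succ_top (by omega), ih, neg_one_pow_mod]
    rcases Nat.mod_two_eq_zero_or_one k with h | h
    · rw [if_pos h, if_neg (by omega), if_neg (by omega)]; ring
    · rw [if_neg (by omega), if_pos (by omega), if_pos (by omega)]; ring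

section pair
variable {d : ℕ}

lemma pair_add_left (u v w : IdxD d → ℤ) :
    pairingD d (u + v) w = pairingD d u w + pairingD d v w := add_dotProduct _ _ _
lemma pair_sub_left (u v w : IdxD d → ℤ) :
    pairingD d (u - v) w = pairingD d u w - pairingD d v w := sub_dotProduct _ _ _
lemma pair_neg_left (u w : IdxD d → ℤ) :
    pairingD d (-u) w = -pairingD d u w := neg_dotProduct _ _
lemma pair_add_right (u v w : IdxD d → ℤ) :
    pairingD d u (v + w) = pairingD d u v + pairingD d u w := by
  unfold pairingD; rw [Matrix.mulVec_add, dotProduct_add]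
lemma pair_sub_right (u v w : IdxD d → ℤ) :
    pairingD d u (v - w) = pairingD d u v - pairingD d u w := by
  unfold pairingD; rw [Matrix.mulVec_sub, dotProduct_sub]
lemma pair_neg_right (u v : IdxD d → ℤ) :
    pairingD d u (-v) = -pairingD d u v := by
  unfold pairingD; rw [Matrix.mulVec_neg, dotProduct_neg]
lemma pair_smul_left (c : ℤ) (u w : IdxD d → ℤ) :
    pairingD d (c • u) w = c * pairingD d u w := by
  unfold pairingD; rw [smul_dotProduct, smul_eq_mul]
lemma pair_sum_left {ι : Type*} (s : Finset ι) (f : ι → IdxD d → ℤ) (w : IdxD d → ℤ) :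
    pairingD d (∑ i ∈ s, f i) w = ∑ i ∈ s, pairingD d (f i) w := by
  unfold pairingD dotProduct
  simp only [Finset.sum_apply, Finset.sum_mul]
  exact Finset.sum_comm

lemma pair_skew (u v : IdxD d → ℤ) : pairingD d u v = -pairingD d v u := by
  unfold pairingD
  rw [dotProduct_mulVec, ← Matrix.mulVec_transpose, OmD_skew, Matrix.neg_mulVec,
    neg_dotProduct, dotProduct_comm]

lemma pb_lt (d : ℕ) (hd : 6 ≤ d) {m n : ℕ} (h1 : 1 ≤ m) (h2 : m ≤ d) (h3 : 1 ≤ n) (h4 : n ≤ d) :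
    m < n → (pbtauD d n < pbtauD d m ↔ ¬((m = 2 ∨ m = 3) ∧ (n = 4 ∨ n = 5))) := by
  unfold pbtauD; split_ifs <;> omega

lemma pee (hd : 6 ≤ d) {m n : ℕ} (hm1 : 1 ≤ m) (hmd : m ≤ d) (hn1 : 1 ≤ n) (hnd : n ≤ d)
    {r : ℤ} (h : omval m n = r) :
    pairingD d (evecD d m) (evecD d n) = r := by
  have hm : m ∈ AsetD d := Finset.mem_Icc.mpr ⟨hm1, hmd⟩
  have hn : n ∈ AsetD d := Finset.mem_Icc.mpr ⟨hn1, hnd⟩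
  have h1 : (OmD d).mulVec (evecD d n) = fun a => OmD d a ⟨n, hn⟩ := by
    funext a
    unfold Matrix.mulVec dotProduct evecD
    rw [Finset.sum_eq_single (⟨n, hn⟩ : IdxD d)]
    · simp
    · intro b _ hb
      have : ¬((b : ℕ) = n) := fun hh => hb (Subtype.ext hh)
      simp [this]
    · intro hh; exact absurd (Finset.mem_univ _) hh
  unfold pairingD
  rw [h1]
  unfold dotProduct evecD
  rw [Finset.sum_eq_single (⟨m, hm⟩ : IdxD d)]
  · rw [← h]
    have hcoe : ((⟨m, hm⟩ : IdxD d) : ℕ) = m := rfl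
    rw [if_pos hcoe, one_mul]
    have L1 := pb_lt d hd hm1 hmd hn1 hnd
    have L2 := pb_lt d hd hn1 hnd hm1 hmd
    show (if m < n ∧ pbtauD d n < pbtauD d m then (1:ℤ)
      else if n < m ∧ pbtauD d m < pbtauD d n then -1 else 0) = omval m n
    unfold omval
    split_ifs <;> omega
  · intro b _ hb
    have : ¬((b : ℕ) = m) := fun hh => hb (Subtype.ext hh)
    simp [this]
  · intro hh; exact absurd (Finset.mem_univ _) hh

end pair

section pairv
variable {d : ℕ}

lemma pair_v_big (hd : 6 ≤ d) {β n : ℕ} (hβe : β % 2 = 0) (hβd : β ≤ d)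
    (hn : β < n) (hn6 : 6 ≤ n) (hnd : n ≤ d) :
    pairingD d (∑ m ∈ Finset.Icc 1 β, ((-1:ℤ)^m) • evecD d m) (evecD d n) = 0 := by
  rw [pair_sum_left]
  have hcong : ∀ m ∈ Finset.Icc 1 β,
      pairingD d (((-1:ℤ)^m) • evecD d m) (evecD d n) = (-1:ℤ)^m := by
    intro m hm
    obtain ⟨h1, h2⟩ := Finset.mem_Icc.mp hm
    rw [pair_smul_left, pee hd h1 (le_trans h2 hβd) (by omega) hnd
      (r := 1) (by unfold omval; split_ifs <;> omega), mul_one]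
  rw [Finset.sum_congr rfl hcong, alt_sum, if_pos hβe]

lemma pair_v_small (hd : 6 ≤ d) {β n : ℕ} (hβ6 : 6 ≤ β) (hβe : β % 2 = 0) (hβd : β ≤ d)
    (hn2 : 2 ≤ n) (hn5 : n ≤ 5) :
    pairingD d (∑ m ∈ Finset.Icc 1 β, ((-1:ℤ)^m) • evecD d m) (evecD d n) = -1 := by
  have hnd : n ≤ d := by omega
  have hsplit : Finset.Icc 1 β = Finset.Icc 1 5 ∪ Finset.Ioc 5 β := by
    ext a
    simp only [Finset.mem_Icc, Finset.mem_Ioc, Finset.mem_union]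
    omega
  have hdisj : Disjoint (Finset.Icc 1 5) (Finset.Ioc 5 β) := by
    rw [Finset.disjoint_left]
    intro a ha hb
    simp only [Finset.mem_Icc] at ha
    simp only [Finset.mem_Ioc] at hb
    omega
  rw [pair_sum_left, hsplit, Finset.sum_union hdisj]
  have hcong : ∀ m ∈ Finset.Icc 1 5,
      pairingD d (((-1:ℤ)^m) • evecD d m) (evecD d n) = (-1:ℤ)^m * omval m n := by
    intro m hm
    obtain ⟨h1, h2⟩ := Finset.mem_Icc.mp hm
    rw [pair_smul_left, pee hd h1 (by omega) (by omega) hnd rfl]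
  have hcong2 : ∀ m ∈ Finset.Ioc 5 β,
      pairingD d (((-1:ℤ)^m) • evecD d m) (evecD d n) = (-1:ℤ)^m * (-1) := by
    intro m hm
    obtain ⟨h1, h2⟩ := Finset.mem_Ioc.mp hm
    rw [pair_smul_left, pee hd (by omega) (by omega) (by omega) hnd
      (r := -1) (by unfold omval; split_ifs <;> omega)]
  rw [Finset.sum_congr rfl hcong, Finset.sum_congr rfl hcong2]
  have htail : ∑ m ∈ Finset.Ioc 5 β, (-1:ℤ)^m = 1 := by
    have h5 : ∑ m ∈ Finset.Icc 1 5, (-1:ℤ)^m = -1 := by decide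
    have hall : ∑ m ∈ Finset.Icc 1 β, (-1:ℤ)^m = 0 := by rw [alt_sum, if_pos hβe]
    rw [hsplit, Finset.sum_union hdisj, h5] at hall
    linarith
  have hhead : ∑ m ∈ Finset.Icc 1 5, (-1:ℤ)^m * omval m n = 0 := by
    have h25 : n = 2 ∨ n = 3 ∨ n = 4 ∨ n = 5 := by omega
    have : Finset.Icc 1 5 = ({1, 2, 3, 4, 5} : Finset ℕ) := by decide
    rw [this]
    rcases h25 with rfl | rfl | rfl | rfl <;> decide
  rw [hhead, ← Finset.sum_mul, htail]
  ring
end pairv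

set_option maxHeartbeats 2000000 in
lemma step_lemma_s15 (d b : ℕ) (hd : 6 ≤ d) (hb6 : 6 ≤ b) (hbe : b % 2 = 0) (hbd : b + 4 ≤ d)
    (hV : OmegaClosure (pairingD d) (Set.range fun a : IdxD d => evecD d (a : ℕ))
      (∑ m ∈ Finset.Icc 1 b, ((-1:ℤ)^m) • evecD d m)) :
    OmegaClosure (pairingD d) (Set.range fun a : IdxD d => evecD d (a : ℕ))
      (∑ m ∈ Finset.Icc 1 (b+4), ((-1:ℤ)^m) • evecD d m) := by
  set V := ∑ m ∈ Finset.Icc 1 b, ((-1:ℤ)^m) • evecD d m with hVdef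
  have ce : ∀ n : ℕ, 1 ≤ n → n ≤ d →
      OmegaClosure (pairingD d) (Set.range fun a : IdxD d => evecD d (a : ℕ)) (evecD d n) :=
    fun n h1 h2 => OmegaClosure.base ⟨⟨n, Finset.mem_Icc.mpr ⟨h1, h2⟩⟩, rfl⟩
  have pv : ∀ n : ℕ, 2 ≤ n → n ≤ 5 → pairingD d V (evecD d n) = -1 := fun n a c =>
    pair_v_small hd hb6 hbe (by omega) a c
  have pvb : ∀ n : ℕ, b < n → 6 ≤ n → n ≤ d → pairingD d V (evecD d n) = 0 := fun n a c e =>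
    pair_v_big hd hbe (by omega) a c e
  have hv2 : pairingD d V (evecD d 2) = -1 := pv 2 (by omega) (by omega)
  have hv4 : pairingD d V (evecD d 4) = -1 := pv 4 (by omega) (by omega)
  have hv5 : pairingD d V (evecD d 5) = -1 := pv 5 (by omega) (by omega)
  have hvp1 : pairingD d V (evecD d (b+1)) = 0 := pvb (b+1) (by omega) (by omega) (by omega)
  have hvp2 : pairingD d V (evecD d (b+2)) = 0 := pvb (b+2) (by omega) (by omega) (by omega)
  have hvp3 : pairingD d V (evecD d (b+3)) = 0 := pvb (b+3) (by omega) (by omega) (by omega)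
  have hvp4 : pairingD d V (evecD d (b+4)) = 0 := pvb (b+4) (by omega) (by omega) (by omega)
  have hv2' : pairingD d (evecD d 2) V = 1 := by rw [pair_skew, hv2]; ring
  have hv4' : pairingD d (evecD d 4) V = 1 := by rw [pair_skew, hv4]; ring
  have hv5' : pairingD d (evecD d 5) V = 1 := by rw [pair_skew, hv5]; ring
  have hvp1' : pairingD d (evecD d (b+1)) V = 0 := by rw [pair_skew, hvp1]; ring
  have hvp2' : pairingD d (evecD d (b+2)) V = 0 := by rw [pair_skew, hvp2]; ring
  have hvp3' : pairingD d (evecD d (b+3)) V = 0 := by rw [pair_skew, hvp3]; ring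
  have hvp4' : pairingD d (evecD d (b+4)) V = 0 := by rw [pair_skew, hvp4]; ring
  have a_2_2 : pairingD d (evecD d (2)) (evecD d (2)) = (0) :=
    pee hd (by omega) (by omega) (by omega) (by omega) (by unfold omval; split_ifs <;> omega)
  have a_2_4 : pairingD d (evecD d (2)) (evecD d (4)) = (0) :=
    pee hd (by omega) (by omega) (by omega) (by omega) (by unfold omval; split_ifs <;> omega)
  have a_2_5 : pairingD d (evecD d (2)) (evecD d (5)) = (0) :=
    pee hd (by omega) (by omega) (by omega) (by omega) (by unfold omval; split_ifs <;> omega)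
  have a_2_p1 : pairingD d (evecD d (2)) (evecD d (b+1)) = (1) :=
    pee hd (by omega) (by omega) (by omega) (by omega) (by unfold omval; split_ifs <;> omega)
  have a_2_p2 : pairingD d (evecD d (2)) (evecD d (b+2)) = (1) :=
    pee hd (by omega) (by omega) (by omega) (by omega) (by unfold omval; split_ifs <;> omega)
  have a_2_p3 : pairingD d (evecD d (2)) (evecD d (b+3)) = (1) :=
    pee hd (by omega) (by omega) (by omega) (by omega) (by unfold omval; split_ifs <;> omega)
  have a_2_p4 : pairingD d (evecD d (2)) (evecD d (b+4)) = (1) :=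
    pee hd (by omega) (by omega) (by omega) (by omega) (by unfold omval; split_ifs <;> omega)
  have a_4_2 : pairingD d (evecD d (4)) (evecD d (2)) = (0) :=
    pee hd (by omega) (by omega) (by omega) (by omega) (by unfold omval; split_ifs <;> omega)
  have a_4_4 : pairingD d (evecD d (4)) (evecD d (4)) = (0) :=
    pee hd (by omega) (by omega) (by omega) (by omega) (by unfold omval; split_ifs <;> omega)
  have a_4_5 : pairingD d (evecD d (4)) (evecD d (5)) = (1) :=
    pee hd (by omega) (by omega) (by omega) (by omega) (by unfold omval; split_ifs <;> omega)
  have a_4_p1 : pairingD d (evecD d (4)) (evecD d (b+1)) = (1) :=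
    pee hd (by omega) (by omega) (by omega) (by omega) (by unfold omval; split_ifs <;> omega)
  have a_4_p2 : pairingD d (evecD d (4)) (evecD d (b+2)) = (1) :=
    pee hd (by omega) (by omega) (by omega) (by omega) (by unfold omval; split_ifs <;> omega)
  have a_4_p3 : pairingD d (evecD d (4)) (evecD d (b+3)) = (1) :=
    pee hd (by omega) (by omega) (by omega) (by omega) (by unfold omval; split_ifs <;> omega)
  have a_4_p4 : pairingD d (evecD d (4)) (evecD d (b+4)) = (1) :=
    pee hd (by omega) (by omega) (by omega) (by omega) (by unfold omval; split_ifs <;> omega)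
  have a_5_2 : pairingD d (evecD d (5)) (evecD d (2)) = (0) :=
    pee hd (by omega) (by omega) (by omega) (by omega) (by unfold omval; split_ifs <;> omega)
  have a_5_4 : pairingD d (evecD d (5)) (evecD d (4)) = (-1) :=
    pee hd (by omega) (by omega) (by omega) (by omega) (by unfold omval; split_ifs <;> omega)
  have a_5_5 : pairingD d (evecD d (5)) (evecD d (5)) = (0) :=
    pee hd (by omega) (by omega) (by omega) (by omega) (by unfold omval; split_ifs <;> omega)
  have a_5_p1 : pairingD d (evecD d (5)) (evecD d (b+1)) = (1) :=
    pee hd (by omega) (by omega) (by omega) (by omega) (by unfold omval; split_ifs <;> omega)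
  have a_5_p2 : pairingD d (evecD d (5)) (evecD d (b+2)) = (1) :=
    pee hd (by omega) (by omega) (by omega) (by omega) (by unfold omval; split_ifs <;> omega)
  have a_5_p3 : pairingD d (evecD d (5)) (evecD d (b+3)) = (1) :=
    pee hd (by omega) (by omega) (by omega) (by omega) (by unfold omval; split_ifs <;> omega)
  have a_5_p4 : pairingD d (evecD d (5)) (evecD d (b+4)) = (1) :=
    pee hd (by omega) (by omega) (by omega) (by omega) (by unfold omval; split_ifs <;> omega)
  have a_p1_2 : pairingD d (evecD d (b+1)) (evecD d (2)) = (-1) :=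
    pee hd (by omega) (by omega) (by omega) (by omega) (by unfold omval; split_ifs <;> omega)
  have a_p1_4 : pairingD d (evecD d (b+1)) (evecD d (4)) = (-1) :=
    pee hd (by omega) (by omega) (by omega) (by omega) (by unfold omval; split_ifs <;> omega)
  have a_p1_5 : pairingD d (evecD d (b+1)) (evecD d (5)) = (-1) :=
    pee hd (by omega) (by omega) (by omega) (by omega) (by unfold omval; split_ifs <;> omega)
  have a_p1_p1 : pairingD d (evecD d (b+1)) (evecD d (b+1)) = (0) :=
    pee hd (by omega) (by omega) (by omega) (by omega) (by unfold omval; split_ifs <;> omega)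
  have a_p1_p2 : pairingD d (evecD d (b+1)) (evecD d (b+2)) = (1) :=
    pee hd (by omega) (by omega) (by omega) (by omega) (by unfold omval; split_ifs <;> omega)
  have a_p1_p3 : pairingD d (evecD d (b+1)) (evecD d (b+3)) = (1) :=
    pee hd (by omega) (by omega) (by omega) (by omega) (by unfold omval; split_ifs <;> omega)
  have a_p1_p4 : pairingD d (evecD d (b+1)) (evecD d (b+4)) = (1) :=
    pee hd (by omega) (by omega) (by omega) (by omega) (by unfold omval; split_ifs <;> omega)
  have a_p2_2 : pairingD d (evecD d (b+2)) (evecD d (2)) = (-1) :=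
    pee hd (by omega) (by omega) (by omega) (by omega) (by unfold omval; split_ifs <;> omega)
  have a_p2_4 : pairingD d (evecD d (b+2)) (evecD d (4)) = (-1) :=
    pee hd (by omega) (by omega) (by omega) (by omega) (by unfold omval; split_ifs <;> omega)
  have a_p2_5 : pairingD d (evecD d (b+2)) (evecD d (5)) = (-1) :=
    pee hd (by omega) (by omega) (by omega) (by omega) (by unfold omval; split_ifs <;> omega)
  have a_p2_p1 : pairingD d (evecD d (b+2)) (evecD d (b+1)) = (-1) :=
    pee hd (by omega) (by omega) (by omega) (by omega) (by unfold omval; split_ifs <;> omega)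
  have a_p2_p2 : pairingD d (evecD d (b+2)) (evecD d (b+2)) = (0) :=
    pee hd (by omega) (by omega) (by omega) (by omega) (by unfold omval; split_ifs <;> omega)
  have a_p2_p3 : pairingD d (evecD d (b+2)) (evecD d (b+3)) = (1) :=
    pee hd (by omega) (by omega) (by omega) (by omega) (by unfold omval; split_ifs <;> omega)
  have a_p2_p4 : pairingD d (evecD d (b+2)) (evecD d (b+4)) = (1) :=
    pee hd (by omega) (by omega) (by omega) (by omega) (by unfold omval; split_ifs <;> omega)
  have a_p3_2 : pairingD d (evecD d (b+3)) (evecD d (2)) = (-1) :=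
    pee hd (by omega) (by omega) (by omega) (by omega) (by unfold omval; split_ifs <;> omega)
  have a_p3_4 : pairingD d (evecD d (b+3)) (evecD d (4)) = (-1) :=
    pee hd (by omega) (by omega) (by omega) (by omega) (by unfold omval; split_ifs <;> omega)
  have a_p3_5 : pairingD d (evecD d (b+3)) (evecD d (5)) = (-1) :=
    pee hd (by omega) (by omega) (by omega) (by omega) (by unfold omval; split_ifs <;> omega)
  have a_p3_p1 : pairingD d (evecD d (b+3)) (evecD d (b+1)) = (-1) :=
    pee hd (by omega) (by omega) (by omega) (by omega) (by unfold omval; split_ifs <;> omega)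
  have a_p3_p2 : pairingD d (evecD d (b+3)) (evecD d (b+2)) = (-1) :=
    pee hd (by omega) (by omega) (by omega) (by omega) (by unfold omval; split_ifs <;> omega)
  have a_p3_p3 : pairingD d (evecD d (b+3)) (evecD d (b+3)) = (0) :=
    pee hd (by omega) (by omega) (by omega) (by omega) (by unfold omval; split_ifs <;> omega)
  have a_p3_p4 : pairingD d (evecD d (b+3)) (evecD d (b+4)) = (1) :=
    pee hd (by omega) (by omega) (by omega) (by omega) (by unfold omval; split_ifs <;> omega)
  have a_p4_2 : pairingD d (evecD d (b+4)) (evecD d (2)) = (-1) :=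
    pee hd (by omega) (by omega) (by omega) (by omega) (by unfold omval; split_ifs <;> omega)
  have a_p4_4 : pairingD d (evecD d (b+4)) (evecD d (4)) = (-1) :=
    pee hd (by omega) (by omega) (by omega) (by omega) (by unfold omval; split_ifs <;> omega)
  have a_p4_5 : pairingD d (evecD d (b+4)) (evecD d (5)) = (-1) :=
    pee hd (by omega) (by omega) (by omega) (by omega) (by unfold omval; split_ifs <;> omega)
  have a_p4_p1 : pairingD d (evecD d (b+4)) (evecD d (b+1)) = (-1) :=
    pee hd (by omega) (by omega) (by omega) (by omega) (by unfold omval; split_ifs <;> omega)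
  have a_p4_p2 : pairingD d (evecD d (b+4)) (evecD d (b+2)) = (-1) :=
    pee hd (by omega) (by omega) (by omega) (by omega) (by unfold omval; split_ifs <;> omega)
  have a_p4_p3 : pairingD d (evecD d (b+4)) (evecD d (b+3)) = (-1) :=
    pee hd (by omega) (by omega) (by omega) (by omega) (by unfold omval; split_ifs <;> omega)
  have a_p4_p4 : pairingD d (evecD d (b+4)) (evecD d (b+4)) = (0) :=
    pee hd (by omega) (by omega) (by omega) (by omega) (by unfold omval; split_ifs <;> omega)
  have hs1 : OmegaClosure (pairingD d) (Set.range fun a : IdxD d => evecD d (a : ℕ))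
      (evecD d 4 - evecD d (b+4)) :=
    OmegaClosure.sub (ce 4 (by omega) (by omega)) (ce (b+4) (by omega) (by omega)) a_4_p4
  have q1 : pairingD d (evecD d 4 - evecD d (b+4)) V = 1 := by
    simp only [pair_sub_left, hv4', hvp4']; ring
  have hx1 : OmegaClosure (pairingD d) (Set.range fun a : IdxD d => evecD d (a : ℕ))
      (V - (evecD d 4 - evecD d (b+4))) := by
    have h := (OmegaClosure.sub hs1 hV q1).neg
    rwa [neg_sub] at h
  have hs2 : OmegaClosure (pairingD d) (Set.range fun a : IdxD d => evecD d (a : ℕ))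
      (evecD d 5 - evecD d (b+3)) :=
    OmegaClosure.sub (ce 5 (by omega) (by omega)) (ce (b+3) (by omega) (by omega)) a_5_p3
  have q2 : pairingD d (evecD d 5 - evecD d (b+3)) (V - (evecD d 4 - evecD d (b+4))) = 1 := by
    simp only [pair_sub_left, pair_sub_right, hv5', hvp3', a_5_p4, a_5_4, a_p3_4, a_p3_p4]
    ring
  have hx2 : OmegaClosure (pairingD d) (Set.range fun a : IdxD d => evecD d (a : ℕ))
      ((evecD d 5 - evecD d (b+3)) + (V - (evecD d 4 - evecD d (b+4)))) :=
    OmegaClosure.add hs2 hx1 q2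
  have hs3 : OmegaClosure (pairingD d) (Set.range fun a : IdxD d => evecD d (a : ℕ))
      (evecD d 2 + evecD d (b+1)) :=
    OmegaClosure.add (ce 2 (by omega) (by omega)) (ce (b+1) (by omega) (by omega)) a_2_p1
  have q3 : pairingD d (evecD d 2 + evecD d (b+1))
      ((evecD d 5 - evecD d (b+3)) + (V - (evecD d 4 - evecD d (b+4)))) = 1 := by
    simp only [pair_add_left, pair_add_right, pair_sub_left, pair_sub_right, hv2', hvp1',
      a_2_5, a_2_p3, a_2_4, a_2_p4, a_p1_5, a_p1_p3, a_p1_4, a_p1_p4]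
    ring
  have hx3 : OmegaClosure (pairingD d) (Set.range fun a : IdxD d => evecD d (a : ℕ))
      (((evecD d 5 - evecD d (b+3)) + (V - (evecD d 4 - evecD d (b+4))))
        - (evecD d 2 + evecD d (b+1))) := by
    have h := (OmegaClosure.sub hs3 hx2 q3).neg
    rwa [neg_sub] at h
  have hs4 : OmegaClosure (pairingD d) (Set.range fun a : IdxD d => evecD d (a : ℕ))
      (evecD d 5 - evecD d (b+2)) :=
    OmegaClosure.sub (ce 5 (by omega) (by omega)) (ce (b+2) (by omega) (by omega)) a_5_p2
  have q4 : pairingD d (((evecD d 5 - evecD d (b+3)) + (V - (evecD d 4 - evecD d (b+4))))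
      - (evecD d 2 + evecD d (b+1))) (evecD d 5 - evecD d (b+2)) = 1 := by
    simp only [pair_add_left, pair_add_right, pair_sub_left, pair_sub_right, hv5, hvp2,
      a_5_5, a_5_p2, a_p3_5, a_p3_p2, a_4_5, a_4_p2, a_p4_5, a_p4_p2, a_2_5, a_2_p2,
      a_p1_5, a_p1_p2]
    ring
  have hx4 : OmegaClosure (pairingD d) (Set.range fun a : IdxD d => evecD d (a : ℕ))
      ((((evecD d 5 - evecD d (b+3)) + (V - (evecD d 4 - evecD d (b+4))))
        - (evecD d 2 + evecD d (b+1))) - (evecD d 5 - evecD d (b+2))) :=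
    OmegaClosure.sub hx3 hs4 q4
  have q5 : pairingD d (evecD d 4)
      ((((evecD d 5 - evecD d (b+3)) + (V - (evecD d 4 - evecD d (b+4))))
        - (evecD d 2 + evecD d (b+1))) - (evecD d 5 - evecD d (b+2))) = 1 := by
    simp only [pair_add_right, pair_sub_right, hv4', a_4_5, a_4_p3, a_4_4, a_4_p4, a_4_2,
      a_4_p1, a_4_p2]
    ring
  have hx5 : OmegaClosure (pairingD d) (Set.range fun a : IdxD d => evecD d (a : ℕ))
      (evecD d 4 + ((((evecD d 5 - evecD d (b+3)) + (V - (evecD d 4 - evecD d (b+4))))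
        - (evecD d 2 + evecD d (b+1))) - (evecD d 5 - evecD d (b+2)))) :=
    OmegaClosure.add (ce 4 (by omega) (by omega)) hx4 q5
  have q6 : pairingD d (evecD d 2)
      (evecD d 4 + ((((evecD d 5 - evecD d (b+3)) + (V - (evecD d 4 - evecD d (b+4))))
        - (evecD d 2 + evecD d (b+1))) - (evecD d 5 - evecD d (b+2)))) = 1 := by
    simp only [pair_add_right, pair_sub_right, hv2', a_2_4, a_2_5, a_2_p3, a_2_p4, a_2_2,
      a_2_p1, a_2_p2]
    ring
  have hx6 : OmegaClosure (pairingD d) (Set.range fun a : IdxD d => evecD d (a : ℕ))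
      (evecD d 2 + (evecD d 4 + ((((evecD d 5 - evecD d (b+3)) +
        (V - (evecD d 4 - evecD d (b+4)))) - (evecD d 2 + evecD d (b+1)))
        - (evecD d 5 - evecD d (b+2))))) :=
    OmegaClosure.add (ce 2 (by omega) (by omega)) hx5 q6
  have hp1 : (-1:ℤ)^(b+1) = -1 := by rw [neg_one_pow_mod, if_neg (by omega)]
  have hp2 : (-1:ℤ)^(b+1+1) = 1 := by rw [neg_one_pow_mod, if_pos (by omega)]
  have hp3 : (-1:ℤ)^(b+1+1+1) = -1 := by rw [neg_one_pow_mod, if_neg (by omega)]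
  have hp4 : (-1:ℤ)^(b+1+1+1+1) = 1 := by rw [neg_one_pow_mod, if_pos (by omega)]
  have hfin : (∑ m ∈ Finset.Icc 1 (b+4), ((-1:ℤ)^m) • evecD d m)
      = evecD d 2 + (evecD d 4 + ((((evecD d 5 - evecD d (b+3)) +
        (V - (evecD d 4 - evecD d (b+4)))) - (evecD d 2 + evecD d (b+1)))
        - (evecD d 5 - evecD d (b+2)))) := by
    rw [show b+4 = b+3+1 from rfl, Finset.sum_Icc_succ_top (by omega),
        show b+3 = b+2+1 from rfl, Finset.sum_Icc_succ_top (by omega),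
        show b+2 = b+1+1 from rfl, Finset.sum_Icc_succ_top (by omega),
        Finset.sum_Icc_succ_top (by omega)]
    rw [hp1, hp2, hp3, hp4]
    simp only [one_smul, neg_smul, one_smul]
    abel
  rw [hfin]
  exact hx6

lemma base2 (d : ℕ) (hd : 6 ≤ d) :
    OmegaClosure (pairingD d) (Set.range fun a : IdxD d => evecD d (a : ℕ))
      (∑ m ∈ Finset.Icc 1 2, ((-1:ℤ)^m) • evecD d m) := by
  have ce : ∀ n : ℕ, 1 ≤ n → n ≤ d →
      OmegaClosure (pairingD d) (Set.range fun a : IdxD d => evecD d (a : ℕ)) (evecD d n) :=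
    fun n h1 h2 => OmegaClosure.base ⟨⟨n, Finset.mem_Icc.mpr ⟨h1, h2⟩⟩, rfl⟩
  have a12 : pairingD d (evecD d 1) (evecD d 2) = 1 :=
    pee hd (by omega) (by omega) (by omega) (by omega) (by decide)
  have h := (OmegaClosure.sub (ce 1 (by omega) (by omega)) (ce 2 (by omega) (by omega)) a12).neg
  have hfin : (∑ m ∈ Finset.Icc 1 2, ((-1:ℤ)^m) • evecD d m)
      = -(evecD d 1 - evecD d 2) := by
    rw [show (2:ℕ) = 1+1 from rfl, Finset.sum_Icc_succ_top (by omega), Finset.Icc_self,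
      Finset.sum_singleton]
    norm_num
    abel
  rw [hfin]
  exact h

set_option maxHeartbeats 1000000 in
lemma base6 (d : ℕ) (hd : 6 ≤ d) :
    OmegaClosure (pairingD d) (Set.range fun a : IdxD d => evecD d (a : ℕ))
      (∑ m ∈ Finset.Icc 1 6, ((-1:ℤ)^m) • evecD d m) := by
  have ce : ∀ n : ℕ, 1 ≤ n → n ≤ d →
      OmegaClosure (pairingD d) (Set.range fun a : IdxD d => evecD d (a : ℕ)) (evecD d n) :=
    fun n h1 h2 => OmegaClosure.base ⟨⟨n, Finset.mem_Icc.mpr ⟨h1, h2⟩⟩, rfl⟩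
  have a_1_2 : pairingD d (evecD d 1) (evecD d 2) = 1 :=
    pee hd (by omega) (by omega) (by omega) (by omega) (by decide)
  have a_5_6 : pairingD d (evecD d 5) (evecD d 6) = 1 :=
    pee hd (by omega) (by omega) (by omega) (by omega) (by decide)
  have a_5_1 : pairingD d (evecD d 5) (evecD d 1) = -1 :=
    pee hd (by omega) (by omega) (by omega) (by omega) (by decide)
  have a_5_2 : pairingD d (evecD d 5) (evecD d 2) = 0 :=
    pee hd (by omega) (by omega) (by omega) (by omega) (by decide)
  have a_6_1 : pairingD d (evecD d 6) (evecD d 1) = -1 :=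
    pee hd (by omega) (by omega) (by omega) (by omega) (by decide)
  have a_6_2 : pairingD d (evecD d 6) (evecD d 2) = -1 :=
    pee hd (by omega) (by omega) (by omega) (by omega) (by decide)
  have a_3_1 : pairingD d (evecD d 3) (evecD d 1) = -1 :=
    pee hd (by omega) (by omega) (by omega) (by omega) (by decide)
  have a_3_2 : pairingD d (evecD d 3) (evecD d 2) = -1 :=
    pee hd (by omega) (by omega) (by omega) (by omega) (by decide)
  have a_3_5 : pairingD d (evecD d 3) (evecD d 5) = 0 :=
    pee hd (by omega) (by omega) (by omega) (by omega) (by decide)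
  have a_3_6 : pairingD d (evecD d 3) (evecD d 6) = 1 :=
    pee hd (by omega) (by omega) (by omega) (by omega) (by decide)
  have a_4_1 : pairingD d (evecD d 4) (evecD d 1) = -1 :=
    pee hd (by omega) (by omega) (by omega) (by omega) (by decide)
  have a_4_2 : pairingD d (evecD d 4) (evecD d 2) = 0 :=
    pee hd (by omega) (by omega) (by omega) (by omega) (by decide)
  have a_4_5 : pairingD d (evecD d 4) (evecD d 5) = 1 :=
    pee hd (by omega) (by omega) (by omega) (by omega) (by decide)
  have a_4_6 : pairingD d (evecD d 4) (evecD d 6) = 1 :=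
    pee hd (by omega) (by omega) (by omega) (by omega) (by decide)
  have a_4_3 : pairingD d (evecD d 4) (evecD d 3) = 0 :=
    pee hd (by omega) (by omega) (by omega) (by omega) (by decide)
  have hW : OmegaClosure (pairingD d) (Set.range fun a : IdxD d => evecD d (a : ℕ))
      (-(evecD d 1 - evecD d 2)) :=
    (OmegaClosure.sub (ce 1 (by omega) (by omega)) (ce 2 (by omega) (by omega)) a_1_2).neg
  have hs1 : OmegaClosure (pairingD d) (Set.range fun a : IdxD d => evecD d (a : ℕ))
      (evecD d 5 - evecD d 6) :=
    OmegaClosure.sub (ce 5 (by omega) (by omega)) (ce 6 (by omega) (by omega)) a_5_6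
  have q1 : pairingD d (evecD d 5 - evecD d 6) (-(evecD d 1 - evecD d 2)) = 1 := by
    simp only [pair_sub_left, pair_neg_right, pair_sub_right, a_5_1, a_5_2, a_6_1, a_6_2]
    ring
  have hx1 : OmegaClosure (pairingD d) (Set.range fun a : IdxD d => evecD d (a : ℕ))
      (-(evecD d 1 - evecD d 2) - (evecD d 5 - evecD d 6)) := by
    have h := (OmegaClosure.sub hs1 hW q1).neg
    rwa [neg_sub] at h
  have q2 : pairingD d (evecD d 3)
      (-(evecD d 1 - evecD d 2) - (evecD d 5 - evecD d 6)) = 1 := by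
    simp only [pair_neg_right, pair_sub_right, a_3_1, a_3_2, a_3_5, a_3_6]
    ring
  have hx2 : OmegaClosure (pairingD d) (Set.range fun a : IdxD d => evecD d (a : ℕ))
      ((-(evecD d 1 - evecD d 2) - (evecD d 5 - evecD d 6)) - evecD d 3) := by
    have h := (OmegaClosure.sub (ce 3 (by omega) (by omega)) hx1 q2).neg
    rwa [neg_sub] at h
  have q3 : pairingD d (evecD d 4)
      ((-(evecD d 1 - evecD d 2) - (evecD d 5 - evecD d 6)) - evecD d 3) = 1 := by
    simp only [pair_neg_right, pair_sub_right, a_4_1, a_4_2, a_4_5, a_4_6, a_4_3]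
    ring
  have hx3 : OmegaClosure (pairingD d) (Set.range fun a : IdxD d => evecD d (a : ℕ))
      (evecD d 4 + ((-(evecD d 1 - evecD d 2) - (evecD d 5 - evecD d 6)) - evecD d 3)) :=
    OmegaClosure.add (ce 4 (by omega) (by omega)) hx2 q3
  have hfin : (∑ m ∈ Finset.Icc 1 6, ((-1:ℤ)^m) • evecD d m)
      = evecD d 4 + ((-(evecD d 1 - evecD d 2) - (evecD d 5 - evecD d 6)) - evecD d 3) := by
    rw [show (6:ℕ) = 5+1 from rfl, Finset.sum_Icc_succ_top (by omega),
        show (5:ℕ) = 4+1 from rfl, Finset.sum_Icc_succ_top (by omega),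
        show (4:ℕ) = 3+1 from rfl, Finset.sum_Icc_succ_top (by omega),
        show (3:ℕ) = 2+1 from rfl, Finset.sum_Icc_succ_top (by omega),
        show (2:ℕ) = 1+1 from rfl, Finset.sum_Icc_succ_top (by omega),
        Finset.Icc_self, Finset.sum_singleton]
    norm_num
    abel
  rw [hfin]
  exact hx3

lemma key (d : ℕ) (hd : 6 ≤ d) : ∀ β : ℕ, 2 ≤ β → β ≤ d → β % 4 = 2 →
    OmegaClosure (pairingD d) (Set.range fun a : IdxD d => evecD d (a : ℕ))
      (∑ m ∈ Finset.Icc 1 β, ((-1:ℤ)^m) • evecD d m) := by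
  intro β
  induction β using Nat.strong_induction_on with
  | _ β ih =>
    intro h2 hβd hmod
    rcases Nat.lt_or_ge β 10 with h | h
    · have hβ : β = 2 ∨ β = 6 := by omega
      rcases hβ with rfl | rfl
      · exact base2 d hd
      · exact base6 d hd
    · obtain ⟨b, rfl⟩ : ∃ b, β = b + 4 := ⟨β - 4, by omega⟩
      exact step_lemma_s15 d b hd (by omega) (by omega) (by omega)
        (ih b (by omega) (by omega) (by omega) (by omega))



/-- Lemma 4.2 of the paper: if `2 ≤ β ≤ d` and `β ≡ 2 (mod 4)` then
`Σ_{α=1}^{β} (-1)^α e_α` belongs to the Ω-closure of the standard basis, for the form of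
the permutation `τ^{(d)}`, `d ≥ 6`. -/
theorem statement15 (d : ℕ) (hd : 6 ≤ d) (β : ℕ) (hβ2 : 2 ≤ β) (hβd : β ≤ d)
    (hmod : β % 4 = 2) :
    OmegaClosure (pairingD d) (Set.range fun a : IdxD d => evecD d (a : ℕ))
      (∑ m ∈ Finset.Icc 1 β, ((-1 : ℤ) ^ m) • evecD d m) := by
  exact key d hd β hβ2 hβd hmod
end

section
/- Let d ≥ 6 with d ≡ 2 (mod 4), and let Q be the quadratic form of the permutation τ^{(d)}. Then the all-ones vector v = Σ_{α∈A} ē_α belongs to the Q-closure {ē_α : α ∈ A}^Q, and for every β ∈ A the vector v_β = Σ_{α∈A, α≠β} ē_α also belongs to {ē_α : α ∈ A}^Q. -/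
open Matrix

/-- The mod-2 reduction `Ω̄` of the alternating form of `τ^{(d)}`. -/
def ObarD (d : ℕ) : Matrix (IdxD d) (IdxD d) (ZMod 2) :=
  (OmD d).map (Int.cast : ℤ → ZMod 2)

/-- The standard basis vector `ē_m` of `(ℤ/2ℤ)^A`. -/
def ebarD (d : ℕ) (m : ℕ) : IdxD d → ZMod 2 := fun a => if (a : ℕ) = m then 1 else 0

/-- The quadratic form `Q(u) = Σ_{α<β} u_α Ω̄_{αβ} u_β + Σ_α u_α` of the permutation
`τ^{(d)}`. -/
def Qd (d : ℕ) (u : IdxD d → ZMod 2) : ZMod 2 :=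
  (∑ a : IdxD d, ∑ b : IdxD d,
      if (a : ℕ) < (b : ℕ) then u a * ObarD d a b * u b else 0)
    + ∑ a : IdxD d, u a

/-- The Q-closure of a set `V` of nonsingular vectors: the smallest set containing `V`
and containing `v+w` whenever it contains `v, w` with `Q(v+w) = 1`. -/
inductive QClosure {M : Type*} [Add M] (Q : M → ZMod 2) (V : Set M) : M → Prop
  | base {v : M} : v ∈ V → QClosure Q V v
  | add {v w : M} : QClosure Q V v → QClosure Q V w → Q (v + w) = 1 → QClosure Q V (v + w)

namespace St16
open Finset

/-- indicator vector of a set of naturals -/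
def ind (d : ℕ) (S : Finset ℕ) : IdxD d → ZMod 2 := fun a => if (a : ℕ) ∈ S then 1 else 0

lemma ind_add (d : ℕ) (S T : Finset ℕ) : ind d S + ind d T = ind d (symmDiff S T) := by
  funext a
  simp only [Pi.add_apply, ind, Finset.mem_symmDiff]
  by_cases h1 : (a : ℕ) ∈ S <;> by_cases h2 : (a : ℕ) ∈ T <;> simp [h1, h2] <;> decide

def omInt (d : ℕ) (x y : ℕ) : ℤ :=
  if x < y ∧ pbtauD d y < pbtauD d x then 1
  else if y < x ∧ pbtauD d x < pbtauD d y then -1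
  else 0

set_option maxHeartbeats 2000000 in
lemma omInt_spec (d x y : ℕ) (hd : 6 ≤ d) (hx : 1 ≤ x) (hxd : x ≤ d)
    (hy : 1 ≤ y) (hyd : y ≤ d) (hxy : x < y) :
    omInt d x y = if (x = 2 ∨ x = 3) ∧ (y = 4 ∨ y = 5) then 0 else 1 := by
  have hp : ∀ n, 1 ≤ n → n ≤ d → pbtauD d n =
      if n = 1 then d else if n = 2 then d - 3 else if n = 3 then d - 4
      else if n = 4 then d - 1 else if n = 5 then d - 2 else d + 1 - n := by
    intro n _ _; rfl
  rw [omInt, hp x hx hxd, hp y hy hyd]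
  split_ifs <;> omega

lemma obar_eq (d : ℕ) (a b : IdxD d) :
    ObarD d a b = ((omInt d (a : ℕ) (b : ℕ) : ℤ) : ZMod 2) := rfl

/-- counting pairs -/
lemma pair_count (S : Finset ℕ) :
    (∑ x ∈ S, ∑ y ∈ S, if x < y then (1 : ℕ) else 0) = S.card.choose 2 := by
  induction S using Finset.induction_on with
  | empty => simp
  | @insert z S hzS ih =>
    rw [Finset.sum_insert hzS]
    have h1 : ∀ a : ℕ, (∑ y ∈ insert z S, if a < y then (1:ℕ) else 0)
        = (if a < z then 1 else 0) + ∑ y ∈ S, if a < y then (1:ℕ) else 0 := by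
      intro a; rw [Finset.sum_insert hzS]
    simp only [h1]
    rw [Finset.sum_add_distrib, ih]
    have h2 : (∑ a ∈ S, if a < z then (1:ℕ) else 0) + (∑ y ∈ S, if z < y then (1:ℕ) else 0)
        = S.card := by
      rw [← Finset.sum_add_distrib, Finset.card_eq_sum_ones S]
      refine Finset.sum_congr rfl fun a ha => ?_
      have : a ≠ z := fun h => hzS (h ▸ ha)
      split_ifs <;> omega
    have h3 : (S.card + 1).choose 2 = S.card.choose 1 + S.card.choose 2 :=
      Nat.choose_succ_succ S.card 1
    rw [Nat.choose_one_right] at h3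
    rw [Finset.card_insert_of_notMem hzS]
    simp only [lt_irrefl, if_false]
    omega

lemma ch2 (n : ℕ) :
    (n % 4 < 2 ∧ n.choose 2 % 2 = 0) ∨ (2 ≤ n % 4 ∧ n.choose 2 % 2 = 1) := by
  induction n with
  | zero => left; simp
  | succ n ih =>
    have h : (n+1).choose 2 = n.choose 1 + n.choose 2 := Nat.choose_succ_succ n 1
    rw [Nat.choose_one_right] at h
    omega

lemma cast_one_of (a : ℕ) (h : a % 2 = 1) : ((a : ℕ) : ZMod 2) = 1 := by
  rw [← Nat.div_add_mod a 2, h]; push_cast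
  rw [show ((2:ZMod 2)) = 0 by decide]; ring

lemma cast_zero_of (a : ℕ) (h : a % 2 = 0) : ((a : ℕ) : ZMod 2) = 0 := by
  rw [← Nat.div_add_mod a 2, h]; push_cast
  rw [show ((2:ZMod 2)) = 0 by decide]; ring

/-- master computation of Qd on indicator vectors -/
lemma Qmaster (d : ℕ) (hd : 6 ≤ d) (S : Finset ℕ) (hS : S ⊆ Finset.Icc 1 d) :
    Qd d (ind d S) =
      ((S.card.choose 2 : ℕ) : ZMod 2)
      + ((if 2 ∈ S then 1 else 0) + (if 3 ∈ S then 1 else 0))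
        * ((if 4 ∈ S then 1 else 0) + (if 5 ∈ S then 1 else 0))
      + ((S.card : ℕ) : ZMod 2) := by
  have hlin : (∑ a : IdxD d, ind d S a) = ((S.card : ℕ) : ZMod 2) := by
    rw [Finset.univ_eq_attach]
    rw [show (∑ a ∈ (AsetD d).attach, ind d S a)
        = ∑ a ∈ (AsetD d).attach, (fun n => if n ∈ S then (1 : ZMod 2) else 0) ↑a from rfl]
    rw [Finset.sum_attach (AsetD d) (fun n => if n ∈ S then (1 : ZMod 2) else 0)]
    rw [Finset.sum_ite_mem]
    rw [show AsetD d ∩ S = S from Finset.inter_eq_right.mpr hS, Finset.sum_const]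
    simp
  have G : ℕ → ℕ → ZMod 2 := fun x y =>
      if x < y then (if x ∈ S then 1 else 0) * ((omInt d x y : ℤ) : ZMod 2)
        * (if y ∈ S then 1 else 0) else 0
  have hquad : (∑ a : IdxD d, ∑ b : IdxD d,
        if (a : ℕ) < (b : ℕ) then ind d S a * ObarD d a b * ind d S b else 0)
      = ((S.card.choose 2 : ℕ) : ZMod 2)
        + ((if 2 ∈ S then 1 else 0) + (if 3 ∈ S then 1 else 0))
          * ((if 4 ∈ S then 1 else 0) + (if 5 ∈ S then 1 else 0)) := by
    have step1 : (∑ a : IdxD d, ∑ b : IdxD d,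
          if (a : ℕ) < (b : ℕ) then ind d S a * ObarD d a b * ind d S b else 0)
        = ∑ x ∈ AsetD d, ∑ y ∈ AsetD d,
            if x < y then (if x ∈ S then 1 else 0) * ((omInt d x y : ℤ) : ZMod 2)
              * (if y ∈ S then 1 else 0) else 0 := by
      rw [Finset.univ_eq_attach]
      calc (∑ a ∈ (AsetD d).attach, ∑ b ∈ (AsetD d).attach,
            if (a : ℕ) < (b : ℕ) then ind d S a * ObarD d a b * ind d S b else 0)
          = ∑ a ∈ (AsetD d).attach, (fun x => ∑ y ∈ AsetD d,
              if x < y then (if x ∈ S then 1 else 0) * ((omInt d x y : ℤ) : ZMod 2)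
                * (if y ∈ S then 1 else 0) else 0) ↑a := by
            refine Finset.sum_congr rfl fun a _ => ?_
            exact Finset.sum_attach (AsetD d) (fun y =>
              if (a : ℕ) < y then (if (a : ℕ) ∈ S then 1 else 0)
                * ((omInt d (a : ℕ) y : ℤ) : ZMod 2) * (if y ∈ S then 1 else 0) else 0)
        _ = _ := Finset.sum_attach (AsetD d) (fun x => ∑ y ∈ AsetD d,
              if x < y then (if x ∈ S then 1 else 0) * ((omInt d x y : ℤ) : ZMod 2)
                * (if y ∈ S then 1 else 0) else 0)
    rw [step1]
    have hT : S ⊆ AsetD d := hS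
    have step2 : ∀ x : ℕ,
        (∑ y ∈ AsetD d, if x < y then (if x ∈ S then 1 else 0) * ((omInt d x y : ℤ) : ZMod 2)
          * (if y ∈ S then (1 : ZMod 2) else 0) else 0)
        = ∑ y ∈ S, if x < y then (if x ∈ S then 1 else 0)
            * ((omInt d x y : ℤ) : ZMod 2) else 0 := by
      intro x
      rw [← Finset.sum_subset hT (fun y _ hy => by simp [hy])]
      exact Finset.sum_congr rfl fun y hy => by simp [hy]
    simp only [step2]
    rw [← Finset.sum_subset hT (fun x _ hx => by simp [hx])]
    have step3 : (∑ x ∈ S, ∑ y ∈ S, if x < y then (if x ∈ S then 1 else 0)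
          * ((omInt d x y : ℤ) : ZMod 2) else 0)
        = ∑ x ∈ S, ∑ y ∈ S, ((if x < y then (1 : ZMod 2) else 0)
            + (if (x = 2 ∨ x = 3) ∧ (y = 4 ∨ y = 5) then 1 else 0)) := by
      refine Finset.sum_congr rfl fun x hx => Finset.sum_congr rfl fun y hy => ?_
      have hx1 := Finset.mem_Icc.mp (hS hx)
      have hy1 := Finset.mem_Icc.mp (hS hy)
      by_cases hxy : x < y
      · rw [if_pos hxy, if_pos hx, one_mul,
          omInt_spec d x y hd hx1.1 hx1.2 hy1.1 hy1.2 hxy, if_pos hxy]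
        push_cast [apply_ite (Int.cast : ℤ → ZMod 2)]
        split_ifs <;> decide
      · rw [if_neg hxy, if_neg hxy, if_neg (fun h => hxy (by omega))]
        simp
    rw [step3]
    simp only [Finset.sum_add_distrib]
    have hA : (∑ x ∈ S, ∑ y ∈ S, if x < y then (1 : ZMod 2) else 0)
        = ((S.card.choose 2 : ℕ) : ZMod 2) := by
      rw [← pair_count S]
      push_cast
      rfl
    have hB : (∑ x ∈ S, ∑ y ∈ S, if (x = 2 ∨ x = 3) ∧ (y = 4 ∨ y = 5) then (1 : ZMod 2) else 0)
        = ((if 2 ∈ S then 1 else 0) + (if 3 ∈ S then 1 else 0))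
          * ((if 4 ∈ S then 1 else 0) + (if 5 ∈ S then 1 else 0)) := by
      have hpt : ∀ x y : ℕ, (if (x = 2 ∨ x = 3) ∧ (y = 4 ∨ y = 5) then (1 : ZMod 2) else 0)
          = ((if x = 2 then 1 else 0) + (if x = 3 then 1 else 0))
            * ((if y = 4 then 1 else 0) + (if y = 5 then 1 else 0)) := by
        intro x y
        split_ifs <;> first | decide | omega
      simp only [hpt]
      rw [← Finset.sum_mul_sum]
      rw [Finset.sum_add_distrib, Finset.sum_add_distrib,
        Finset.sum_ite_eq' S 2 (fun _ => (1 : ZMod 2)),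
        Finset.sum_ite_eq' S 3 (fun _ => (1 : ZMod 2)),
        Finset.sum_ite_eq' S 4 (fun _ => (1 : ZMod 2)),
        Finset.sum_ite_eq' S 5 (fun _ => (1 : ZMod 2))]
    rw [hA, hB]
  rw [Qd, hlin, hquad]


/-- abbreviation for the closure of the standard basis -/
def QC (d : ℕ) (v : IdxD d → ZMod 2) : Prop :=
  QClosure (Qd d) (Set.range fun a : IdxD d => ebarD d (a : ℕ)) v

lemma base_mem (d : ℕ) (n : ℕ) (h1 : 1 ≤ n) (h2 : n ≤ d) : QC d (ind d {n}) := by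
  refine QClosure.base ⟨⟨n, ?_⟩, ?_⟩
  · simp only [AsetD, Finset.mem_Icc]; omega
  · funext a
    simp [ebarD, ind]

lemma qstep (d : ℕ) {S T : Finset ℕ} (R : Finset ℕ)
    (hv : QC d (ind d S)) (hw : QC d (ind d T))
    (hR : symmDiff S T = R) (hQ : Qd d (ind d R) = 1) : QC d (ind d R) := by
  have h := QClosure.add hv hw (by rw [ind_add, hR]; exact hQ)
  rwa [ind_add, hR] at h

lemma ite_mem_one {R : Finset ℕ} {n : ℕ} (h : n ∈ R) :
    (if n ∈ R then (1 : ZMod 2) else 0) = 1 := if_pos h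

lemma ite_mem_zero {R : Finset ℕ} {n : ℕ} (h : n ∉ R) :
    (if n ∈ R then (1 : ZMod 2) else 0) = 0 := if_neg h

lemma chain6 (d : ℕ) (hd : 6 ≤ d) : QC d (ind d (Finset.Icc 1 6)) := by
  have sub : ∀ R : Finset ℕ, (∀ a ∈ R, 1 ≤ a ∧ a ≤ 6) → R ⊆ Finset.Icc 1 d := by
    intro R h a ha
    have := h a ha
    simp only [Finset.mem_Icc]
    omega
  have b1 := base_mem d 1 (by omega) (by omega)
  have b2 := base_mem d 2 (by omega) (by omega)
  have b3 := base_mem d 3 (by omega) (by omega)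
  have b4 := base_mem d 4 (by omega) (by omega)
  have b5 := base_mem d 5 (by omega) (by omega)
  have b6 := base_mem d 6 (by omega) (by omega)
  have h12 : QC d (ind d {1, 2}) := by
    refine qstep d {1, 2} b1 b2 (by ext a; simp [Finset.mem_symmDiff]; omega) ?_
    rw [Qmaster d hd _ (sub _ (by decide))]; decide
  have h124 : QC d (ind d {1, 2, 4}) := by
    refine qstep d {1, 2, 4} h12 b4 (by ext a; simp [Finset.mem_symmDiff]; omega) ?_
    rw [Qmaster d hd _ (sub _ (by decide))]; decide
  have h1246 : QC d (ind d {1, 2, 4, 6}) := by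
    refine qstep d {1, 2, 4, 6} h124 b6 (by ext a; simp [Finset.mem_symmDiff]; omega) ?_
    rw [Qmaster d hd _ (sub _ (by decide))]; decide
  have h12456 : QC d (ind d {1, 2, 4, 5, 6}) := by
    refine qstep d {1, 2, 4, 5, 6} h1246 b5 (by ext a; simp [Finset.mem_symmDiff]; omega) ?_
    rw [Qmaster d hd _ (sub _ (by decide))]; decide
  refine qstep d (Finset.Icc 1 6) h12456 b3
    (by ext a; simp [Finset.mem_symmDiff, Finset.mem_Icc]; omega) ?_
  rw [Qmaster d hd _ (sub _ (by intro a ha; simp [Finset.mem_Icc] at ha; omega))]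
  decide


set_option maxHeartbeats 1000000 in
lemma step4 (d : ℕ) (hd : 6 ≤ d) (m : ℕ) (hm6 : 6 ≤ m) (hm4 : m % 4 = 2)
    (hmd : m + 4 ≤ d) (h : QC d (ind d (Finset.Icc 1 m))) :
    QC d (ind d (Finset.Icc 1 (m + 4))) := by
  have b1 := base_mem d 1 (by omega) (by omega)
  have b2 := base_mem d 2 (by omega) (by omega)
  have b4 := base_mem d 4 (by omega) (by omega)
  have b5 := base_mem d 5 (by omega) (by omega)
  have b6 := base_mem d 6 (by omega) (by omega)
  -- the helper vectors {1,4,6,x,y} for bigs m < x < y ≤ m+4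
  have hW : ∀ x y : ℕ, m < x → x < y → y ≤ m + 4 → QC d (ind d {1, 4, 6, x, y}) := by
    intro x y hx hxy hy
    have bx := base_mem d x (by omega) (by omega)
    have by' := base_mem d y (by omega) (by omega)
    have h12 : QC d (ind d {1, 2}) := by
      refine qstep d {1, 2} b1 b2 (by ext a; simp [Finset.mem_symmDiff]; omega) ?_
      rw [Qmaster d hd _ (by intro a ha; simp at ha; simp [Finset.mem_Icc]; omega)]; decide
    have h46 : QC d (ind d {4, 6}) := by
      refine qstep d {4, 6} b4 b6 (by ext a; simp [Finset.mem_symmDiff]; omega) ?_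
      rw [Qmaster d hd _ (by intro a ha; simp at ha; simp [Finset.mem_Icc]; omega)]; decide
    have h1246 : QC d (ind d {1, 2, 4, 6}) := by
      refine qstep d {1, 2, 4, 6} h12 h46 (by ext a; simp [Finset.mem_symmDiff]; omega) ?_
      rw [Qmaster d hd _ (by intro a ha; simp at ha; simp [Finset.mem_Icc]; omega)]; decide
    have h2x : QC d (ind d {2, x}) := by
      refine qstep d {2, x} b2 bx (by ext a; simp [Finset.mem_symmDiff]; omega) ?_
      rw [Qmaster d hd _ (by intro a ha; simp at ha; simp [Finset.mem_Icc]; omega)]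
      rw [if_pos (by simp), if_neg (by simp; omega), if_neg (by simp; omega),
        if_neg (by simp; omega)]
      rw [show ({2, x} : Finset ℕ).card = 2 by
        rw [Finset.card_insert_of_notMem (by simp; omega), Finset.card_singleton]]
      decide
    have h5y : QC d (ind d {5, y}) := by
      refine qstep d {5, y} b5 by' (by ext a; simp [Finset.mem_symmDiff]; omega) ?_
      rw [Qmaster d hd _ (by intro a ha; simp at ha; simp [Finset.mem_Icc]; omega)]
      rw [if_neg (by simp; omega), if_neg (by simp; omega), if_neg (by simp; omega),
        if_pos (by simp)]
      rw [show ({5, y} : Finset ℕ).card = 2 by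
        rw [Finset.card_insert_of_notMem (by simp; omega), Finset.card_singleton]]
      decide
    have h25xy : QC d (ind d {2, 5, x, y}) := by
      refine qstep d {2, 5, x, y} h2x h5y (by ext a; simp [Finset.mem_symmDiff]; omega) ?_
      rw [Qmaster d hd _ (by intro a ha; simp at ha; simp [Finset.mem_Icc]; omega)]
      rw [if_pos (by simp), if_neg (by simp; omega), if_neg (by simp; omega),
        if_pos (by simp)]
      rw [show ({2, 5, x, y} : Finset ℕ).card = 4 by
        rw [Finset.card_insert_of_notMem (by simp; omega),
          Finset.card_insert_of_notMem (by simp; omega),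
          Finset.card_insert_of_notMem (by simp; omega), Finset.card_singleton]]
      decide
    have h145xy : QC d (ind d {1, 4, 5, 6, x, y}) := by
      refine qstep d {1, 4, 5, 6, x, y} h1246 h25xy
        (by ext a; simp [Finset.mem_symmDiff]; omega) ?_
      rw [Qmaster d hd _ (by intro a ha; simp at ha; simp [Finset.mem_Icc]; omega)]
      rw [if_neg (by simp; omega), if_neg (by simp; omega), if_pos (by simp),
        if_pos (by simp)]
      rw [show ({1, 4, 5, 6, x, y} : Finset ℕ).card = 6 by
        rw [Finset.card_insert_of_notMem (by simp; omega),
          Finset.card_insert_of_notMem (by simp; omega),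
          Finset.card_insert_of_notMem (by simp; omega),
          Finset.card_insert_of_notMem (by simp; omega),
          Finset.card_insert_of_notMem (by simp; omega), Finset.card_singleton]]
      decide
    refine qstep d {1, 4, 6, x, y} b5 h145xy
      (by ext a; simp [Finset.mem_symmDiff]; omega) ?_
    rw [Qmaster d hd _ (by intro a ha; simp at ha; simp [Finset.mem_Icc]; omega)]
    rw [if_neg (by simp; omega), if_neg (by simp; omega), if_pos (by simp),
      if_neg (by simp; omega)]
    rw [show ({1, 4, 6, x, y} : Finset ℕ).card = 5 by
      rw [Finset.card_insert_of_notMem (by simp; omega),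
        Finset.card_insert_of_notMem (by simp; omega),
        Finset.card_insert_of_notMem (by simp; omega),
        Finset.card_insert_of_notMem (by simp; omega), Finset.card_singleton]]
    decide
  -- first big move
  have hdisj : Disjoint (Finset.Icc 1 m \ {1, 4, 6}) ({m + 3, m + 4} : Finset ℕ) := by
    rw [Finset.disjoint_left]
    intro a ha hb
    simp [Finset.mem_Icc] at ha hb
    omega
  have hsub146 : ({1, 4, 6} : Finset ℕ) ⊆ Finset.Icc 1 m := by
    intro a ha; simp at ha; simp [Finset.mem_Icc]; omega
  have hR1card : ((Finset.Icc 1 m \ {1, 4, 6}) ∪ {m + 3, m + 4}).card = m - 1 := by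
    rw [Finset.card_union_of_disjoint hdisj, Finset.card_sdiff_of_subset hsub146, Nat.card_Icc,
      show ({m + 3, m + 4} : Finset ℕ).card = 2 by
        rw [Finset.card_insert_of_notMem (by simp), Finset.card_singleton],
      show ({1, 4, 6} : Finset ℕ).card = 3 by decide]
    omega
  have hsubR1 : (Finset.Icc 1 m \ {1, 4, 6}) ∪ {m + 3, m + 4} ⊆ Finset.Icc 1 d := by
    intro a ha
    simp [Finset.mem_Icc] at ha
    simp [Finset.mem_Icc]
    omega
  have hR1 : QC d (ind d ((Finset.Icc 1 m \ {1, 4, 6}) ∪ {m + 3, m + 4})) := by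
    refine qstep d _ h (hW (m + 3) (m + 4) (by omega) (by omega) (by omega))
      (by ext a; simp [Finset.mem_symmDiff, Finset.mem_Icc]; omega) ?_
    rw [Qmaster d hd _ hsubR1]
    rw [ite_mem_one (show (2:ℕ) ∈ (Finset.Icc 1 m \ {1, 4, 6}) ∪ {m + 3, m + 4} by simp only [Finset.mem_union, Finset.mem_sdiff, Finset.mem_Icc, Finset.mem_insert, Finset.mem_singleton, or_true, true_or, and_true, true_and, or_false, false_or, and_false, false_and, not_true, not_false_iff, eq_self_iff_true]; omega),
      ite_mem_one (show (3:ℕ) ∈ (Finset.Icc 1 m \ {1, 4, 6}) ∪ {m + 3, m + 4} by simp only [Finset.mem_union, Finset.mem_sdiff, Finset.mem_Icc, Finset.mem_insert, Finset.mem_singleton, or_true, true_or, and_true, true_and, or_false, false_or, and_false, false_and, not_true, not_false_iff, eq_self_iff_true]; omega),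
      ite_mem_zero (show (4:ℕ) ∉ (Finset.Icc 1 m \ {1, 4, 6}) ∪ {m + 3, m + 4} by simp only [Finset.mem_union, Finset.mem_sdiff, Finset.mem_Icc, Finset.mem_insert, Finset.mem_singleton, or_true, true_or, and_true, true_and, or_false, false_or, and_false, false_and, not_true, not_false_iff, eq_self_iff_true]; omega),
      ite_mem_one (show (5:ℕ) ∈ (Finset.Icc 1 m \ {1, 4, 6}) ∪ {m + 3, m + 4} by simp only [Finset.mem_union, Finset.mem_sdiff, Finset.mem_Icc, Finset.mem_insert, Finset.mem_singleton, or_true, true_or, and_true, true_and, or_false, false_or, and_false, false_and, not_true, not_false_iff, eq_self_iff_true]; omega)]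
    rw [hR1card]
    rw [cast_zero_of _ (by have := ch2 (m - 1); omega), cast_one_of _ (by omega)]
    decide
  refine qstep d (Finset.Icc 1 (m + 4)) hR1 (hW (m + 1) (m + 2) (by omega) (by omega) (by omega))
    (by ext a; simp [Finset.mem_symmDiff, Finset.mem_Icc]; omega) ?_
  rw [Qmaster d hd _ (by intro a ha; simp [Finset.mem_Icc] at ha ⊢; omega)]
  rw [ite_mem_one (show (2:ℕ) ∈ Finset.Icc 1 (m + 4) by simp only [Finset.mem_union, Finset.mem_sdiff, Finset.mem_Icc, Finset.mem_insert, Finset.mem_singleton, or_true, true_or, and_true, true_and, or_false, false_or, and_false, false_and, not_true, not_false_iff, eq_self_iff_true]; omega),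
    ite_mem_one (show (3:ℕ) ∈ Finset.Icc 1 (m + 4) by simp only [Finset.mem_union, Finset.mem_sdiff, Finset.mem_Icc, Finset.mem_insert, Finset.mem_singleton, or_true, true_or, and_true, true_and, or_false, false_or, and_false, false_and, not_true, not_false_iff, eq_self_iff_true]; omega),
    ite_mem_one (show (4:ℕ) ∈ Finset.Icc 1 (m + 4) by simp only [Finset.mem_union, Finset.mem_sdiff, Finset.mem_Icc, Finset.mem_insert, Finset.mem_singleton, or_true, true_or, and_true, true_and, or_false, false_or, and_false, false_and, not_true, not_false_iff, eq_self_iff_true]; omega),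
    ite_mem_one (show (5:ℕ) ∈ Finset.Icc 1 (m + 4) by simp only [Finset.mem_union, Finset.mem_sdiff, Finset.mem_Icc, Finset.mem_insert, Finset.mem_singleton, or_true, true_or, and_true, true_and, or_false, false_or, and_false, false_and, not_true, not_false_iff, eq_self_iff_true]; omega)]
  rw [Nat.card_Icc]
  rw [cast_one_of _ (by have := ch2 (m + 4 + 1 - 1); omega), cast_zero_of _ (by omega)]
  decide


lemma allones (d : ℕ) (hd : 6 ≤ d) (hmod : d % 4 = 2) : QC d (ind d (Finset.Icc 1 d)) := by
  have key : ∀ k : ℕ, 6 + 4 * k ≤ d → QC d (ind d (Finset.Icc 1 (6 + 4 * k))) := by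
    intro k
    induction k with
    | zero => intro _; exact chain6 d hd
    | succ n ih =>
      intro hk
      have h := step4 d hd (6 + 4 * n) (by omega) (by omega) (by omega) (ih (by omega))
      have e : 6 + 4 * (n + 1) = 6 + 4 * n + 4 := by ring
      rw [e]
      exact h
  obtain ⟨k, hk⟩ : ∃ k, d = 6 + 4 * k := ⟨(d - 6) / 4, by omega⟩
  have h := key k (by omega)
  rwa [← hk] at h

lemma cosingleton (d : ℕ) (hd : 6 ≤ d) (hmod : d % 4 = 2) (b : ℕ) (hb1 : 1 ≤ b) (hb2 : b ≤ d) :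
    QC d (ind d (Finset.Icc 1 d \ {b})) := by
  refine qstep d (Finset.Icc 1 d \ {b}) (allones d hd hmod) (base_mem d b hb1 hb2)
    (by ext a; simp [Finset.mem_symmDiff, Finset.mem_Icc]; omega) ?_
  rw [Qmaster d hd _ Finset.sdiff_subset]
  rw [show (Finset.Icc 1 d \ {b}).card = d - 1 by
    rw [Finset.card_sdiff_of_subset (by simp [Finset.mem_Icc]; omega), Finset.card_singleton,
      Nat.card_Icc]
    omega]
  rw [cast_zero_of _ (by have := ch2 (d - 1); omega), cast_one_of _ (by omega)]
  by_cases hb45 : b = 4 ∨ b = 5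
  · rw [ite_mem_one (show (2:ℕ) ∈ Finset.Icc 1 d \ {b} by
        simp [Finset.mem_Icc]; omega),
      ite_mem_one (show (3:ℕ) ∈ Finset.Icc 1 d \ {b} by
        simp [Finset.mem_Icc]; omega)]
    rw [show ((1:ZMod 2) + 1) = 0 by decide, zero_mul]
    decide
  · rw [ite_mem_one (show (4:ℕ) ∈ Finset.Icc 1 d \ {b} by
        simp [Finset.mem_Icc]; omega),
      ite_mem_one (show (5:ℕ) ∈ Finset.Icc 1 d \ {b} by
        simp [Finset.mem_Icc]; omega)]
    rw [show ((1:ZMod 2) + 1) = 0 by decide, mul_zero]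
    decide

lemma sum_ebar_eq (d : ℕ) : (∑ a : IdxD d, ebarD d (a : ℕ)) = ind d (Finset.Icc 1 d) := by
  funext x
  rw [Finset.sum_apply]
  simp only [ebarD, ind, Subtype.coe_inj]
  rw [Finset.sum_ite_eq]
  have hx : (x : ℕ) ∈ Finset.Icc 1 d := x.2
  simp [hx]

lemma sum_ebar_erase_eq (d : ℕ) (β : IdxD d) :
    (∑ a ∈ Finset.univ.erase β, ebarD d (a : ℕ)) = ind d (Finset.Icc 1 d \ {(β : ℕ)}) := by
  funext x
  rw [Finset.sum_apply]
  simp only [ebarD, ind, Subtype.coe_inj]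
  rw [Finset.sum_ite_eq]
  have hx : (x : ℕ) ∈ Finset.Icc 1 d := x.2
  by_cases hxb : x = β
  · subst hxb
    simp [Finset.mem_sdiff]
  · have : (x : ℕ) ≠ (β : ℕ) := fun h => hxb (Subtype.coe_inj.mp h)
    simp [Finset.mem_erase, hxb, Finset.mem_sdiff, hx, this]

end St16

/-- Lemma 4.4 of the paper: if `d ≡ 2 (mod 4)`, the all-ones vector `Σ_α ē_α` and, for
every `β ∈ A`, the vector `Σ_{α ≠ β} ē_α` belong to the Q-closure of the standard basis. -/
theorem statement16 (d : ℕ) (hd : 6 ≤ d) (hmod : d % 4 = 2) :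
    QClosure (Qd d) (Set.range fun a : IdxD d => ebarD d (a : ℕ))
      (∑ a : IdxD d, ebarD d (a : ℕ)) ∧
    ∀ β : IdxD d,
      QClosure (Qd d) (Set.range fun a : IdxD d => ebarD d (a : ℕ))
        (∑ a ∈ Finset.univ.erase β, ebarD d (a : ℕ)) := by
  constructor
  · rw [St16.sum_ebar_eq d]
    exact St16.allones d hd hmod
  · intro β
    rw [St16.sum_ebar_erase_eq d β]
    have hb := Finset.mem_Icc.mp β.2
    exact St16.cosingleton d hd hmod (β : ℕ) hb.1 hb.2
end

section
/- Let d ≥ 6 and let Q be the quadratic form of the permutation τ^{(d)}, with Ω̄ the mod-2 reduction of its alternating form. Then the Q-closure of the standard basis equals the set of nonsingular vectors outside the radical of Ω̄: {ē_α : α ∈ A}^Q = NS(Q) ∖ ker Ω̄, where ker Ω̄ = {u ∈ (ℤ/2ℤ)^A : u Ω̄ = 0}. -/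
open Matrix

set_option maxHeartbeats 1000000

-- ============ infrastructure ============

lemma mem_AsetD {d k : ℕ} : k ∈ AsetD d ↔ 1 ≤ k ∧ k ≤ d := by simp [AsetD]

lemma idx_bounds {d : ℕ} (a : IdxD d) : 1 ≤ (a : ℕ) ∧ (a : ℕ) ≤ d := mem_AsetD.mp a.2

/-- bad pairs -/
def BadP (x y : ℕ) : Prop := ((x = 2 ∨ x = 3) ∧ (y = 4 ∨ y = 5)) ∨ ((x = 4 ∨ x = 5) ∧ (y = 2 ∨ y = 3))

instance : ∀ x y, Decidable (BadP x y) := fun x y => by unfold BadP; infer_instance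

lemma zmod2_cases (x : ZMod 2) : x = 0 ∨ x = 1 := by revert x; decide

lemma OmD_eq_zero {d : ℕ} (a b : IdxD d) (h : (a : ℕ) = (b : ℕ) ∨ BadP (a : ℕ) (b : ℕ)) :
    OmD d a b = 0 := by
  obtain ⟨ha1, ha2⟩ := idx_bounds a
  obtain ⟨hb1, hb2⟩ := idx_bounds b
  unfold BadP at h
  simp only [OmD, pbtauD]
  split_ifs <;> omega

lemma OmD_ne {d : ℕ} (hd : 6 ≤ d) (a b : IdxD d) (h1 : (a : ℕ) ≠ (b : ℕ))
    (h2 : ¬ BadP (a : ℕ) (b : ℕ)) : OmD d a b = 1 ∨ OmD d a b = -1 := by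
  obtain ⟨ha1, ha2⟩ := idx_bounds a
  obtain ⟨hb1, hb2⟩ := idx_bounds b
  unfold BadP at h2
  simp only [OmD, pbtauD]
  split_ifs <;> omega

lemma Obar_eq {d : ℕ} (hd : 6 ≤ d) (a b : IdxD d) :
    ObarD d a b = 1 + (if a = b then 1 else 0) + (if BadP (a : ℕ) (b : ℕ) then 1 else 0) := by
  by_cases he : a = b
  · subst he
    have h0 : OmD d a a = 0 := OmD_eq_zero a a (Or.inl rfl)
    have hb : ¬ BadP (a : ℕ) (a : ℕ) := by unfold BadP; omega
    skip
    simp only [ObarD, Matrix.map_apply, h0, Int.cast_zero, if_pos rfl]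
    rw [if_neg hb]
    decide
  · have hv : (a : ℕ) ≠ (b : ℕ) := fun h => he (Subtype.ext h)
    by_cases hb : BadP (a : ℕ) (b : ℕ)
    · have h0 : OmD d a b = 0 := OmD_eq_zero a b (Or.inr hb)
      simp only [ObarD, Matrix.map_apply, h0, Int.cast_zero]
      rw [if_neg he, if_pos hb]
      decide
    · rcases OmD_ne hd a b hv hb with h | h <;> simp [ObarD, h, he, hb] <;> decide

-- ============ Bf and Qd basics ============

def Bf (d : ℕ) (x y : IdxD d → ZMod 2) : ZMod 2 :=
  ∑ a : IdxD d, ∑ b : IdxD d, x a * ObarD d a b * y b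

lemma Obar_diag {d : ℕ} (a : IdxD d) : ObarD d a a = 0 := by
  simp [ObarD, OmD_eq_zero a a (Or.inl rfl)]

lemma Obar_symm {d : ℕ} (hd : 6 ≤ d) (a b : IdxD d) : ObarD d a b = ObarD d b a := by
  rw [Obar_eq hd, Obar_eq hd]
  have h1 : (a = b) ↔ (b = a) := eq_comm
  have h2 : BadP (a : ℕ) (b : ℕ) ↔ BadP (b : ℕ) (a : ℕ) := by unfold BadP; omega
  rw [if_congr h1 rfl rfl, if_congr h2 rfl rfl]

lemma sum_split {d : ℕ} (f : IdxD d → IdxD d → ZMod 2) (hdiag : ∀ a, f a a = 0) :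
    ∑ a : IdxD d, ∑ b : IdxD d, f a b
      = (∑ a : IdxD d, ∑ b : IdxD d, if (a:ℕ) < (b:ℕ) then f a b else 0)
        + (∑ a : IdxD d, ∑ b : IdxD d, if (a:ℕ) < (b:ℕ) then f b a else 0) := by
  have h2 : (∑ a : IdxD d, ∑ b : IdxD d, if (a:ℕ) < (b:ℕ) then f b a else 0)
      = ∑ a : IdxD d, ∑ b : IdxD d, if (b:ℕ) < (a:ℕ) then f a b else 0 := Finset.sum_comm
  rw [h2, ← Finset.sum_add_distrib]
  apply Finset.sum_congr rfl
  intro a _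
  rw [← Finset.sum_add_distrib]
  apply Finset.sum_congr rfl
  intro b _
  rcases Nat.lt_trichotomy (a : ℕ) (b : ℕ) with h | h | h
  · rw [if_pos h, if_neg (by omega), add_zero]
  · have : a = b := Subtype.ext h
    subst this
    simp [hdiag a]
  · rw [if_neg (by omega), if_pos h, zero_add]

lemma Qd_add {d : ℕ} (hd : 6 ≤ d) (x y : IdxD d → ZMod 2) :
    Qd d (x + y) = Qd d x + Qd d y + Bf d x y := by
  have hBf : Bf d x y
      = (∑ a : IdxD d, ∑ b : IdxD d, if (a:ℕ) < (b:ℕ) then x a * ObarD d a b * y b else 0)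
        + (∑ a : IdxD d, ∑ b : IdxD d, if (a:ℕ) < (b:ℕ) then y a * ObarD d a b * x b else 0) := by
    rw [Bf, sum_split (fun a b => x a * ObarD d a b * y b)
      (fun a => by beta_reduce; rw [Obar_diag]; ring)]
    congr 1
    apply Finset.sum_congr rfl; intro a _
    apply Finset.sum_congr rfl; intro b _
    rw [Obar_symm hd b a]
    split_ifs <;> ring
  have hlin : ∑ a : IdxD d, (x + y) a = (∑ a : IdxD d, x a) + ∑ a : IdxD d, y a := by
    simp [Finset.sum_add_distrib]
  have hquad : ∀ a b : IdxD d,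
      (if (a:ℕ) < (b:ℕ) then (x + y) a * ObarD d a b * (x + y) b else 0)
      = (if (a:ℕ) < (b:ℕ) then x a * ObarD d a b * x b else 0)
        + (if (a:ℕ) < (b:ℕ) then y a * ObarD d a b * y b else 0)
        + ((if (a:ℕ) < (b:ℕ) then x a * ObarD d a b * y b else 0)
          + (if (a:ℕ) < (b:ℕ) then y a * ObarD d a b * x b else 0)) := by
    intro a b
    simp only [Pi.add_apply]
    split_ifs <;> ring
  rw [Qd, Qd, Qd, hBf, hlin]
  simp only [hquad, Finset.sum_add_distrib]
  ring

lemma Qd_zero {d : ℕ} : Qd d 0 = 0 := by simp [Qd]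

lemma add_self_zero {d : ℕ} (x : IdxD d → ZMod 2) : x + x = 0 := by
  funext a
  simp only [Pi.add_apply, Pi.zero_apply]
  rcases zmod2_cases (x a) with h | h <;> rw [h] <;> decide

lemma Bf_self {d : ℕ} (hd : 6 ≤ d) (x : IdxD d → ZMod 2) : Bf d x x = 0 := by
  have h := Qd_add hd x x
  rw [add_self_zero, Qd_zero] at h
  rcases zmod2_cases (Bf d x x) with hb | hb
  · exact hb
  · exfalso
    rw [hb] at h
    rcases zmod2_cases (Qd d x) with hq | hq <;> rw [hq] at h <;> revert h <;> decide

lemma Bf_add_left {d : ℕ} (x y z : IdxD d → ZMod 2) :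
    Bf d (x + y) z = Bf d x z + Bf d y z := by
  simp only [Bf, Pi.add_apply, add_mul, Finset.sum_add_distrib]

lemma sum_mul_ebar {d : ℕ} (f : IdxD d → ZMod 2) (b : IdxD d) :
    ∑ a : IdxD d, f a * ebarD d (b:ℕ) a = f b := by
  rw [Finset.sum_eq_single b]
  · simp [ebarD]
  · intro x _ hx
    have : (x:ℕ) ≠ (b:ℕ) := fun h => hx (Subtype.ext h)
    simp [ebarD, this]
  · intro h
    exact absurd (Finset.mem_univ b) h

lemma Bf_ebar_vecMul {d : ℕ} (u : IdxD d → ZMod 2) (b : IdxD d) :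
    Bf d u (ebarD d (b:ℕ)) = Matrix.vecMul u (ObarD d) b := by
  rw [Bf, Finset.sum_comm]
  have : ∀ b' : IdxD d, ∑ a : IdxD d, u a * ObarD d a b' * ebarD d (b:ℕ) b'
      = (∑ a : IdxD d, u a * ObarD d a b') * ebarD d (b:ℕ) b' := by
    intro b'; rw [Finset.sum_mul]
  simp only [this]
  rw [sum_mul_ebar (fun b' => ∑ a : IdxD d, u a * ObarD d a b') b]
  rfl

-- ============ special indices ============

def iN (d k : ℕ) (h1 : 1 ≤ k) (h2 : k ≤ d) : IdxD d := ⟨k, mem_AsetD.mpr ⟨h1, h2⟩⟩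

lemma iN_val (d k : ℕ) (h1 : 1 ≤ k) (h2 : k ≤ d) : ((iN d k h1 h2 : IdxD d) : ℕ) = k := rfl

lemma sum_ite_val {d : ℕ} (u : IdxD d → ZMod 2) (k : ℕ) (h1 : 1 ≤ k) (h2 : k ≤ d) :
    (∑ a : IdxD d, if (a:ℕ) = k then u a else 0) = u (iN d k h1 h2) := by
  rw [Finset.sum_eq_single (iN d k h1 h2)]
  · simp [iN_val]
  · intro x _ hx
    have : (x:ℕ) ≠ k := fun h => hx (Subtype.ext h)
    simp [this]
  · intro h
    exact absurd (Finset.mem_univ _) h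

-- ============ the key formula for Bf u (ebar m) ============

lemma Bf_ebar {d : ℕ} (hd : 6 ≤ d) (u : IdxD d → ZMod 2) (b : IdxD d) :
    Bf d u (ebarD d (b:ℕ))
      = (∑ a : IdxD d, u a) + u b
        + (if (b:ℕ) = 2 ∨ (b:ℕ) = 3
            then u (iN d 4 (by omega) (by omega)) + u (iN d 5 (by omega) (by omega)) else 0)
        + (if (b:ℕ) = 4 ∨ (b:ℕ) = 5
            then u (iN d 2 (by omega) (by omega)) + u (iN d 3 (by omega) (by omega)) else 0) := by
  have step1 : Bf d u (ebarD d (b:ℕ)) = ∑ a : IdxD d, u a * ObarD d a b := by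
    rw [Bf]
    apply Finset.sum_congr rfl
    intro a _
    exact sum_mul_ebar (fun b' => u a * ObarD d a b') b
  rw [step1]
  have step2 : ∀ a : IdxD d, u a * ObarD d a b
      = u a + (if a = b then u a else 0) + (if BadP (a:ℕ) (b:ℕ) then u a else 0) := by
    intro a
    rw [Obar_eq hd]
    split_ifs <;> ring
  simp only [step2, Finset.sum_add_distrib]
  have h1 : (∑ a : IdxD d, if a = b then u a else 0) = u b := by
    rw [Finset.sum_ite_eq' Finset.univ b u]
    simp
  have h3 : (∑ a : IdxD d, if BadP (a:ℕ) (b:ℕ) then u a else 0)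
      = (if (b:ℕ) = 2 ∨ (b:ℕ) = 3
          then u (iN d 4 (by omega) (by omega)) + u (iN d 5 (by omega) (by omega)) else 0)
        + (if (b:ℕ) = 4 ∨ (b:ℕ) = 5
            then u (iN d 2 (by omega) (by omega)) + u (iN d 3 (by omega) (by omega)) else 0) := by
    by_cases hb23 : (b:ℕ) = 2 ∨ (b:ℕ) = 3
    · rw [if_pos hb23, if_neg (by omega), add_zero]
      have hpt : ∀ a : IdxD d, (if BadP (a:ℕ) (b:ℕ) then u a else 0)
          = (if (a:ℕ) = 4 then u a else 0) + (if (a:ℕ) = 5 then u a else 0) := by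
        intro a
        by_cases hB : BadP (a:ℕ) (b:ℕ) <;> simp only [hB, if_true, if_false] <;> unfold BadP at hB
        all_goals split_ifs <;> first | omega | ring
      simp only [hpt, Finset.sum_add_distrib,
        sum_ite_val u 4 (by omega) (by omega), sum_ite_val u 5 (by omega) (by omega)]
    · rw [if_neg hb23, zero_add]
      by_cases hb45 : (b:ℕ) = 4 ∨ (b:ℕ) = 5
      · rw [if_pos hb45]
        have hpt : ∀ a : IdxD d, (if BadP (a:ℕ) (b:ℕ) then u a else 0)
            = (if (a:ℕ) = 2 then u a else 0) + (if (a:ℕ) = 3 then u a else 0) := by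
          intro a
          by_cases hB : BadP (a:ℕ) (b:ℕ) <;> simp only [hB, if_true, if_false] <;> unfold BadP at hB
          all_goals split_ifs <;> first | omega | ring
        simp only [hpt, Finset.sum_add_distrib,
          sum_ite_val u 2 (by omega) (by omega), sum_ite_val u 3 (by omega) (by omega)]
      · rw [if_neg hb45]
        have hpt : ∀ a : IdxD d, (if BadP (a:ℕ) (b:ℕ) then u a else 0) = 0 := by
          intro a
          rw [if_neg]
          unfold BadP
          omega
        simp [hpt]
  rw [h1, h3]
  ring

-- ============ Qd of basis vectors, kernel ============

lemma Qd_ebar {d : ℕ} (m : IdxD d) : Qd d (ebarD d (m:ℕ)) = 1 := by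
  rw [Qd]
  have h1 : ∀ a b : IdxD d,
      (if (a:ℕ) < (b:ℕ) then ebarD d (m:ℕ) a * ObarD d a b * ebarD d (m:ℕ) b else 0) = 0 := by
    intro a b
    split_ifs with h
    · by_cases ha : (a:ℕ) = (m:ℕ)
      · have hb : (b:ℕ) ≠ (m:ℕ) := by omega
        simp [ebarD, hb]
      · simp [ebarD, ha]
    · rfl
  simp only [h1, Finset.sum_const_zero, zero_add]
  obtain ⟨hm1, hm2⟩ := idx_bounds m
  have : ∀ a : IdxD d, ebarD d (m:ℕ) a = if (a:ℕ) = (m:ℕ) then (fun _ : IdxD d => (1:ZMod 2)) a else 0 := fun a => rfl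
  simp only [this]
  rw [sum_ite_val (fun _ => (1:ZMod 2)) (m:ℕ) hm1 hm2]

lemma z2_four {s x y z w : ZMod 2} (e2 : s + x + (z + w) = 0) (e3 : s + y + (z + w) = 0)
    (e4 : s + z + (x + y) = 0) (e5 : s + w + (x + y) = 0) :
    x = s ∧ y = s ∧ z = s ∧ w = s := by revert e2 e3 e4 e5; revert s x y z w; decide

lemma z2_plain {s x : ZMod 2} (h : s + x = 0) : x = s := by
  revert h; revert s x; decide

lemma ker_const {d : ℕ} (hd : 6 ≤ d) (u : IdxD d → ZMod 2)
    (h : Matrix.vecMul u (ObarD d) = 0) : ∀ a : IdxD d, u a = ∑ x : IdxD d, u x := by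
  have hB : ∀ b : IdxD d, Bf d u (ebarD d (b:ℕ)) = 0 := by
    intro b
    rw [Bf_ebar_vecMul, h]
    rfl
  have key : ∀ b : IdxD d, (∑ x : IdxD d, u x) + u b
      + (if (b:ℕ) = 2 ∨ (b:ℕ) = 3
          then u (iN d 4 (by omega) (by omega)) + u (iN d 5 (by omega) (by omega)) else 0)
      + (if (b:ℕ) = 4 ∨ (b:ℕ) = 5
          then u (iN d 2 (by omega) (by omega)) + u (iN d 3 (by omega) (by omega)) else 0) = 0 := by
    intro b
    rw [← Bf_ebar hd u b]
    exact hB b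
  have e2 := key (iN d 2 (by omega) (by omega))
  have e3 := key (iN d 3 (by omega) (by omega))
  have e4 := key (iN d 4 (by omega) (by omega))
  have e5 := key (iN d 5 (by omega) (by omega))
  rw [iN_val] at e2 e3 e4 e5
  rw [if_pos (by omega : (2:ℕ) = 2 ∨ (2:ℕ) = 3), if_neg (by omega : ¬((2:ℕ) = 4 ∨ (2:ℕ) = 5)), add_zero] at e2
  rw [if_pos (by omega : (3:ℕ) = 2 ∨ (3:ℕ) = 3), if_neg (by omega : ¬((3:ℕ) = 4 ∨ (3:ℕ) = 5)), add_zero] at e3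
  rw [if_neg (by omega : ¬((4:ℕ) = 2 ∨ (4:ℕ) = 3)), if_pos (by omega : (4:ℕ) = 4 ∨ (4:ℕ) = 5), add_zero] at e4
  rw [if_neg (by omega : ¬((5:ℕ) = 2 ∨ (5:ℕ) = 3)), if_pos (by omega : (5:ℕ) = 4 ∨ (5:ℕ) = 5), add_zero] at e5
  obtain ⟨h2, h3, h4, h5⟩ := z2_four e2 e3 e4 e5
  intro b
  by_cases hb2 : (b:ℕ) = 2
  · have : b = iN d 2 (by omega) (by omega) := Subtype.ext hb2
    rw [this, h2]
  · by_cases hb3 : (b:ℕ) = 3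
    · have : b = iN d 3 (by omega) (by omega) := Subtype.ext hb3
      rw [this, h3]
    · by_cases hb4 : (b:ℕ) = 4
      · have : b = iN d 4 (by omega) (by omega) := Subtype.ext hb4
        rw [this, h4]
      · by_cases hb5 : (b:ℕ) = 5
        · have : b = iN d 5 (by omega) (by omega) := Subtype.ext hb5
          rw [this, h5]
        · have eb := key b
          rw [if_neg (by omega), if_neg (by omega), add_zero, add_zero] at eb
          exact z2_plain eb

lemma not_ker {d : ℕ} (hd : 6 ≤ d) (u : IdxD d → ZMod 2) (hq : Qd d u = 1)
    (a0 : IdxD d) (h0 : u a0 = 0) : Matrix.vecMul u (ObarD d) ≠ 0 := by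
  intro h
  have hc := ker_const hd u h
  have hS : (∑ x : IdxD d, u x) = 0 := (hc a0).symm.trans h0
  have hu0 : u = 0 := by
    funext a
    rw [hc a, hS]
    rfl
  rw [hu0, Qd_zero] at hq
  exact absurd hq (by decide)

-- ============ weight ============

def wtD (d : ℕ) (u : IdxD d → ZMod 2) : ℕ := (Finset.univ.filter (fun a => u a = 1)).card

lemma sum_eq_wt {d : ℕ} (u : IdxD d → ZMod 2) : (∑ a : IdxD d, u a) = (wtD d u : ZMod 2) := by
  rw [← Finset.sum_filter_add_sum_filter_not Finset.univ (fun a => u a = 1)]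
  have h1 : ∑ a ∈ Finset.univ.filter (fun a => u a = 1), u a
      = ∑ _a ∈ Finset.univ.filter (fun a => u a = 1), (1 : ZMod 2) := by
    apply Finset.sum_congr rfl
    intro x hx
    exact (Finset.mem_filter.mp hx).2
  have h2 : ∑ a ∈ Finset.univ.filter (fun a => ¬ u a = 1), u a = 0 := by
    apply Finset.sum_eq_zero
    intro x hx
    rcases zmod2_cases (u x) with h | h
    · exact h
    · exact absurd h (Finset.mem_filter.mp hx).2
  rw [h1, h2, add_zero, Finset.sum_const, wtD, nsmul_eq_mul, mul_one]

lemma wt_remove {d : ℕ} (u : IdxD d → ZMod 2) (α : IdxD d) (hα : u α = 1) :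
    wtD d (u + ebarD d (α:ℕ)) + 1 = wtD d u := by
  have hset : Finset.univ.filter (fun a => (u + ebarD d (α:ℕ)) a = 1)
      = (Finset.univ.filter (fun a => u a = 1)).erase α := by
    ext x
    simp only [Finset.mem_erase, Finset.mem_filter, Finset.mem_univ, true_and]
    simp only [Pi.add_apply, ebarD]
    by_cases hx : x = α
    · subst hx
      rw [if_pos rfl, hα]
      constructor
      · intro h
        exact absurd h (by decide)
      · intro h
        exact absurd rfl h.1
    · have hxv : (x:ℕ) ≠ (α:ℕ) := fun h => hx (Subtype.ext h)
      rw [if_neg hxv, add_zero]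
      exact ⟨fun h => ⟨hx, h⟩, fun h => h.2⟩
  have hmem : α ∈ Finset.univ.filter (fun a => u a = 1) :=
    Finset.mem_filter.mpr ⟨Finset.mem_univ _, hα⟩
  have hpos : 0 < (Finset.univ.filter (fun a => u a = 1)).card := Finset.card_pos.mpr ⟨α, hmem⟩
  rw [wtD, wtD, hset, Finset.card_erase_of_mem hmem]
  omega

lemma wt_insert {d : ℕ} (u : IdxD d → ZMod 2) (β : IdxD d) (hβ : u β = 0) :
    wtD d (u + ebarD d (β:ℕ)) = wtD d u + 1 := by
  have hset : Finset.univ.filter (fun a => (u + ebarD d (β:ℕ)) a = 1)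
      = insert β (Finset.univ.filter (fun a => u a = 1)) := by
    ext x
    simp only [Finset.mem_insert, Finset.mem_filter, Finset.mem_univ, true_and]
    simp only [Pi.add_apply, ebarD]
    by_cases hx : x = β
    · subst hx
      rw [if_pos rfl, hβ]
      constructor
      · intro _
        exact Or.inl rfl
      · intro _
        decide
    · have hxv : (x:ℕ) ≠ (β:ℕ) := fun h => hx (Subtype.ext h)
      rw [if_neg hxv, add_zero]
      exact ⟨fun h => Or.inr h, fun h => h.resolve_left hx⟩
  have hnmem : β ∉ Finset.univ.filter (fun a => u a = 1) := by
    intro h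
    have := (Finset.mem_filter.mp h).2
    rw [hβ] at this
    exact absurd this (by decide)
  rw [wtD, wtD, hset, Finset.card_insert_of_notMem hnmem]

lemma wt_one {d : ℕ} (u : IdxD d → ZMod 2) (h : wtD d u = 1) :
    ∃ α : IdxD d, u = ebarD d (α:ℕ) := by
  obtain ⟨α, hα⟩ := Finset.card_eq_one.mp h
  refine ⟨α, funext fun x => ?_⟩
  by_cases hx : x = α
  · subst hx
    have : x ∈ Finset.univ.filter (fun a => u a = 1) := by
      rw [hα]
      exact Finset.mem_singleton_self x
    rw [(Finset.mem_filter.mp this).2, ebarD]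
    simp
  · have hxv : (x:ℕ) ≠ (α:ℕ) := fun h' => hx (Subtype.ext h')
    have : x ∉ Finset.univ.filter (fun a => u a = 1) := by
      rw [hα]
      simp [hx]
    have hx0 : u x = 0 := by
      rcases zmod2_cases (u x) with h' | h'
      · exact h'
      · exact absurd (Finset.mem_filter.mpr ⟨Finset.mem_univ x, h'⟩) this
    rw [hx0, ebarD]
    simp [hxv]

-- ============ closure machinery ============

abbrev ClD (d : ℕ) : (IdxD d → ZMod 2) → Prop :=
  QClosure (Qd d) (Set.range fun a : IdxD d => ebarD d (a : ℕ))

lemma cl_ebar {d : ℕ} (α : IdxD d) : ClD d (ebarD d (α:ℕ)) :=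
  QClosure.base ⟨α, rfl⟩

lemma add_ebar_cancel {d : ℕ} (u : IdxD d → ZMod 2) (m : ℕ) :
    u + ebarD d m + ebarD d m = u := by
  rw [add_assoc, add_self_zero, add_zero]

lemma cl_peel {d : ℕ} {u : IdxD d → ZMod 2} {α : IdxD d} (hq : Qd d u = 1)
    (hcl : ClD d (u + ebarD d (α:ℕ))) : ClD d u := by
  have h2 := QClosure.add hcl (cl_ebar α)
    (by rw [add_ebar_cancel]; exact hq)
  rwa [add_ebar_cancel] at h2

lemma Qd_add_ebar {d : ℕ} (hd : 6 ≤ d) (u : IdxD d → ZMod 2) (α : IdxD d) :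
    Qd d (u + ebarD d (α:ℕ)) = Qd d u + 1 + Bf d u (ebarD d (α:ℕ)) := by
  rw [Qd_add hd, Qd_ebar]

lemma sum_add_fun {d : ℕ} (x y : IdxD d → ZMod 2) :
    (∑ a : IdxD d, (x + y) a) = (∑ a : IdxD d, x a) + ∑ a : IdxD d, y a := by
  simp [Finset.sum_add_distrib]

lemma sum_ebar {d : ℕ} (m : IdxD d) : (∑ a : IdxD d, ebarD d (m:ℕ) a) = 1 := by
  obtain ⟨h1, h2⟩ := idx_bounds m
  have : ∀ a : IdxD d, ebarD d (m:ℕ) a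
      = if (a:ℕ) = (m:ℕ) then (fun _ : IdxD d => (1:ZMod 2)) a else 0 := fun a => rfl
  simp only [this]
  rw [sum_ite_val (fun _ => (1:ZMod 2)) (m:ℕ) h1 h2]

lemma Bf_ebar_ebar {d : ℕ} (hd : 6 ≤ d) (k m : IdxD d) :
    Bf d (ebarD d (k:ℕ)) (ebarD d (m:ℕ))
      = 1 + (if (k:ℕ) = (m:ℕ) then 1 else 0) + (if BadP (k:ℕ) (m:ℕ) then 1 else 0) := by
  have step1 : Bf d (ebarD d (k:ℕ)) (ebarD d (m:ℕ))
      = ∑ a : IdxD d, ebarD d (k:ℕ) a * ObarD d a m := by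
    rw [Bf]
    apply Finset.sum_congr rfl
    intro a _
    exact sum_mul_ebar (fun b' => ebarD d (k:ℕ) a * ObarD d a b') m
  rw [step1]
  have h2 : ∀ a : IdxD d, ebarD d (k:ℕ) a * ObarD d a m
      = if (a:ℕ) = (k:ℕ) then ObarD d a m else 0 := by
    intro a
    rw [ebarD]
    split_ifs <;> ring
  obtain ⟨h1', h2'⟩ := idx_bounds k
  simp only [h2]
  rw [sum_ite_val (fun a => ObarD d a m) (k:ℕ) h1' h2']
  have hk : iN d (k:ℕ) h1' h2' = k := Subtype.ext rfl
  rw [hk, Obar_eq hd k m]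
  congr 2
  by_cases h : k = m
  · rw [if_pos h, if_pos (by rw [h])]
  · rw [if_neg h, if_neg (fun hv => h (Subtype.ext hv))]

/-- Removing a good support element and using the induction hypothesis. -/
lemma stepA {d : ℕ} (hd : 6 ≤ d) (u : IdxD d → ZMod 2) (n : ℕ) (hwt : wtD d u = n)
    (IH : ∀ v, wtD d v < n → Qd d v = 1 → (∃ a, v a = 0) → ClD d v)
    (hq : Qd d u = 1) (α : IdxD d) (hα : u α = 1)
    (hB : Bf d u (ebarD d (α:ℕ)) = 1) : ClD d u := by
  set v := u + ebarD d (α:ℕ) with hv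
  have hqv : Qd d v = 1 := by rw [hv, Qd_add_ebar hd, hq, hB]; decide
  have hwtv : wtD d v + 1 = n := by rw [hv, wt_remove u α hα, hwt]
  have hv0 : v α = 0 := by
    rw [hv]
    simp only [Pi.add_apply, ebarD, if_pos rfl, hα]
    decide
  exact cl_peel hq (IH v (by omega) hqv ⟨α, hv0⟩)

/-- Two-step move: add a non-support element β, then reduce to `u + ēβ + ēγ`. -/
lemma step2 {d : ℕ} (hd : 6 ≤ d) (u : IdxD d → ZMod 2) (β γ : IdxD d)
    (hq : Qd d u = 1) (hgβ : Bf d u (ebarD d (β:ℕ)) = 1)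
    (hcl2 : ClD d (u + ebarD d (β:ℕ) + ebarD d (γ:ℕ))) : ClD d u := by
  have hq1 : Qd d (u + ebarD d (β:ℕ)) = 1 := by
    rw [Qd_add_ebar hd, hq, hgβ]
    decide
  exact cl_peel hq (cl_peel hq1 hcl2)

-- ============ misc helpers ============

lemma parity_of_cast {n : ℕ} (h : (n : ZMod 2) = 1) : n % 2 = 1 := by
  rcases Nat.mod_two_eq_zero_or_one n with h0 | h1
  · exfalso
    have h2 : ((n % 2 : ℕ) : ZMod 2) = 1 := by rw [ZMod.natCast_mod]; exact h
    rw [h0] at h2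
    exact absurd h2 (by decide)
  · exact h1

lemma parity_of_cast' {n : ℕ} (h : (n : ZMod 2) = 0) : n % 2 = 0 := by
  rcases Nat.mod_two_eq_zero_or_one n with h0 | h1
  · exact h0
  · exfalso
    have h2 : ((n % 2 : ℕ) : ZMod 2) = 0 := by rw [ZMod.natCast_mod]; exact h
    rw [h1] at h2
    exact absurd h2 (by decide)

/-- `Bf_ebar` with user-chosen representatives of the special indices. -/
lemma Bf_ebar' {d : ℕ} (hd : 6 ≤ d) (u : IdxD d → ZMod 2) (b : IdxD d)
    (x2 x3 x4 x5 : IdxD d) (h2 : (x2:ℕ) = 2) (h3 : (x3:ℕ) = 3) (h4 : (x4:ℕ) = 4)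
    (h5 : (x5:ℕ) = 5) :
    Bf d u (ebarD d (b:ℕ))
      = (∑ a : IdxD d, u a) + u b
        + (if (b:ℕ) = 2 ∨ (b:ℕ) = 3 then u x4 + u x5 else 0)
        + (if (b:ℕ) = 4 ∨ (b:ℕ) = 5 then u x2 + u x3 else 0) := by
  have e2 : x2 = iN d 2 (by omega) (by omega) := Subtype.ext h2
  have e3 : x3 = iN d 3 (by omega) (by omega) := Subtype.ext h3
  have e4 : x4 = iN d 4 (by omega) (by omega) := Subtype.ext h4
  have e5 : x5 = iN d 5 (by omega) (by omega) := Subtype.ext h5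
  rw [e2, e3, e4, e5]
  exact Bf_ebar hd u b

/-- counting: weight is at most the non-special support plus a bound on special support. -/
lemma wt_le_nonspecial {d : ℕ} (u : IdxD d → ZMod 2) (X : Finset (IdxD d))
    (hsub : ∀ x : IdxD d, u x = 1 → ((x:ℕ) = 2 ∨ (x:ℕ) = 3 ∨ (x:ℕ) = 4 ∨ (x:ℕ) = 5) → x ∈ X) :
    wtD d u ≤ ((Finset.univ.filter (fun a => u a = 1)).filter
        (fun a : IdxD d => ¬((a:ℕ) = 2 ∨ (a:ℕ) = 3 ∨ (a:ℕ) = 4 ∨ (a:ℕ) = 5))).card + X.card := by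
  have h := Finset.card_filter_add_card_filter_not
    (s := Finset.univ.filter (fun a => u a = 1))
    (p := fun a : IdxD d => ((a:ℕ) = 2 ∨ (a:ℕ) = 3 ∨ (a:ℕ) = 4 ∨ (a:ℕ) = 5))
  have hsub2 : (Finset.univ.filter (fun a => u a = 1)).filter
      (fun a : IdxD d => ((a:ℕ) = 2 ∨ (a:ℕ) = 3 ∨ (a:ℕ) = 4 ∨ (a:ℕ) = 5)) ⊆ X := by
    intro x hx
    rw [Finset.mem_filter, Finset.mem_filter] at hx
    exact hsub x hx.1.2 hx.2
  have := Finset.card_le_card hsub2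
  rw [wtD]
  omega

-- ============ evaluation helpers ============

lemma BfEE_one {d : ℕ} (hd : 6 ≤ d) (k m : IdxD d) (hk : (k:ℕ) ≠ (m:ℕ))
    (hb : ¬ BadP (k:ℕ) (m:ℕ)) : Bf d (ebarD d (k:ℕ)) (ebarD d (m:ℕ)) = 1 := by
  rw [Bf_ebar_ebar hd, if_neg hk, if_neg hb, add_zero, add_zero]

lemma BfEE_diag {d : ℕ} (hd : 6 ≤ d) (k : IdxD d) :
    Bf d (ebarD d (k:ℕ)) (ebarD d (k:ℕ)) = 0 := by
  rw [Bf_ebar_ebar hd, if_pos rfl, if_neg (by unfold BadP; omega), add_zero]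
  decide

lemma BfEE_bad {d : ℕ} (hd : 6 ≤ d) (k m : IdxD d) (hk : (k:ℕ) ≠ (m:ℕ))
    (hb : BadP (k:ℕ) (m:ℕ)) : Bf d (ebarD d (k:ℕ)) (ebarD d (m:ℕ)) = 0 := by
  rw [Bf_ebar_ebar hd, if_neg hk, if_pos hb]
  decide

lemma Bf_ebar_ns {d : ℕ} (hd : 6 ≤ d) (u : IdxD d → ZMod 2) (γ : IdxD d)
    (hγ : ¬((γ:ℕ) = 2 ∨ (γ:ℕ) = 3 ∨ (γ:ℕ) = 4 ∨ (γ:ℕ) = 5)) :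
    Bf d u (ebarD d (γ:ℕ)) = (∑ a : IdxD d, u a) + u γ := by
  rw [Bf_ebar hd u γ, if_neg (by omega), if_neg (by omega), add_zero, add_zero]

lemma coord_ne {d : ℕ} (u : IdxD d → ZMod 2) (m : ℕ) (x : IdxD d) (h : (x:ℕ) ≠ m) :
    (u + ebarD d m) x = u x := by
  simp [Pi.add_apply, ebarD, h]

lemma coord_eq {d : ℕ} (u : IdxD d → ZMod 2) (m : ℕ) (x : IdxD d) (h : (x:ℕ) = m) :
    (u + ebarD d m) x = u x + 1 := by
  simp [Pi.add_apply, ebarD, h]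

-- ============ odd pattern lemmas ============

section Patterns

variable {d : ℕ}

/-- Pattern (0,0,0,0): no special support. Chain of length 3. -/
lemma pat0000 (hd : 6 ≤ d) (u : IdxD d → ZMod 2) (n : ℕ)
    (x2 x3 x4 x5 : IdxD d) (e2 : (x2:ℕ) = 2) (e3 : (x3:ℕ) = 3) (e4 : (x4:ℕ) = 4)
    (e5 : (x5:ℕ) = 5)
    (hwt : wtD d u = n) (hq : Qd d u = 1) (hS : (∑ a : IdxD d, u a) = 1)
    (IH : ∀ v, wtD d v < n → Qd d v = 1 → (∃ a, v a = 0) → ClD d v)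
    (hva : u x2 = 0) (hvb : u x3 = 0) (hvc : u x4 = 0) (hve : u x5 = 0)
    (γ1 γ2 γ3 : IdxD d)
    (hg1 : u γ1 = 1) (hs1 : ¬((γ1:ℕ) = 2 ∨ (γ1:ℕ) = 3 ∨ (γ1:ℕ) = 4 ∨ (γ1:ℕ) = 5))
    (hg2 : u γ2 = 1) (hs2 : ¬((γ2:ℕ) = 2 ∨ (γ2:ℕ) = 3 ∨ (γ2:ℕ) = 4 ∨ (γ2:ℕ) = 5))
    (hg3 : u γ3 = 1) (hs3 : ¬((γ3:ℕ) = 2 ∨ (γ3:ℕ) = 3 ∨ (γ3:ℕ) = 4 ∨ (γ3:ℕ) = 5))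
    (h12 : (γ1:ℕ) ≠ (γ2:ℕ)) (h13 : (γ1:ℕ) ≠ (γ3:ℕ)) (h23 : (γ2:ℕ) ≠ (γ3:ℕ)) :
    ClD d u := by
  -- values of Bf u at the special indices
  have hBu := fun b => Bf_ebar' hd u b x2 x3 x4 x5 e2 e3 e4 e5
  have hP2 : Bf d u (ebarD d (x2:ℕ)) = 1 := by
    rw [hBu x2, if_pos (Or.inl e2), if_neg (by omega), hS, hva, hvc, hve, add_zero]
    decide
  have hP3 : Bf d u (ebarD d (x3:ℕ)) = 1 := by
    rw [hBu x3, if_pos (Or.inr e3), if_neg (by omega), hS, hvb, hvc, hve, add_zero]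
    decide
  have hP4 : Bf d u (ebarD d (x4:ℕ)) = 1 := by
    rw [hBu x4, if_neg (by omega), if_pos (Or.inl e4), hS, hvc, hva, hvb, add_zero]
    decide
  -- chain
  have q1 : Qd d (u + ebarD d (x2:ℕ)) = 1 := by
    rw [Qd_add_ebar hd, hq, hP2]; decide
  have b1 : Bf d (u + ebarD d (x2:ℕ)) (ebarD d (γ1:ℕ)) = 1 := by
    rw [Bf_add_left, Bf_ebar_ns hd u γ1 hs1, hS, hg1,
      BfEE_one hd x2 γ1 (by omega) (by unfold BadP; omega)]
    decide
  have q2 : Qd d (u + ebarD d (x2:ℕ) + ebarD d (γ1:ℕ)) = 1 := by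
    rw [Qd_add_ebar hd, q1, b1]; decide
  have hP3v : Bf d (u + ebarD d (x2:ℕ) + ebarD d (γ1:ℕ)) (ebarD d (x3:ℕ)) = 1 := by
    rw [Bf_add_left, Bf_add_left, hP3,
      BfEE_one hd x2 x3 (by omega) (by unfold BadP; omega),
      BfEE_one hd γ1 x3 (by omega) (by unfold BadP; omega)]
    decide
  have q3 : Qd d (u + ebarD d (x2:ℕ) + ebarD d (γ1:ℕ) + ebarD d (x3:ℕ)) = 1 := by
    rw [Qd_add_ebar hd, q2, hP3v]; decide
  have b2 : Bf d (u + ebarD d (x2:ℕ) + ebarD d (γ1:ℕ) + ebarD d (x3:ℕ))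
      (ebarD d (γ2:ℕ)) = 1 := by
    rw [Bf_add_left, Bf_add_left, Bf_add_left, Bf_ebar_ns hd u γ2 hs2, hS, hg2,
      BfEE_one hd x2 γ2 (by omega) (by unfold BadP; omega),
      BfEE_one hd γ1 γ2 h12 (by unfold BadP; omega),
      BfEE_one hd x3 γ2 (by omega) (by unfold BadP; omega)]
    decide
  have q4 : Qd d (u + ebarD d (x2:ℕ) + ebarD d (γ1:ℕ) + ebarD d (x3:ℕ)
      + ebarD d (γ2:ℕ)) = 1 := by
    rw [Qd_add_ebar hd, q3, b2]; decide
  have hP4v : Bf d (u + ebarD d (x2:ℕ) + ebarD d (γ1:ℕ) + ebarD d (x3:ℕ)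
      + ebarD d (γ2:ℕ)) (ebarD d (x4:ℕ)) = 1 := by
    rw [Bf_add_left, Bf_add_left, Bf_add_left, Bf_add_left, hP4,
      BfEE_bad hd x2 x4 (by omega) (by unfold BadP; omega),
      BfEE_one hd γ1 x4 (by omega) (by unfold BadP; omega),
      BfEE_bad hd x3 x4 (by omega) (by unfold BadP; omega),
      BfEE_one hd γ2 x4 (by omega) (by unfold BadP; omega)]
    decide
  have q5 : Qd d (u + ebarD d (x2:ℕ) + ebarD d (γ1:ℕ) + ebarD d (x3:ℕ)
      + ebarD d (γ2:ℕ) + ebarD d (x4:ℕ)) = 1 := by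
    rw [Qd_add_ebar hd, q4, hP4v]; decide
  have b3 : Bf d (u + ebarD d (x2:ℕ) + ebarD d (γ1:ℕ) + ebarD d (x3:ℕ)
      + ebarD d (γ2:ℕ) + ebarD d (x4:ℕ)) (ebarD d (γ3:ℕ)) = 1 := by
    rw [Bf_add_left, Bf_add_left, Bf_add_left, Bf_add_left, Bf_add_left,
      Bf_ebar_ns hd u γ3 hs3, hS, hg3,
      BfEE_one hd x2 γ3 (by omega) (by unfold BadP; omega),
      BfEE_one hd γ1 γ3 h13 (by unfold BadP; omega),
      BfEE_one hd x3 γ3 (by omega) (by unfold BadP; omega),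
      BfEE_one hd γ2 γ3 h23 (by unfold BadP; omega),
      BfEE_one hd x4 γ3 (by omega) (by unfold BadP; omega)]
    decide
  have q6 : Qd d (u + ebarD d (x2:ℕ) + ebarD d (γ1:ℕ) + ebarD d (x3:ℕ)
      + ebarD d (γ2:ℕ) + ebarD d (x4:ℕ) + ebarD d (γ3:ℕ)) = 1 := by
    rw [Qd_add_ebar hd, q5, b3]; decide
  -- weights
  have w1 : wtD d (u + ebarD d (x2:ℕ)) = n + 1 := by rw [wt_insert u x2 hva, hwt]
  have c1 : (u + ebarD d (x2:ℕ)) γ1 = 1 := by rw [coord_ne u _ γ1 (by omega)]; exact hg1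
  have w2 : wtD d (u + ebarD d (x2:ℕ) + ebarD d (γ1:ℕ)) = n := by
    have := wt_remove (u + ebarD d (x2:ℕ)) γ1 c1
    omega
  have c2 : (u + ebarD d (x2:ℕ) + ebarD d (γ1:ℕ)) x3 = 0 := by
    rw [coord_ne _ _ x3 (by omega), coord_ne u _ x3 (by omega)]; exact hvb
  have w3 : wtD d (u + ebarD d (x2:ℕ) + ebarD d (γ1:ℕ) + ebarD d (x3:ℕ)) = n + 1 := by
    rw [wt_insert _ x3 c2, w2]
  have c3 : (u + ebarD d (x2:ℕ) + ebarD d (γ1:ℕ) + ebarD d (x3:ℕ)) γ2 = 1 := by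
    rw [coord_ne _ _ γ2 (by omega), coord_ne _ _ γ2 (fun h => h12 h.symm)]
    · rw [coord_ne u _ γ2 (by omega)]; exact hg2
  have w4 : wtD d (u + ebarD d (x2:ℕ) + ebarD d (γ1:ℕ) + ebarD d (x3:ℕ)
      + ebarD d (γ2:ℕ)) = n := by
    have := wt_remove _ γ2 c3
    omega
  have c4 : (u + ebarD d (x2:ℕ) + ebarD d (γ1:ℕ) + ebarD d (x3:ℕ)
      + ebarD d (γ2:ℕ)) x4 = 0 := by
    rw [coord_ne _ _ x4 (by omega), coord_ne _ _ x4 (by omega),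
      coord_ne _ _ x4 (by omega), coord_ne u _ x4 (by omega)]
    exact hvc
  have w5 : wtD d (u + ebarD d (x2:ℕ) + ebarD d (γ1:ℕ) + ebarD d (x3:ℕ)
      + ebarD d (γ2:ℕ) + ebarD d (x4:ℕ)) = n + 1 := by
    rw [wt_insert _ x4 c4, w4]
  have c5 : (u + ebarD d (x2:ℕ) + ebarD d (γ1:ℕ) + ebarD d (x3:ℕ)
      + ebarD d (γ2:ℕ) + ebarD d (x4:ℕ)) γ3 = 1 := by
    rw [coord_ne _ _ γ3 (by omega), coord_ne _ _ γ3 (fun h => h23 h.symm),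
      coord_ne _ _ γ3 (by omega), coord_ne _ _ γ3 (fun h => h13 h.symm),
      coord_ne u _ γ3 (by omega)]
    exact hg3
  have w6 : wtD d (u + ebarD d (x2:ℕ) + ebarD d (γ1:ℕ) + ebarD d (x3:ℕ)
      + ebarD d (γ2:ℕ) + ebarD d (x4:ℕ) + ebarD d (γ3:ℕ)) = n := by
    have := wt_remove _ γ3 c5
    omega
  -- final vector is in case A at α = x2
  have cα : (u + ebarD d (x2:ℕ) + ebarD d (γ1:ℕ) + ebarD d (x3:ℕ)
      + ebarD d (γ2:ℕ) + ebarD d (x4:ℕ) + ebarD d (γ3:ℕ)) x2 = 1 := by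
    rw [coord_ne _ _ x2 (by omega), coord_ne _ _ x2 (by omega),
      coord_ne _ _ x2 (by omega), coord_ne _ _ x2 (by omega),
      coord_ne _ _ x2 (by omega), coord_eq u _ x2 rfl, hva]
    decide
  have bfinal : Bf d (u + ebarD d (x2:ℕ) + ebarD d (γ1:ℕ) + ebarD d (x3:ℕ)
      + ebarD d (γ2:ℕ) + ebarD d (x4:ℕ) + ebarD d (γ3:ℕ)) (ebarD d (x2:ℕ)) = 1 := by
    rw [Bf_add_left, Bf_add_left, Bf_add_left, Bf_add_left, Bf_add_left, Bf_add_left,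
      hP2, BfEE_diag hd x2,
      BfEE_one hd γ1 x2 (by omega) (by unfold BadP; omega),
      BfEE_one hd x3 x2 (by omega) (by unfold BadP; omega),
      BfEE_one hd γ2 x2 (by omega) (by unfold BadP; omega),
      BfEE_bad hd x4 x2 (by omega) (by unfold BadP; omega),
      BfEE_one hd γ3 x2 (by omega) (by unfold BadP; omega)]
    decide
  exact step2 hd u x2 γ1 hq hP2
    (step2 hd _ x3 γ2 q2 hP3v
      (step2 hd _ x4 γ3 q4 hP4v
        (stepA hd _ n w6 IH q6 x2 cα bfinal)))


/-- `Bf_ebar` with the two pair-representatives allowed in either order. -/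
lemma Bf_ebar_gen (hd : 6 ≤ d) (u : IdxD d → ZMod 2) (b : IdxD d)
    (y z w v : IdxD d) (hy : (y:ℕ) = 2 ∨ (y:ℕ) = 3) (hz : (z:ℕ) = 2 ∨ (z:ℕ) = 3)
    (hyz : (y:ℕ) ≠ (z:ℕ)) (hw : (w:ℕ) = 4 ∨ (w:ℕ) = 5) (hv : (v:ℕ) = 4 ∨ (v:ℕ) = 5)
    (hwv : (w:ℕ) ≠ (v:ℕ)) :
    Bf d u (ebarD d (b:ℕ))
      = (∑ a : IdxD d, u a) + u b
        + (if (b:ℕ) = 2 ∨ (b:ℕ) = 3 then u w + u v else 0)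
        + (if (b:ℕ) = 4 ∨ (b:ℕ) = 5 then u y + u z else 0) := by
  have hcw : u w + u v = u (iN d 4 (by omega) (by omega)) + u (iN d 5 (by omega) (by omega)) := by
    rcases hw with hw | hw
    · have hv5 : (v:ℕ) = 5 := by omega
      rw [show iN d 4 (by omega) (by omega) = w from (Subtype.ext hw).symm,
        show iN d 5 (by omega) (by omega) = v from (Subtype.ext hv5).symm]
    · have hv4 : (v:ℕ) = 4 := by omega
      rw [show iN d 4 (by omega) (by omega) = v from (Subtype.ext hv4).symm,
        show iN d 5 (by omega) (by omega) = w from (Subtype.ext hw).symm]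
      exact add_comm _ _
  have hcy : u y + u z = u (iN d 2 (by omega) (by omega)) + u (iN d 3 (by omega) (by omega)) := by
    rcases hy with hy | hy
    · have hz3 : (z:ℕ) = 3 := by omega
      rw [show iN d 2 (by omega) (by omega) = y from (Subtype.ext hy).symm,
        show iN d 3 (by omega) (by omega) = z from (Subtype.ext hz3).symm]
    · have hz2 : (z:ℕ) = 2 := by omega
      rw [show iN d 2 (by omega) (by omega) = z from (Subtype.ext hz2).symm,
        show iN d 3 (by omega) (by omega) = y from (Subtype.ext hy).symm]
      exact add_comm _ _
  rw [Bf_ebar hd u b, ← hcw, ← hcy]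

/-- Pattern: exactly one of the coordinates 2,3 is set (at `y`), coordinates 4,5 clear. -/
lemma pat23 (hd : 6 ≤ d) (u : IdxD d → ZMod 2) (n : ℕ)
    (y z x4 x5 : IdxD d) (hy : (y:ℕ) = 2 ∨ (y:ℕ) = 3) (hz : (z:ℕ) = 2 ∨ (z:ℕ) = 3)
    (hyz : (y:ℕ) ≠ (z:ℕ)) (e4 : (x4:ℕ) = 4) (e5 : (x5:ℕ) = 5)
    (hwt : wtD d u = n) (hq : Qd d u = 1) (hS : (∑ a : IdxD d, u a) = 1)
    (IH : ∀ v, wtD d v < n → Qd d v = 1 → (∃ a, v a = 0) → ClD d v)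
    (hvy : u y = 1) (hvz : u z = 0) (hvc : u x4 = 0) (hve : u x5 = 0)
    (γ1 γ2 : IdxD d)
    (hg1 : u γ1 = 1) (hs1 : ¬((γ1:ℕ) = 2 ∨ (γ1:ℕ) = 3 ∨ (γ1:ℕ) = 4 ∨ (γ1:ℕ) = 5))
    (hg2 : u γ2 = 1) (hs2 : ¬((γ2:ℕ) = 2 ∨ (γ2:ℕ) = 3 ∨ (γ2:ℕ) = 4 ∨ (γ2:ℕ) = 5))
    (h12 : (γ1:ℕ) ≠ (γ2:ℕ)) : ClD d u := by
  have hBu := fun b => Bf_ebar_gen hd u b y z x4 x5 hy hz hyz (Or.inl e4) (Or.inr e5)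
    (by omega)
  have hPz : Bf d u (ebarD d (z:ℕ)) = 1 := by
    rw [hBu z, if_pos hz, if_neg (by omega), hS, hvz, hvc, hve, add_zero]
    decide
  have hP4u : Bf d u (ebarD d (x4:ℕ)) = 0 := by
    rw [hBu x4, if_neg (by omega), if_pos (Or.inl e4), hS, hvc, hvy, hvz]
    decide
  have hPyu : Bf d u (ebarD d (y:ℕ)) = 0 := by
    rw [hBu y, if_pos hy, if_neg (by omega), hS, hvy, hvc, hve, add_zero]
    decide
  have q1 : Qd d (u + ebarD d (z:ℕ)) = 1 := by
    rw [Qd_add_ebar hd, hq, hPz]; decide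
  have b1 : Bf d (u + ebarD d (z:ℕ)) (ebarD d (γ1:ℕ)) = 1 := by
    rw [Bf_add_left, Bf_ebar_ns hd u γ1 hs1, hS, hg1,
      BfEE_one hd z γ1 (by omega) (by unfold BadP; omega)]
    decide
  have q2 : Qd d (u + ebarD d (z:ℕ) + ebarD d (γ1:ℕ)) = 1 := by
    rw [Qd_add_ebar hd, q1, b1]; decide
  have hP4v : Bf d (u + ebarD d (z:ℕ) + ebarD d (γ1:ℕ)) (ebarD d (x4:ℕ)) = 1 := by
    rw [Bf_add_left, Bf_add_left, hP4u,
      BfEE_bad hd z x4 (by omega) (by unfold BadP; omega),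
      BfEE_one hd γ1 x4 (by omega) (by unfold BadP; omega)]
    decide
  have q3 : Qd d (u + ebarD d (z:ℕ) + ebarD d (γ1:ℕ) + ebarD d (x4:ℕ)) = 1 := by
    rw [Qd_add_ebar hd, q2, hP4v]; decide
  have b2 : Bf d (u + ebarD d (z:ℕ) + ebarD d (γ1:ℕ) + ebarD d (x4:ℕ))
      (ebarD d (γ2:ℕ)) = 1 := by
    rw [Bf_add_left, Bf_add_left, Bf_add_left, Bf_ebar_ns hd u γ2 hs2, hS, hg2,
      BfEE_one hd z γ2 (by omega) (by unfold BadP; omega),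
      BfEE_one hd γ1 γ2 h12 (by unfold BadP; omega),
      BfEE_one hd x4 γ2 (by omega) (by unfold BadP; omega)]
    decide
  have q4 : Qd d (u + ebarD d (z:ℕ) + ebarD d (γ1:ℕ) + ebarD d (x4:ℕ)
      + ebarD d (γ2:ℕ)) = 1 := by
    rw [Qd_add_ebar hd, q3, b2]; decide
  have w1 : wtD d (u + ebarD d (z:ℕ)) = n + 1 := by rw [wt_insert u z hvz, hwt]
  have c1 : (u + ebarD d (z:ℕ)) γ1 = 1 := by
    rw [coord_ne u _ γ1 (by omega)]; exact hg1
  have w2 : wtD d (u + ebarD d (z:ℕ) + ebarD d (γ1:ℕ)) = n := by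
    have := wt_remove (u + ebarD d (z:ℕ)) γ1 c1
    omega
  have c2 : (u + ebarD d (z:ℕ) + ebarD d (γ1:ℕ)) x4 = 0 := by
    rw [coord_ne _ _ x4 (by omega), coord_ne u _ x4 (by omega)]; exact hvc
  have w3 : wtD d (u + ebarD d (z:ℕ) + ebarD d (γ1:ℕ) + ebarD d (x4:ℕ)) = n + 1 := by
    rw [wt_insert _ x4 c2, w2]
  have c3 : (u + ebarD d (z:ℕ) + ebarD d (γ1:ℕ) + ebarD d (x4:ℕ)) γ2 = 1 := by
    rw [coord_ne _ _ γ2 (by omega), coord_ne _ _ γ2 (fun h => h12 h.symm),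
      coord_ne u _ γ2 (by omega)]
    exact hg2
  have w4 : wtD d (u + ebarD d (z:ℕ) + ebarD d (γ1:ℕ) + ebarD d (x4:ℕ)
      + ebarD d (γ2:ℕ)) = n := by
    have := wt_remove _ γ2 c3
    omega
  have cy : (u + ebarD d (z:ℕ) + ebarD d (γ1:ℕ) + ebarD d (x4:ℕ)
      + ebarD d (γ2:ℕ)) y = 1 := by
    rw [coord_ne _ _ y (by omega), coord_ne _ _ y (by omega),
      coord_ne _ _ y (by omega), coord_ne u _ y (by omega)]
    exact hvy
  have bfinal : Bf d (u + ebarD d (z:ℕ) + ebarD d (γ1:ℕ) + ebarD d (x4:ℕ)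
      + ebarD d (γ2:ℕ)) (ebarD d (y:ℕ)) = 1 := by
    rw [Bf_add_left, Bf_add_left, Bf_add_left, Bf_add_left, hPyu,
      BfEE_one hd z y (fun h => hyz h.symm) (by unfold BadP; omega),
      BfEE_one hd γ1 y (by omega) (by unfold BadP; omega),
      BfEE_bad hd x4 y (by omega) (by unfold BadP; omega),
      BfEE_one hd γ2 y (by omega) (by unfold BadP; omega)]
    decide
  exact step2 hd u z γ1 hq hPz
    (step2 hd _ x4 γ2 q2 hP4v
      (stepA hd _ n w4 IH q4 y cy bfinal))


/-- Pattern: exactly one of the coordinates 4,5 is set (at `w`), coordinates 2,3 clear. -/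
lemma pat45 (hd : 6 ≤ d) (u : IdxD d → ZMod 2) (n : ℕ)
    (x2 x3 w v : IdxD d) (e2 : (x2:ℕ) = 2) (e3 : (x3:ℕ) = 3)
    (hw : (w:ℕ) = 4 ∨ (w:ℕ) = 5) (hv : (v:ℕ) = 4 ∨ (v:ℕ) = 5) (hwv : (w:ℕ) ≠ (v:ℕ))
    (hwt : wtD d u = n) (hq : Qd d u = 1) (hS : (∑ a : IdxD d, u a) = 1)
    (IH : ∀ x, wtD d x < n → Qd d x = 1 → (∃ a, x a = 0) → ClD d x)
    (hvw : u w = 1) (hvv : u v = 0) (hva : u x2 = 0) (hvb : u x3 = 0)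
    (γ1 γ2 : IdxD d)
    (hg1 : u γ1 = 1) (hs1 : ¬((γ1:ℕ) = 2 ∨ (γ1:ℕ) = 3 ∨ (γ1:ℕ) = 4 ∨ (γ1:ℕ) = 5))
    (hg2 : u γ2 = 1) (hs2 : ¬((γ2:ℕ) = 2 ∨ (γ2:ℕ) = 3 ∨ (γ2:ℕ) = 4 ∨ (γ2:ℕ) = 5))
    (h12 : (γ1:ℕ) ≠ (γ2:ℕ)) : ClD d u := by
  have hBu := fun b => Bf_ebar_gen hd u b x2 x3 w v (Or.inl e2) (Or.inr e3) (by omega)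
    hw hv hwv
  have hPv : Bf d u (ebarD d (v:ℕ)) = 1 := by
    rw [hBu v, if_neg (by omega), if_pos hv, hS, hvv, hva, hvb, add_zero]
    decide
  have hP2u : Bf d u (ebarD d (x2:ℕ)) = 0 := by
    rw [hBu x2, if_pos (Or.inl e2), if_neg (by omega), hS, hva, hvw, hvv]
    decide
  have hPwu : Bf d u (ebarD d (w:ℕ)) = 0 := by
    rw [hBu w, if_neg (by omega), if_pos hw, hS, hvw, hva, hvb, add_zero]
    decide
  have q1 : Qd d (u + ebarD d (v:ℕ)) = 1 := by
    rw [Qd_add_ebar hd, hq, hPv]; decide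
  have b1 : Bf d (u + ebarD d (v:ℕ)) (ebarD d (γ1:ℕ)) = 1 := by
    rw [Bf_add_left, Bf_ebar_ns hd u γ1 hs1, hS, hg1,
      BfEE_one hd v γ1 (by omega) (by unfold BadP; omega)]
    decide
  have q2 : Qd d (u + ebarD d (v:ℕ) + ebarD d (γ1:ℕ)) = 1 := by
    rw [Qd_add_ebar hd, q1, b1]; decide
  have hP2v : Bf d (u + ebarD d (v:ℕ) + ebarD d (γ1:ℕ)) (ebarD d (x2:ℕ)) = 1 := by
    rw [Bf_add_left, Bf_add_left, hP2u,
      BfEE_bad hd v x2 (by omega) (by unfold BadP; omega),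
      BfEE_one hd γ1 x2 (by omega) (by unfold BadP; omega)]
    decide
  have q3 : Qd d (u + ebarD d (v:ℕ) + ebarD d (γ1:ℕ) + ebarD d (x2:ℕ)) = 1 := by
    rw [Qd_add_ebar hd, q2, hP2v]; decide
  have b2 : Bf d (u + ebarD d (v:ℕ) + ebarD d (γ1:ℕ) + ebarD d (x2:ℕ))
      (ebarD d (γ2:ℕ)) = 1 := by
    rw [Bf_add_left, Bf_add_left, Bf_add_left, Bf_ebar_ns hd u γ2 hs2, hS, hg2,
      BfEE_one hd v γ2 (by omega) (by unfold BadP; omega),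
      BfEE_one hd γ1 γ2 h12 (by unfold BadP; omega),
      BfEE_one hd x2 γ2 (by omega) (by unfold BadP; omega)]
    decide
  have q4 : Qd d (u + ebarD d (v:ℕ) + ebarD d (γ1:ℕ) + ebarD d (x2:ℕ)
      + ebarD d (γ2:ℕ)) = 1 := by
    rw [Qd_add_ebar hd, q3, b2]; decide
  have w1 : wtD d (u + ebarD d (v:ℕ)) = n + 1 := by rw [wt_insert u v hvv, hwt]
  have c1 : (u + ebarD d (v:ℕ)) γ1 = 1 := by
    rw [coord_ne u _ γ1 (by omega)]; exact hg1
  have w2 : wtD d (u + ebarD d (v:ℕ) + ebarD d (γ1:ℕ)) = n := by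
    have := wt_remove (u + ebarD d (v:ℕ)) γ1 c1
    omega
  have c2 : (u + ebarD d (v:ℕ) + ebarD d (γ1:ℕ)) x2 = 0 := by
    rw [coord_ne _ _ x2 (by omega), coord_ne u _ x2 (by omega)]; exact hva
  have w3 : wtD d (u + ebarD d (v:ℕ) + ebarD d (γ1:ℕ) + ebarD d (x2:ℕ)) = n + 1 := by
    rw [wt_insert _ x2 c2, w2]
  have c3 : (u + ebarD d (v:ℕ) + ebarD d (γ1:ℕ) + ebarD d (x2:ℕ)) γ2 = 1 := by
    rw [coord_ne _ _ γ2 (by omega), coord_ne _ _ γ2 (fun h => h12 h.symm),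
      coord_ne u _ γ2 (by omega)]
    exact hg2
  have w4 : wtD d (u + ebarD d (v:ℕ) + ebarD d (γ1:ℕ) + ebarD d (x2:ℕ)
      + ebarD d (γ2:ℕ)) = n := by
    have := wt_remove _ γ2 c3
    omega
  have cw : (u + ebarD d (v:ℕ) + ebarD d (γ1:ℕ) + ebarD d (x2:ℕ)
      + ebarD d (γ2:ℕ)) w = 1 := by
    rw [coord_ne _ _ w (by omega), coord_ne _ _ w (by omega),
      coord_ne _ _ w (by omega), coord_ne u _ w (by omega)]
    exact hvw
  have bfinal : Bf d (u + ebarD d (v:ℕ) + ebarD d (γ1:ℕ) + ebarD d (x2:ℕ)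
      + ebarD d (γ2:ℕ)) (ebarD d (w:ℕ)) = 1 := by
    rw [Bf_add_left, Bf_add_left, Bf_add_left, Bf_add_left, hPwu,
      BfEE_one hd v w (fun h => hwv h.symm) (by unfold BadP; omega),
      BfEE_one hd γ1 w (by omega) (by unfold BadP; omega),
      BfEE_bad hd x2 w (by omega) (by unfold BadP; omega),
      BfEE_one hd γ2 w (by omega) (by unfold BadP; omega)]
    decide
  exact step2 hd u v γ1 hq hPv
    (step2 hd _ x2 γ2 q2 hP2v
      (stepA hd _ n w4 IH q4 w cw bfinal))

/-- Pattern (1,1,0,0). Chain of length 1. -/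
lemma pat1100 (hd : 6 ≤ d) (u : IdxD d → ZMod 2) (n : ℕ)
    (x2 x3 x4 x5 : IdxD d) (e2 : (x2:ℕ) = 2) (e3 : (x3:ℕ) = 3) (e4 : (x4:ℕ) = 4)
    (e5 : (x5:ℕ) = 5)
    (hwt : wtD d u = n) (hq : Qd d u = 1) (hS : (∑ a : IdxD d, u a) = 1)
    (IH : ∀ x, wtD d x < n → Qd d x = 1 → (∃ a, x a = 0) → ClD d x)
    (hva : u x2 = 1) (hvb : u x3 = 1) (hvc : u x4 = 0) (hve : u x5 = 0)
    (γ1 : IdxD d)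
    (hg1 : u γ1 = 1) (hs1 : ¬((γ1:ℕ) = 2 ∨ (γ1:ℕ) = 3 ∨ (γ1:ℕ) = 4 ∨ (γ1:ℕ) = 5)) :
    ClD d u := by
  have hBu := fun b => Bf_ebar' hd u b x2 x3 x4 x5 e2 e3 e4 e5
  have hP4 : Bf d u (ebarD d (x4:ℕ)) = 1 := by
    rw [hBu x4, if_neg (by omega), if_pos (Or.inl e4), hS, hvc, hva, hvb]
    decide
  have hP2u : Bf d u (ebarD d (x2:ℕ)) = 0 := by
    rw [hBu x2, if_pos (Or.inl e2), if_neg (by omega), hS, hva, hvc, hve, add_zero]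
    decide
  have q1 : Qd d (u + ebarD d (x4:ℕ)) = 1 := by
    rw [Qd_add_ebar hd, hq, hP4]; decide
  have b1 : Bf d (u + ebarD d (x4:ℕ)) (ebarD d (γ1:ℕ)) = 1 := by
    rw [Bf_add_left, Bf_ebar_ns hd u γ1 hs1, hS, hg1,
      BfEE_one hd x4 γ1 (by omega) (by unfold BadP; omega)]
    decide
  have q2 : Qd d (u + ebarD d (x4:ℕ) + ebarD d (γ1:ℕ)) = 1 := by
    rw [Qd_add_ebar hd, q1, b1]; decide
  have w1 : wtD d (u + ebarD d (x4:ℕ)) = n + 1 := by rw [wt_insert u x4 hvc, hwt]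
  have c1 : (u + ebarD d (x4:ℕ)) γ1 = 1 := by
    rw [coord_ne u _ γ1 (by omega)]; exact hg1
  have w2 : wtD d (u + ebarD d (x4:ℕ) + ebarD d (γ1:ℕ)) = n := by
    have := wt_remove (u + ebarD d (x4:ℕ)) γ1 c1
    omega
  have cx2 : (u + ebarD d (x4:ℕ) + ebarD d (γ1:ℕ)) x2 = 1 := by
    rw [coord_ne _ _ x2 (by omega), coord_ne u _ x2 (by omega)]; exact hva
  have bfinal : Bf d (u + ebarD d (x4:ℕ) + ebarD d (γ1:ℕ)) (ebarD d (x2:ℕ)) = 1 := by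
    rw [Bf_add_left, Bf_add_left, hP2u,
      BfEE_bad hd x4 x2 (by omega) (by unfold BadP; omega),
      BfEE_one hd γ1 x2 (by omega) (by unfold BadP; omega)]
    decide
  exact step2 hd u x4 γ1 hq hP4 (stepA hd _ n w2 IH q2 x2 cx2 bfinal)

/-- Pattern (0,0,1,1). Chain of length 1. -/
lemma pat0011 (hd : 6 ≤ d) (u : IdxD d → ZMod 2) (n : ℕ)
    (x2 x3 x4 x5 : IdxD d) (e2 : (x2:ℕ) = 2) (e3 : (x3:ℕ) = 3) (e4 : (x4:ℕ) = 4)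
    (e5 : (x5:ℕ) = 5)
    (hwt : wtD d u = n) (hq : Qd d u = 1) (hS : (∑ a : IdxD d, u a) = 1)
    (IH : ∀ x, wtD d x < n → Qd d x = 1 → (∃ a, x a = 0) → ClD d x)
    (hva : u x2 = 0) (hvb : u x3 = 0) (hvc : u x4 = 1) (hve : u x5 = 1)
    (γ1 : IdxD d)
    (hg1 : u γ1 = 1) (hs1 : ¬((γ1:ℕ) = 2 ∨ (γ1:ℕ) = 3 ∨ (γ1:ℕ) = 4 ∨ (γ1:ℕ) = 5)) :
    ClD d u := by
  have hBu := fun b => Bf_ebar' hd u b x2 x3 x4 x5 e2 e3 e4 e5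
  have hP2 : Bf d u (ebarD d (x2:ℕ)) = 1 := by
    rw [hBu x2, if_pos (Or.inl e2), if_neg (by omega), hS, hva, hvc, hve, add_zero]
    decide
  have hP4u : Bf d u (ebarD d (x4:ℕ)) = 0 := by
    rw [hBu x4, if_neg (by omega), if_pos (Or.inl e4), hS, hvc, hva, hvb]
    decide
  have q1 : Qd d (u + ebarD d (x2:ℕ)) = 1 := by
    rw [Qd_add_ebar hd, hq, hP2]; decide
  have b1 : Bf d (u + ebarD d (x2:ℕ)) (ebarD d (γ1:ℕ)) = 1 := by
    rw [Bf_add_left, Bf_ebar_ns hd u γ1 hs1, hS, hg1,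
      BfEE_one hd x2 γ1 (by omega) (by unfold BadP; omega)]
    decide
  have q2 : Qd d (u + ebarD d (x2:ℕ) + ebarD d (γ1:ℕ)) = 1 := by
    rw [Qd_add_ebar hd, q1, b1]; decide
  have w1 : wtD d (u + ebarD d (x2:ℕ)) = n + 1 := by rw [wt_insert u x2 hva, hwt]
  have c1 : (u + ebarD d (x2:ℕ)) γ1 = 1 := by
    rw [coord_ne u _ γ1 (by omega)]; exact hg1
  have w2 : wtD d (u + ebarD d (x2:ℕ) + ebarD d (γ1:ℕ)) = n := by
    have := wt_remove (u + ebarD d (x2:ℕ)) γ1 c1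
    omega
  have cx4 : (u + ebarD d (x2:ℕ) + ebarD d (γ1:ℕ)) x4 = 1 := by
    rw [coord_ne _ _ x4 (by omega), coord_ne u _ x4 (by omega)]; exact hvc
  have bfinal : Bf d (u + ebarD d (x2:ℕ) + ebarD d (γ1:ℕ)) (ebarD d (x4:ℕ)) = 1 := by
    rw [Bf_add_left, Bf_add_left, hP4u,
      BfEE_bad hd x2 x4 (by omega) (by unfold BadP; omega),
      BfEE_one hd γ1 x4 (by omega) (by unfold BadP; omega)]
    decide
  exact step2 hd u x2 γ1 hq hP2 (stepA hd _ n w2 IH q2 x4 cx4 bfinal)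

/-- Pattern (1,1,1,1). Uses a non-support index with nonvanishing pairing. -/
lemma pat1111 (hd : 6 ≤ d) (u : IdxD d → ZMod 2) (n : ℕ)
    (x2 x3 x4 x5 : IdxD d) (e2 : (x2:ℕ) = 2) (e3 : (x3:ℕ) = 3) (e4 : (x4:ℕ) = 4)
    (e5 : (x5:ℕ) = 5)
    (hwt : wtD d u = n) (hq : Qd d u = 1) (hS : (∑ a : IdxD d, u a) = 1)
    (IH : ∀ x, wtD d x < n → Qd d x = 1 → (∃ a, x a = 0) → ClD d x)
    (hva : u x2 = 1) (hvb : u x3 = 1) (hvc : u x4 = 1) (hve : u x5 = 1)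
    (β0 : IdxD d) (hβ0 : u β0 = 0) (hPβ0 : Bf d u (ebarD d (β0:ℕ)) = 1)
    (hsβ0 : ¬((β0:ℕ) = 2 ∨ (β0:ℕ) = 3 ∨ (β0:ℕ) = 4 ∨ (β0:ℕ) = 5)) : ClD d u := by
  have hBu := fun b => Bf_ebar' hd u b x2 x3 x4 x5 e2 e3 e4 e5
  have hP4u : Bf d u (ebarD d (x4:ℕ)) = 0 := by
    rw [hBu x4, if_neg (by omega), if_pos (Or.inl e4), hS, hvc, hva, hvb]
    decide
  have hP2u : Bf d u (ebarD d (x2:ℕ)) = 0 := by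
    rw [hBu x2, if_pos (Or.inl e2), if_neg (by omega), hS, hva, hvc, hve, add_zero]
    decide
  have q1 : Qd d (u + ebarD d (β0:ℕ)) = 1 := by
    rw [Qd_add_ebar hd, hq, hPβ0]; decide
  have b1 : Bf d (u + ebarD d (β0:ℕ)) (ebarD d (x4:ℕ)) = 1 := by
    rw [Bf_add_left, hP4u,
      BfEE_one hd β0 x4 (by omega) (by unfold BadP; omega)]
    decide
  have q2 : Qd d (u + ebarD d (β0:ℕ) + ebarD d (x4:ℕ)) = 1 := by
    rw [Qd_add_ebar hd, q1, b1]; decide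
  have w1 : wtD d (u + ebarD d (β0:ℕ)) = n + 1 := by rw [wt_insert u β0 hβ0, hwt]
  have c1 : (u + ebarD d (β0:ℕ)) x4 = 1 := by
    rw [coord_ne u _ x4 (by omega)]; exact hvc
  have w2 : wtD d (u + ebarD d (β0:ℕ) + ebarD d (x4:ℕ)) = n := by
    have := wt_remove (u + ebarD d (β0:ℕ)) x4 c1
    omega
  have cx2 : (u + ebarD d (β0:ℕ) + ebarD d (x4:ℕ)) x2 = 1 := by
    rw [coord_ne _ _ x2 (by omega), coord_ne u _ x2 (by omega)]; exact hva
  have bfinal : Bf d (u + ebarD d (β0:ℕ) + ebarD d (x4:ℕ)) (ebarD d (x2:ℕ)) = 1 := by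
    rw [Bf_add_left, Bf_add_left, hP2u,
      BfEE_one hd β0 x2 (by omega) (by unfold BadP; omega),
      BfEE_bad hd x4 x2 (by omega) (by unfold BadP; omega)]
    decide
  exact step2 hd u β0 x4 hq hPβ0 (stepA hd _ n w2 IH q2 x2 cx2 bfinal)

end Patterns

-- ============ even case: contradiction ============

lemma funext_pair {d : ℕ} (u : IdxD d → ZMod 2) (p q : IdxD d) (hpq : (p:ℕ) ≠ (q:ℕ))
    (hp : u p = 1) (hq' : u q = 1)
    (hall : ∀ x : IdxD d, (x:ℕ) ≠ (p:ℕ) → (x:ℕ) ≠ (q:ℕ) → u x = 0) :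
    u = ebarD d (p:ℕ) + ebarD d (q:ℕ) := by
  funext x
  simp only [Pi.add_apply, ebarD]
  by_cases h1 : (x:ℕ) = (p:ℕ)
  · have hx : x = p := Subtype.ext h1
    subst hx
    rw [if_pos rfl, if_neg hpq, hp]
    decide
  · by_cases h2 : (x:ℕ) = (q:ℕ)
    · have hx : x = q := Subtype.ext h2
      subst hx
      rw [if_pos rfl, if_neg h1, hq']
      decide
    · rw [if_neg h1, if_neg h2, hall x h1 h2]
      decide

lemma even_contra {d : ℕ} (hd : 6 ≤ d) (u : IdxD d → ZMod 2)
    (x2 x3 x4 x5 : IdxD d) (e2 : (x2:ℕ) = 2) (e3 : (x3:ℕ) = 3) (e4 : (x4:ℕ) = 4)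
    (e5 : (x5:ℕ) = 5)
    (hq : Qd d u = 1) (hS : (∑ a : IdxD d, u a) = 0)
    (hA0 : ∀ α : IdxD d, u α = 1 → Bf d u (ebarD d (α:ℕ)) = 0) : False := by
  have hBu := fun b => Bf_ebar' hd u b x2 x3 x4 x5 e2 e3 e4 e5
  have hns : ∀ α : IdxD d, ¬((α:ℕ) = 2 ∨ (α:ℕ) = 3 ∨ (α:ℕ) = 4 ∨ (α:ℕ) = 5) → u α = 0 := by
    intro α hsp
    rcases zmod2_cases (u α) with h | h
    · exact h
    · exfalso
      have h0 := hA0 α h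
      rw [hBu α, if_neg (by omega), if_neg (by omega), hS, h, add_zero, add_zero] at h0
      exact absurd h0 (by decide)
  have badQ : ∀ p q : IdxD d, u p = 1 → u q = 1 → (p:ℕ) ≠ (q:ℕ) → BadP (p:ℕ) (q:ℕ) →
      (∀ x : IdxD d, (x:ℕ) ≠ (p:ℕ) → (x:ℕ) ≠ (q:ℕ) → u x = 0) → False := by
    intro p q hp hq2 hpq hbad hall
    have hu := funext_pair u p q hpq hp hq2 hall
    rw [hu, Qd_add_ebar hd (ebarD d (p:ℕ)) q, Qd_ebar p, BfEE_bad hd p q hpq hbad] at hq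
    exact absurd hq (by decide)
  rcases zmod2_cases (u x2) with hva | hva <;> rcases zmod2_cases (u x3) with hvb | hvb <;>
    rcases zmod2_cases (u x4) with hvc | hvc <;> rcases zmod2_cases (u x5) with hve | hve
  -- (0000)
  · have hu : u = 0 := by
      funext x
      by_cases h2 : (x:ℕ) = 2
      · rw [show x = x2 from Subtype.ext (by omega)]; exact hva
      · by_cases h3 : (x:ℕ) = 3
        · rw [show x = x3 from Subtype.ext (by omega)]; exact hvb
        · by_cases h4 : (x:ℕ) = 4
          · rw [show x = x4 from Subtype.ext (by omega)]; exact hvc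
          · by_cases h5 : (x:ℕ) = 5
            · rw [show x = x5 from Subtype.ext (by omega)]; exact hve
            · exact hns x (by omega)
    rw [hu, Qd_zero] at hq
    exact absurd hq (by decide)
  -- (0001)
  · have h0 := hA0 x5 hve
    rw [hBu x5, if_neg (by omega), if_pos (Or.inr e5), hS, hve, hva, hvb, add_zero] at h0
    exact absurd h0 (by decide)
  -- (0010)
  · have h0 := hA0 x4 hvc
    rw [hBu x4, if_neg (by omega), if_pos (Or.inl e4), hS, hvc, hva, hvb, add_zero] at h0
    exact absurd h0 (by decide)
  -- (0011)
  · have h0 := hA0 x4 hvc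
    rw [hBu x4, if_neg (by omega), if_pos (Or.inl e4), hS, hvc, hva, hvb, add_zero] at h0
    exact absurd h0 (by decide)
  -- (0100)
  · have h0 := hA0 x3 hvb
    rw [hBu x3, if_pos (Or.inr e3), if_neg (by omega), hS, hvb, hvc, hve, add_zero] at h0
    exact absurd h0 (by decide)
  -- (0101): bad pair x3,x5
  · refine badQ x3 x5 hvb hve (by omega) (by unfold BadP; omega) ?_
    intro x hx3 hx5
    by_cases h2 : (x:ℕ) = 2
    · rw [show x = x2 from Subtype.ext (by omega)]; exact hva
    · by_cases h4 : (x:ℕ) = 4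
      · rw [show x = x4 from Subtype.ext (by omega)]; exact hvc
      · exact hns x (by omega)
  -- (0110): bad pair x3,x4
  · refine badQ x3 x4 hvb hvc (by omega) (by unfold BadP; omega) ?_
    intro x hx3 hx4
    by_cases h2 : (x:ℕ) = 2
    · rw [show x = x2 from Subtype.ext (by omega)]; exact hva
    · by_cases h5 : (x:ℕ) = 5
      · rw [show x = x5 from Subtype.ext (by omega)]; exact hve
      · exact hns x (by omega)
  -- (0111)
  · have h0 := hA0 x3 hvb
    rw [hBu x3, if_pos (Or.inr e3), if_neg (by omega), hS, hvb, hvc, hve, add_zero] at h0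
    exact absurd h0 (by decide)
  -- (1000)
  · have h0 := hA0 x2 hva
    rw [hBu x2, if_pos (Or.inl e2), if_neg (by omega), hS, hva, hvc, hve, add_zero] at h0
    exact absurd h0 (by decide)
  -- (1001): bad pair x2,x5
  · refine badQ x2 x5 hva hve (by omega) (by unfold BadP; omega) ?_
    intro x hx2 hx5
    by_cases h3 : (x:ℕ) = 3
    · rw [show x = x3 from Subtype.ext (by omega)]; exact hvb
    · by_cases h4 : (x:ℕ) = 4
      · rw [show x = x4 from Subtype.ext (by omega)]; exact hvc
      · exact hns x (by omega)
  -- (1010): bad pair x2,x4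
  · refine badQ x2 x4 hva hvc (by omega) (by unfold BadP; omega) ?_
    intro x hx2 hx4
    by_cases h3 : (x:ℕ) = 3
    · rw [show x = x3 from Subtype.ext (by omega)]; exact hvb
    · by_cases h5 : (x:ℕ) = 5
      · rw [show x = x5 from Subtype.ext (by omega)]; exact hve
      · exact hns x (by omega)
  -- (1011)
  · have h0 := hA0 x2 hva
    rw [hBu x2, if_pos (Or.inl e2), if_neg (by omega), hS, hva, hvc, hve, add_zero] at h0
    exact absurd h0 (by decide)
  -- (1100)
  · have h0 := hA0 x2 hva
    rw [hBu x2, if_pos (Or.inl e2), if_neg (by omega), hS, hva, hvc, hve, add_zero] at h0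
    exact absurd h0 (by decide)
  -- (1101)
  · have h0 := hA0 x5 hve
    rw [hBu x5, if_neg (by omega), if_pos (Or.inr e5), hS, hve, hva, hvb, add_zero] at h0
    exact absurd h0 (by decide)
  -- (1110)
  · have h0 := hA0 x4 hvc
    rw [hBu x4, if_neg (by omega), if_pos (Or.inl e4), hS, hvc, hva, hvb, add_zero] at h0
    exact absurd h0 (by decide)
  -- (1111)
  · have h0 := hA0 x2 hva
    rw [hBu x2, if_pos (Or.inl e2), if_neg (by omega), hS, hva, hvc, hve, add_zero] at h0
    exact absurd h0 (by decide)

-- ============ main hard direction ============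

lemma Bf_vecMul {d : ℕ} (x y : IdxD d → ZMod 2) :
    Bf d x y = ∑ b : IdxD d, Matrix.vecMul x (ObarD d) b * y b := by
  rw [Bf, Finset.sum_comm]
  apply Finset.sum_congr rfl
  intro b _
  rw [Matrix.vecMul, dotProduct, Finset.sum_mul]

lemma hard {d : ℕ} (hd : 6 ≤ d) :
    ∀ n u, wtD d u = n → Qd d u = 1 → Matrix.vecMul u (ObarD d) ≠ 0 → ClD d u := by
  intro n
  induction n using Nat.strong_induction_on with
  | _ n IH =>
  intro u hwt hq hker
  have IH' : ∀ v, wtD d v < n → Qd d v = 1 → (∃ a, v a = 0) → ClD d v := by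
    intro v h1 h2 h3
    obtain ⟨a0, h3⟩ := h3
    exact IH (wtD d v) h1 v rfl h2 (not_ker hd v h2 a0 h3)
  by_cases hA : ∃ α, u α = 1 ∧ Bf d u (ebarD d (α:ℕ)) = 1
  · obtain ⟨α, hα, hB⟩ := hA
    exact stepA hd u n hwt IH' hq α hα hB
  · push_neg at hA
    have hA0 : ∀ α : IdxD d, u α = 1 → Bf d u (ebarD d (α:ℕ)) = 0 := by
      intro α h
      rcases zmod2_cases (Bf d u (ebarD d (α:ℕ))) with h' | h'
      · exact h'
      · exact absurd h' (hA α h)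
    set x2 : IdxD d := iN d 2 (by omega) (by omega) with hx2
    set x3 : IdxD d := iN d 3 (by omega) (by omega) with hx3
    set x4 : IdxD d := iN d 4 (by omega) (by omega) with hx4
    set x5 : IdxD d := iN d 5 (by omega) (by omega) with hx5
    have e2 : (x2:ℕ) = 2 := rfl
    have e3 : (x3:ℕ) = 3 := rfl
    have e4 : (x4:ℕ) = 4 := rfl
    have e5 : (x5:ℕ) = 5 := rfl
    have hBu := fun b => Bf_ebar' hd u b x2 x3 x4 x5 e2 e3 e4 e5
    rcases zmod2_cases (∑ a : IdxD d, u a) with hS | hS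
    · exact absurd (even_contra hd u x2 x3 x4 x5 e2 e3 e4 e5 hq hS hA0) (fun h => h)
    · -- odd weight
      have hn2 : n % 2 = 1 := by
        apply parity_of_cast
        rw [← hwt, ← sum_eq_wt]
        exact hS
      by_cases hn1 : n = 1
      · obtain ⟨α, hu⟩ := wt_one u (by omega)
        rw [hu]
        exact cl_ebar α
      · have hn3 : 3 ≤ n := by omega
        -- membership unpacking for the nonspecial support set
        have hm : ∀ x ∈ ((Finset.univ.filter (fun a => u a = 1)).filter
            (fun a : IdxD d => ¬((a:ℕ) = 2 ∨ (a:ℕ) = 3 ∨ (a:ℕ) = 4 ∨ (a:ℕ) = 5))),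
            u x = 1 ∧ ¬((x:ℕ) = 2 ∨ (x:ℕ) = 3 ∨ (x:ℕ) = 4 ∨ (x:ℕ) = 5) := by
          intro x hx
          have h1 := Finset.mem_filter.mp hx
          exact ⟨(Finset.mem_filter.mp h1.1).2, h1.2⟩
        rcases zmod2_cases (u x2) with hva | hva <;> rcases zmod2_cases (u x3) with hvb | hvb <;>
          rcases zmod2_cases (u x4) with hvc | hvc <;> rcases zmod2_cases (u x5) with hve | hve
        -- (0000)
        · have hsub : ∀ x : IdxD d, u x = 1 →
              ((x:ℕ) = 2 ∨ (x:ℕ) = 3 ∨ (x:ℕ) = 4 ∨ (x:ℕ) = 5) → x ∈ (∅ : Finset (IdxD d)) := by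
            intro x hx hsp
            exfalso
            rcases hsp with h | h | h | h
            · rw [show x = x2 from Subtype.ext h, hva] at hx; exact absurd hx (by decide)
            · rw [show x = x3 from Subtype.ext h, hvb] at hx; exact absurd hx (by decide)
            · rw [show x = x4 from Subtype.ext h, hvc] at hx; exact absurd hx (by decide)
            · rw [show x = x5 from Subtype.ext h, hve] at hx; exact absurd hx (by decide)
          have hcard := wt_le_nonspecial u ∅ hsub
          rw [hwt, Finset.card_empty] at hcard
          have hge : 2 < ((Finset.univ.filter (fun a => u a = 1)).filter
              (fun a : IdxD d => ¬((a:ℕ) = 2 ∨ (a:ℕ) = 3 ∨ (a:ℕ) = 4 ∨ (a:ℕ) = 5))).card := by omega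
          obtain ⟨γ1, hγ1, γ2, hγ2, γ3, hγ3, h12, h13, h23⟩ := Finset.two_lt_card.mp hge
          exact pat0000 hd u n x2 x3 x4 x5 e2 e3 e4 e5 hwt hq hS IH' hva hvb hvc hve
            γ1 γ2 γ3 (hm γ1 hγ1).1 (hm γ1 hγ1).2 (hm γ2 hγ2).1 (hm γ2 hγ2).2
            (hm γ3 hγ3).1 (hm γ3 hγ3).2
            (fun h => h12 (Subtype.ext h)) (fun h => h13 (Subtype.ext h))
            (fun h => h23 (Subtype.ext h))
        -- (0001)
        · have hsub : ∀ x : IdxD d, u x = 1 →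
              ((x:ℕ) = 2 ∨ (x:ℕ) = 3 ∨ (x:ℕ) = 4 ∨ (x:ℕ) = 5) → x ∈ ({x5} : Finset (IdxD d)) := by
            intro x hx hsp
            rcases hsp with h | h | h | h
            · rw [show x = x2 from Subtype.ext h, hva] at hx; exact absurd hx (by decide)
            · rw [show x = x3 from Subtype.ext h, hvb] at hx; exact absurd hx (by decide)
            · rw [show x = x4 from Subtype.ext h, hvc] at hx; exact absurd hx (by decide)
            · rw [show x = x5 from Subtype.ext h]; exact Finset.mem_singleton_self x5
          have hcard := wt_le_nonspecial u {x5} hsub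
          rw [hwt, Finset.card_singleton] at hcard
          have hge : 1 < ((Finset.univ.filter (fun a => u a = 1)).filter
              (fun a : IdxD d => ¬((a:ℕ) = 2 ∨ (a:ℕ) = 3 ∨ (a:ℕ) = 4 ∨ (a:ℕ) = 5))).card := by omega
          obtain ⟨γ1, hγ1, γ2, hγ2, h12⟩ := Finset.one_lt_card.mp hge
          exact pat45 hd u n x2 x3 x5 x4 e2 e3 (Or.inr e5) (Or.inl e4) (by omega)
            hwt hq hS IH' hve hvc hva hvb γ1 γ2 (hm γ1 hγ1).1 (hm γ1 hγ1).2
            (hm γ2 hγ2).1 (hm γ2 hγ2).2 (fun h => h12 (Subtype.ext h))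
        -- (0010)
        · have hsub : ∀ x : IdxD d, u x = 1 →
              ((x:ℕ) = 2 ∨ (x:ℕ) = 3 ∨ (x:ℕ) = 4 ∨ (x:ℕ) = 5) → x ∈ ({x4} : Finset (IdxD d)) := by
            intro x hx hsp
            rcases hsp with h | h | h | h
            · rw [show x = x2 from Subtype.ext h, hva] at hx; exact absurd hx (by decide)
            · rw [show x = x3 from Subtype.ext h, hvb] at hx; exact absurd hx (by decide)
            · rw [show x = x4 from Subtype.ext h]; exact Finset.mem_singleton_self x4
            · rw [show x = x5 from Subtype.ext h, hve] at hx; exact absurd hx (by decide)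
          have hcard := wt_le_nonspecial u {x4} hsub
          rw [hwt, Finset.card_singleton] at hcard
          have hge : 1 < ((Finset.univ.filter (fun a => u a = 1)).filter
              (fun a : IdxD d => ¬((a:ℕ) = 2 ∨ (a:ℕ) = 3 ∨ (a:ℕ) = 4 ∨ (a:ℕ) = 5))).card := by omega
          obtain ⟨γ1, hγ1, γ2, hγ2, h12⟩ := Finset.one_lt_card.mp hge
          exact pat45 hd u n x2 x3 x4 x5 e2 e3 (Or.inl e4) (Or.inr e5) (by omega)
            hwt hq hS IH' hvc hve hva hvb γ1 γ2 (hm γ1 hγ1).1 (hm γ1 hγ1).2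
            (hm γ2 hγ2).1 (hm γ2 hγ2).2 (fun h => h12 (Subtype.ext h))
        -- (0011)
        · have hsub : ∀ x : IdxD d, u x = 1 →
              ((x:ℕ) = 2 ∨ (x:ℕ) = 3 ∨ (x:ℕ) = 4 ∨ (x:ℕ) = 5) →
              x ∈ ({x4, x5} : Finset (IdxD d)) := by
            intro x hx hsp
            rcases hsp with h | h | h | h
            · rw [show x = x2 from Subtype.ext h, hva] at hx; exact absurd hx (by decide)
            · rw [show x = x3 from Subtype.ext h, hvb] at hx; exact absurd hx (by decide)
            · rw [show x = x4 from Subtype.ext h]; exact Finset.mem_insert_self x4 {x5}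
            · rw [show x = x5 from Subtype.ext h]
              exact Finset.mem_insert_of_mem (Finset.mem_singleton_self x5)
          have hcard := wt_le_nonspecial u {x4, x5} hsub
          have hc2 : ({x4, x5} : Finset (IdxD d)).card ≤ 2 :=
            (Finset.card_insert_le x4 {x5}).trans (by simp)
          rw [hwt] at hcard
          have hge : 0 < ((Finset.univ.filter (fun a => u a = 1)).filter
              (fun a : IdxD d => ¬((a:ℕ) = 2 ∨ (a:ℕ) = 3 ∨ (a:ℕ) = 4 ∨ (a:ℕ) = 5))).card := by omega
          obtain ⟨γ1, hγ1⟩ := Finset.card_pos.mp hge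
          exact pat0011 hd u n x2 x3 x4 x5 e2 e3 e4 e5 hwt hq hS IH' hva hvb hvc hve
            γ1 (hm γ1 hγ1).1 (hm γ1 hγ1).2
        -- (0100)
        · have hsub : ∀ x : IdxD d, u x = 1 →
              ((x:ℕ) = 2 ∨ (x:ℕ) = 3 ∨ (x:ℕ) = 4 ∨ (x:ℕ) = 5) → x ∈ ({x3} : Finset (IdxD d)) := by
            intro x hx hsp
            rcases hsp with h | h | h | h
            · rw [show x = x2 from Subtype.ext h, hva] at hx; exact absurd hx (by decide)
            · rw [show x = x3 from Subtype.ext h]; exact Finset.mem_singleton_self x3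
            · rw [show x = x4 from Subtype.ext h, hvc] at hx; exact absurd hx (by decide)
            · rw [show x = x5 from Subtype.ext h, hve] at hx; exact absurd hx (by decide)
          have hcard := wt_le_nonspecial u {x3} hsub
          rw [hwt, Finset.card_singleton] at hcard
          have hge : 1 < ((Finset.univ.filter (fun a => u a = 1)).filter
              (fun a : IdxD d => ¬((a:ℕ) = 2 ∨ (a:ℕ) = 3 ∨ (a:ℕ) = 4 ∨ (a:ℕ) = 5))).card := by omega
          obtain ⟨γ1, hγ1, γ2, hγ2, h12⟩ := Finset.one_lt_card.mp hge
          exact pat23 hd u n x3 x2 x4 x5 (Or.inr e3) (Or.inl e2) (by omega) e4 e5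
            hwt hq hS IH' hvb hva hvc hve γ1 γ2 (hm γ1 hγ1).1 (hm γ1 hγ1).2
            (hm γ2 hγ2).1 (hm γ2 hγ2).2 (fun h => h12 (Subtype.ext h))
        -- (0101) kill via x3
        · have h0 := hA0 x3 hvb
          rw [hBu x3, if_pos (Or.inr e3), if_neg (by omega), hS, hvb, hvc, hve, add_zero] at h0
          exact absurd h0 (by decide)
        -- (0110) kill via x3
        · have h0 := hA0 x3 hvb
          rw [hBu x3, if_pos (Or.inr e3), if_neg (by omega), hS, hvb, hvc, hve, add_zero] at h0
          exact absurd h0 (by decide)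
        -- (0111) kill via x4
        · have h0 := hA0 x4 hvc
          rw [hBu x4, if_neg (by omega), if_pos (Or.inl e4), hS, hvc, hva, hvb, add_zero] at h0
          exact absurd h0 (by decide)
        -- (1000)
        · have hsub : ∀ x : IdxD d, u x = 1 →
              ((x:ℕ) = 2 ∨ (x:ℕ) = 3 ∨ (x:ℕ) = 4 ∨ (x:ℕ) = 5) → x ∈ ({x2} : Finset (IdxD d)) := by
            intro x hx hsp
            rcases hsp with h | h | h | h
            · rw [show x = x2 from Subtype.ext h]; exact Finset.mem_singleton_self x2
            · rw [show x = x3 from Subtype.ext h, hvb] at hx; exact absurd hx (by decide)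
            · rw [show x = x4 from Subtype.ext h, hvc] at hx; exact absurd hx (by decide)
            · rw [show x = x5 from Subtype.ext h, hve] at hx; exact absurd hx (by decide)
          have hcard := wt_le_nonspecial u {x2} hsub
          rw [hwt, Finset.card_singleton] at hcard
          have hge : 1 < ((Finset.univ.filter (fun a => u a = 1)).filter
              (fun a : IdxD d => ¬((a:ℕ) = 2 ∨ (a:ℕ) = 3 ∨ (a:ℕ) = 4 ∨ (a:ℕ) = 5))).card := by omega
          obtain ⟨γ1, hγ1, γ2, hγ2, h12⟩ := Finset.one_lt_card.mp hge
          exact pat23 hd u n x2 x3 x4 x5 (Or.inl e2) (Or.inr e3) (by omega) e4 e5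
            hwt hq hS IH' hva hvb hvc hve γ1 γ2 (hm γ1 hγ1).1 (hm γ1 hγ1).2
            (hm γ2 hγ2).1 (hm γ2 hγ2).2 (fun h => h12 (Subtype.ext h))
        -- (1001) kill via x2
        · have h0 := hA0 x2 hva
          rw [hBu x2, if_pos (Or.inl e2), if_neg (by omega), hS, hva, hvc, hve, add_zero] at h0
          exact absurd h0 (by decide)
        -- (1010) kill via x2
        · have h0 := hA0 x2 hva
          rw [hBu x2, if_pos (Or.inl e2), if_neg (by omega), hS, hva, hvc, hve, add_zero] at h0
          exact absurd h0 (by decide)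
        -- (1011) kill via x4
        · have h0 := hA0 x4 hvc
          rw [hBu x4, if_neg (by omega), if_pos (Or.inl e4), hS, hvc, hva, hvb, add_zero] at h0
          exact absurd h0 (by decide)
        -- (1100)
        · have hsub : ∀ x : IdxD d, u x = 1 →
              ((x:ℕ) = 2 ∨ (x:ℕ) = 3 ∨ (x:ℕ) = 4 ∨ (x:ℕ) = 5) →
              x ∈ ({x2, x3} : Finset (IdxD d)) := by
            intro x hx hsp
            rcases hsp with h | h | h | h
            · rw [show x = x2 from Subtype.ext h]; exact Finset.mem_insert_self x2 {x3}
            · rw [show x = x3 from Subtype.ext h]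
              exact Finset.mem_insert_of_mem (Finset.mem_singleton_self x3)
            · rw [show x = x4 from Subtype.ext h, hvc] at hx; exact absurd hx (by decide)
            · rw [show x = x5 from Subtype.ext h, hve] at hx; exact absurd hx (by decide)
          have hcard := wt_le_nonspecial u {x2, x3} hsub
          have hc2 : ({x2, x3} : Finset (IdxD d)).card ≤ 2 :=
            (Finset.card_insert_le x2 {x3}).trans (by simp)
          rw [hwt] at hcard
          have hge : 0 < ((Finset.univ.filter (fun a => u a = 1)).filter
              (fun a : IdxD d => ¬((a:ℕ) = 2 ∨ (a:ℕ) = 3 ∨ (a:ℕ) = 4 ∨ (a:ℕ) = 5))).card := by omega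
          obtain ⟨γ1, hγ1⟩ := Finset.card_pos.mp hge
          exact pat1100 hd u n x2 x3 x4 x5 e2 e3 e4 e5 hwt hq hS IH' hva hvb hvc hve
            γ1 (hm γ1 hγ1).1 (hm γ1 hγ1).2
        -- (1101) kill via x2
        · have h0 := hA0 x2 hva
          rw [hBu x2, if_pos (Or.inl e2), if_neg (by omega), hS, hva, hvc, hve, add_zero] at h0
          exact absurd h0 (by decide)
        -- (1110) kill via x2
        · have h0 := hA0 x2 hva
          rw [hBu x2, if_pos (Or.inl e2), if_neg (by omega), hS, hva, hvc, hve, add_zero] at h0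
          exact absurd h0 (by decide)
        -- (1111)
        · obtain ⟨β0, hβ0ne⟩ : ∃ b0, Matrix.vecMul u (ObarD d) b0 ≠ 0 := by
            by_contra h
            push_neg at h
            exact hker (funext h)
          have hPβ0 : Bf d u (ebarD d (β0:ℕ)) = 1 := by
            rw [Bf_ebar_vecMul]
            rcases zmod2_cases (Matrix.vecMul u (ObarD d) β0) with h | h
            · exact absurd h hβ0ne
            · exact h
          have hβ0 : u β0 = 0 := by
            rcases zmod2_cases (u β0) with h | h
            · exact h
            · exact absurd hPβ0 (by rw [hA0 β0 h]; decide)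
          have hsβ0 : ¬((β0:ℕ) = 2 ∨ (β0:ℕ) = 3 ∨ (β0:ℕ) = 4 ∨ (β0:ℕ) = 5) := by
            intro hsp
            rcases hsp with h | h | h | h
            · rw [show β0 = x2 from Subtype.ext h, hva] at hβ0; exact absurd hβ0 (by decide)
            · rw [show β0 = x3 from Subtype.ext h, hvb] at hβ0; exact absurd hβ0 (by decide)
            · rw [show β0 = x4 from Subtype.ext h, hvc] at hβ0; exact absurd hβ0 (by decide)
            · rw [show β0 = x5 from Subtype.ext h, hve] at hβ0; exact absurd hβ0 (by decide)
          exact pat1111 hd u n x2 x3 x4 x5 e2 e3 e4 e5 hwt hq hS IH' hva hvb hvc hve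
            β0 hβ0 hPβ0 hsβ0

-- ============ the theorem ============

/-- Lemma 4.5 of the paper: the Q-closure of the standard basis is exactly the set of
nonsingular vectors outside the radical of `Ω̄`. -/
theorem statement17 (d : ℕ) (hd : 6 ≤ d) :
    {u : IdxD d → ZMod 2 |
        QClosure (Qd d) (Set.range fun a : IdxD d => ebarD d (a : ℕ)) u}
      = {u : IdxD d → ZMod 2 | Qd d u = 1} \
          {u : IdxD d → ZMod 2 | Matrix.vecMul u (ObarD d) = 0} := by
  ext u
  simp only [Set.mem_setOf_eq, Set.mem_diff]
  constructor
  · intro hcl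
    induction hcl with
    | base hv =>
      obtain ⟨α, rfl⟩ := hv
      refine ⟨Qd_ebar α, ?_⟩
      by_cases h1 : (α:ℕ) = 1
      · refine not_ker hd _ (Qd_ebar α) (iN d 2 (by omega) (by omega)) ?_
        simp only [ebarD]
        rw [if_neg (show ¬((iN d 2 (by omega) (by omega) : IdxD d) : ℕ) = (α:ℕ) by
          rw [iN_val]; omega)]
      · refine not_ker hd _ (Qd_ebar α) (iN d 1 (by omega) (by omega)) ?_
        simp only [ebarD]
        rw [if_neg (show ¬((iN d 1 (by omega) (by omega) : IdxD d) : ℕ) = (α:ℕ) by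
          rw [iN_val]; omega)]
    | @add v w hv hw hq1 ihv ihw =>
      refine ⟨hq1, ?_⟩
      intro hk
      have hbvw : Bf d v w = 1 := by
        rcases zmod2_cases (Bf d v w) with h | h
        · rw [Qd_add hd, ihv.1, ihw.1, h] at hq1
          exact absurd hq1 (by decide)
        · exact h
      have h1 : Bf d (v + w) w = 0 := by
        rw [Bf_vecMul, hk]
        simp
      rw [Bf_add_left, Bf_self hd w, add_zero, hbvw] at h1
      exact absurd h1 (by decide)
  · rintro ⟨hq, hk⟩
    exact hard hd (wtD d u) u rfl hq hk
end
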